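/- arXiv:1112.1351 — 14 statements merged into one kernel-verified Lean document; each statement's English description precedes it below -/
import Mathlib

section
/- Let Σ = {0,1} and let X_G be the golden mean shift, i.e. the set of bi-infinite sequences over {0,1} with no two consecutive 1s. A string A_1...A_n of nonempty subsets of Σ is 'independently legal' for X_G if every word a_1...a_n with a_i ∈ A_i appears in some point of X_G. Then for every n, the maximum over independently legal strings A_1...A_n of ∏_{i=1}^n |A_i| equals 2^⌈n/2⌉. -/
/-- A finite word over `{0,1}` (encoded as `Bool`, with `true` = 1) is in the language of
the golden mean shift iff it contains no two consecutive 1s. -/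
def gmLegal {n : ℕ} (w : Fin n → Bool) : Prop :=
  ∀ i j : Fin n, (i : ℕ) + 1 = (j : ℕ) → ¬(w i = true ∧ w j = true)

/-- A string `A_1 … A_n` of nonempty subsets of `{0,1}` is independently legal for the
golden mean shift if every selection `a_i ∈ A_i` yields a word in the language. -/
def gmIndepLegal {n : ℕ} (A : Fin n → Finset Bool) : Prop :=
  (∀ i, (A i).Nonempty) ∧ ∀ w : Fin n → Bool, (∀ i, w i ∈ A i) → gmLegal w

/-! Only positions whose set contains 1 can contribute a factor 2 to the product, and no two of
them are adjacent (selecting 1 at both and anything elsewhere gives the word 11), so there are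
at most ⌈n/2⌉ of them. The string `{0,1} {0} {0,1} {0} …` attains the bound. -/

open Finset

theorem prod_range_ite_even {M : Type*} [CommMonoid M] (a : M) (n : ℕ) :
    ∏ i ∈ range n, (if Even i then a else 1) = a ^ ((n + 1) / 2) := by
  induction n with
  | zero => simp
  | succ n ih =>
    rw [prod_range_succ, ih]
    rcases Nat.even_or_odd n with ⟨k, rfl⟩ | ⟨k, rfl⟩
    · rw [if_pos ⟨k, rfl⟩, ← pow_succ]
      congr 1
      omega
    · rw [if_neg (Nat.not_even_iff_odd.2 ⟨k, rfl⟩), mul_one]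
      congr 1
      omega

theorem Fin.card_le_of_forall_val_succ_ne {n : ℕ} (S : Finset (Fin n))
    (hS : ∀ i ∈ S, ∀ j ∈ S, (i : ℕ) + 1 ≠ j) : #S ≤ (n + 1) / 2 := by
  calc #S ≤ #(range ((n + 1) / 2)) := by
        -- halving is injective on a set with no two consecutive elements
        refine card_le_card_of_injOn (fun i => (i : ℕ) / 2) (fun i _ => ?_) ?_
        · simp only [coe_range, Set.mem_Iio]
          omega
        · intro i hi j hj hij
          have hij' := hS i hi j hj
          have hji := hS j hj i hi
          simp only at hij
          ext
          omega
    _ = (n + 1) / 2 := card_range _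

theorem Bool.card_le_ite_true_mem (s : Finset Bool) : #s ≤ if true ∈ s then 2 else 1 := by
  split_ifs with h
  · exact card_le_univ s
  · exact card_le_one.2 fun a ha b hb => by
      cases a <;> cases b <;> simp_all

namespace gmIndepLegal

variable {n : ℕ} {A : Fin n → Finset Bool}

theorem true_notMem_of_val_succ (hA : gmIndepLegal A) {i j : Fin n} (hij : (i : ℕ) + 1 = j)
    (hi : true ∈ A i) : true ∉ A j := by
  intro hj
  classical
  let w : Fin n → Bool := fun k => if k = i ∨ k = j then true else (hA.1 k).choose
  have hw : ∀ k, w k ∈ A k := by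
    intro k
    by_cases hk : k = i ∨ k = j
    · rcases hk with rfl | rfl <;> simpa [w]
    · simp only [w, if_neg hk]
      exact (hA.1 k).choose_spec
  exact hA.2 w hw i j hij ⟨by simp [w], by simp [w]⟩

theorem prod_card_le (hA : gmIndepLegal A) : ∏ i, #(A i) ≤ 2 ^ ((n + 1) / 2) := by
  classical
  let T : Finset (Fin n) := {i | true ∈ A i}
  have hT : ∀ i ∈ T, ∀ j ∈ T, (i : ℕ) + 1 ≠ j := by
    intro i hi j hj hij
    simp only [T, mem_filter, mem_univ, true_and] at hi hj
    exact hA.true_notMem_of_val_succ hij hi hj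
  calc ∏ i, #(A i) ≤ ∏ i, (if i ∈ T then 2 else 1) := by
        refine prod_le_prod' fun i _ => ?_
        simpa [T] using Bool.card_le_ite_true_mem (A i)
    _ = 2 ^ #T := by simp
    _ ≤ 2 ^ ((n + 1) / 2) := Nat.pow_le_pow_right two_pos (Fin.card_le_of_forall_val_succ_ne T hT)

end gmIndepLegal

def gmAlternating (n : ℕ) : Fin n → Finset Bool :=
  fun i => if Even (i : ℕ) then univ else {false}

theorem gmIndepLegal_gmAlternating (n : ℕ) : gmIndepLegal (gmAlternating n) := by
  refine ⟨fun i => ?_, fun w hw i j hij ⟨hwi, hwj⟩ => ?_⟩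
  · unfold gmAlternating
    split_ifs <;> simp
  · have hi := hw i
    have hj := hw j
    simp only [gmAlternating] at hi hj
    rcases Nat.even_or_odd i with h | h
    · rw [if_neg (by rw [← hij, Nat.not_even_iff_odd]; exact h.add_one)] at hj
      simp [hwj] at hj
    · rw [if_neg (Nat.not_even_iff_odd.2 h)] at hi
      simp [hwi] at hi

theorem prod_card_gmAlternating (n : ℕ) :
    ∏ i, #(gmAlternating n i) = 2 ^ ((n + 1) / 2) := by
  rw [← prod_range_ite_even, ← Fin.prod_univ_eq_prod_range]
  refine prod_congr rfl fun i _ => ?_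
  unfold gmAlternating
  split_ifs <;> rfl

/-- For every `n`, the maximum over independently legal strings `A_1 … A_n` of
`∏ |A_i|` equals `2^⌈n/2⌉`. -/
theorem stmt0 (n : ℕ) :
    IsGreatest {k : ℕ | ∃ A : Fin n → Finset Bool, gmIndepLegal A ∧ ∏ i, (A i).card = k}
      (2 ^ ((n + 1) / 2)) :=
  ⟨⟨gmAlternating n, gmIndepLegal_gmAlternating n, prod_card_gmAlternating n⟩,
    by rintro _ ⟨A, hA, rfl⟩; exact hA.prod_card_le⟩
end

section
/- For the golden mean shift X_G, the independence entropy h_ind(X_G), defined as lim_{n→∞} (1/n) · max{ Σ_{i=1}^n log|A_i| : A_1...A_n independently legal for X_G }, equals (1/2)·log 2. -/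
open Filter

/-- The maximal independence score of independently legal strings of length `n`. -/
noncomputable def gmMaxScore (n : ℕ) : ℝ :=
  sSup {r : ℝ | ∃ A : Fin n → Finset Bool, gmIndepLegal A ∧
    r = ∑ i, Real.log ((A i).card)}

/-!
In an independently legal string each `A i` is either `{0,1}` or a singleton, and two adjacent
positions cannot both be `{0,1}`, since then `11` could be selected. So the score of a string is
`log 2` times the number of its free positions, a set without two consecutive elements, hence of
size at most `⌈n/2⌉`; the string `{0,1} {0} {0,1} {0} …` attains this. Thus
`gmMaxScore n = ⌈n/2⌉ · log 2`, and `⌈n/2⌉ / n → 1/2`.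
-/

open Finset

theorem Fin.card_le_of_forall_add_one_ne {n : ℕ} {s : Finset (Fin n)}
    (hs : ∀ i ∈ s, ∀ j ∈ s, (i : ℕ) + 1 ≠ j) : #s ≤ (n + 1) / 2 := by
  calc #s ≤ #(range ((n + 1) / 2)) := by
        refine card_le_card_of_injOn (fun i => (i : ℕ) / 2) (fun i _ => ?_) fun i hi j hj hij => ?_
        · simp only [coe_range, Set.mem_Iio]
          omega
        · have hij' := hs i hi j hj
          have hji := hs j hj i hi
          exact Fin.ext (by simp only at hij; omega)
    _ = (n + 1) / 2 := card_range _

theorem Fin.card_filter_even (n : ℕ) : #{i : Fin n | Even (i : ℕ)} = (n + 1) / 2 := by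
  rw [card_filter, Fin.sum_univ_eq_sum_range (fun k => if Even k then 1 else 0)]
  induction n with
  | zero => rfl
  | succ n ih =>
    rw [sum_range_succ, ih]
    simp only [Nat.even_iff]
    split_ifs <;> omega

theorem tendsto_succ_div_two_div_atTop :
    Tendsto (fun n : ℕ => (((n + 1) / 2 : ℕ) : ℝ) / n) atTop (nhds (1 / 2)) := by
  have hupper : Tendsto (fun n : ℕ => (1 / 2 : ℝ) + 1 / 2 * (1 / n)) atTop (nhds (1 / 2)) := by
    simpa using tendsto_const_nhds.add (tendsto_one_div_atTop_nhds_zero_nat.const_mul (1 / 2 : ℝ))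
  refine tendsto_of_tendsto_of_tendsto_of_le_of_le' tendsto_const_nhds hupper ?_ ?_ <;>
    filter_upwards [eventually_gt_atTop 0] with n hn
  · rw [le_div_iff₀ (by positivity)]
    have : n ≤ 2 * ((n + 1) / 2) := by omega
    have : (n : ℝ) ≤ 2 * ((n + 1) / 2 : ℕ) := by exact_mod_cast this
    linarith
  · rw [div_le_iff₀ (by positivity)]
    have : 2 * ((n + 1) / 2) ≤ n + 1 := by omega
    have : 2 * (((n + 1) / 2 : ℕ) : ℝ) ≤ n + 1 := by exact_mod_cast this
    have : (n : ℝ) ≠ 0 := by positivity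
    field_simp
    linarith

namespace GoldenMean

variable {n : ℕ} {A : Fin n → Finset Bool}

def freePositions (A : Fin n → Finset Bool) : Finset (Fin n) := {i | A i = univ}

theorem card_eq_one_of_ne_univ {s : Finset Bool} (hs : s.Nonempty) (h : s ≠ univ) :
    #s = 1 := by
  have := card_lt_card (ssubset_univ_iff.mpr h)
  have := hs.card_pos
  simp only [card_univ, Fintype.card_bool] at *
  omega

theorem sum_log_card_eq (hne : ∀ i, (A i).Nonempty) :
    ∑ i, Real.log #(A i) = #(freePositions A) * Real.log 2 := by
  have hlog : ∀ i, Real.log #(A i) = if A i = univ then Real.log 2 else 0 := by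
    intro i
    split_ifs with h
    · simp [h]
    · simp [card_eq_one_of_ne_univ (hne i) h]
  rw [sum_congr rfl fun i _ => hlog i, sum_ite, sum_const_zero, sum_const, nsmul_eq_mul,
    add_zero]
  rfl

theorem not_univ_and_univ_of_gmIndepLegal (hA : gmIndepLegal A) {i j : Fin n}
    (hij : (i : ℕ) + 1 = j) : ¬(A i = univ ∧ A j = univ) := by
  rintro ⟨hi, hj⟩
  choose c hc using hA.1
  let w k := if k = i ∨ k = j then true else c k
  have hw : ∀ k, w k ∈ A k := by
    intro k
    by_cases h : k = i ∨ k = j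
    · rcases h with rfl | rfl <;> simp [w, hi, hj]
    · simp only [w, if_neg h, hc]
  exact hA.2 w hw i j hij ⟨by simp [w], by simp [w]⟩

theorem sum_log_card_le (hA : gmIndepLegal A) :
    ∑ i, Real.log #(A i) ≤ ((n + 1) / 2 : ℕ) * Real.log 2 := by
  rw [sum_log_card_eq hA.1]
  gcongr
  refine Fin.card_le_of_forall_add_one_ne fun i hi j hj hij => ?_
  simp only [freePositions, mem_filter, mem_univ, true_and] at hi hj
  exact not_univ_and_univ_of_gmIndepLegal hA hij ⟨hi, hj⟩

def alternating (n : ℕ) : Fin n → Finset Bool := fun i => if Even (i : ℕ) then univ else {false}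

theorem gmIndepLegal_alternating : gmIndepLegal (alternating n) := by
  refine ⟨fun i => by unfold alternating; split_ifs <;> simp, fun w hw i j hij ⟨hi, hj⟩ => ?_⟩
  have hi' := hw i
  have hj' := hw j
  rcases Nat.even_or_odd i with h | h
  · have : ¬Even (j : ℕ) := by rw [← hij, Nat.even_add_one]; exact not_not.mpr h
    simp [alternating, this, hj] at hj'
  · simp [alternating, Nat.not_even_iff_odd.mpr h, hi] at hi'

theorem freePositions_alternating :
    freePositions (alternating n) = ({i | Even (i : ℕ)} : Finset (Fin n)) := by
  ext i
  by_cases h : Even (i : ℕ) <;> simp [freePositions, alternating, h, eq_comm (a := {false})]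

theorem isGreatest_sum_log_card (n : ℕ) :
    IsGreatest {r : ℝ | ∃ A : Fin n → Finset Bool, gmIndepLegal A ∧ r = ∑ i, Real.log #(A i)}
      (((n + 1) / 2 : ℕ) * Real.log 2) := by
  refine ⟨⟨alternating n, gmIndepLegal_alternating, ?_⟩, ?_⟩
  · rw [sum_log_card_eq gmIndepLegal_alternating.1, freePositions_alternating,
      Fin.card_filter_even]
  · rintro _ ⟨A, hA, rfl⟩
    exact sum_log_card_le hA

theorem gmMaxScore_eq (n : ℕ) : gmMaxScore n = ((n + 1) / 2 : ℕ) * Real.log 2 :=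
  (isGreatest_sum_log_card n).csSup_eq

end GoldenMean

/-- The independence entropy of the golden mean shift, i.e. the limit of
`(1/n) · max{ Σ log|A_i| : A_1…A_n independently legal }`, equals `(1/2)·log 2`. -/
theorem stmt1 :
    Tendsto (fun n : ℕ => gmMaxScore n / n) atTop (nhds (Real.log 2 / 2)) := by
  simp_rw [GoldenMean.gmMaxScore_eq, mul_div_right_comm, div_eq_inv_mul (Real.log 2)]
  simpa using tendsto_succ_div_two_div_atTop.mul_const (Real.log 2)
end

section
/- Let Σ be a 26-letter alphabet containing distinct letters A and D, and let X be the subshift of Σ^ℤ defined by forbidding the single word ADD. Then the independence entropy of X equals (1/2)·log 25 + (1/2)·log 26. -/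
open Filter

/-- A finite word over a 26-letter alphabet is in the language of the subshift forbidding
the single word `ADD` iff it contains no occurrence of `a d d` (consecutive positions). -/
def addLegal (a d : Fin 26) {n : ℕ} (w : Fin n → Fin 26) : Prop :=
  ∀ i j k : Fin n, (i : ℕ) + 1 = (j : ℕ) → (j : ℕ) + 1 = (k : ℕ) →
    ¬(w i = a ∧ w j = d ∧ w k = d)

/-- A string of nonempty subsets of the alphabet is independently legal if every
selection avoids the pattern `ADD`. -/
def addIndepLegal (a d : Fin 26) {n : ℕ} (A : Fin n → Finset (Fin 26)) : Prop :=
  (∀ i, (A i).Nonempty) ∧ ∀ w : Fin n → Fin 26, (∀ i, w i ∈ A i) → addLegal a d w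

/-- The maximal independence score of independently legal strings of length `n`. -/
noncomputable def addMaxScore (a d : Fin 26) (n : ℕ) : ℝ :=
  sSup {r : ℝ | ∃ A : Fin n → Finset (Fin 26), addIndepLegal a d A ∧
    r = ∑ i, Real.log ((A i).card)}

/-!
A string of sets is independently legal iff there is no `i` with `a ∈ Aᵢ`, `d ∈ Aᵢ₊₁` and
`d ∈ Aᵢ₊₂`. Removing `d` at every even position `≥ 2` gives such a string, and it maximises
`∏ |Aᵢ|`. Indeed, if the last two sets of a legal string both contain `d`, the set before them
misses `a`, so it has `x ≤ 25` elements; adding `a` to it keeps the string without its last two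
positions legal (since `a ≠ d`), and `x · 26² ≤ (x + 1) · 26 · 25`. Otherwise the last two
factors are at most `26 · 25` anyway. So the maximal product gains exactly a factor `26 · 25`
every two steps.
-/

open Finset Topology

section Combinatorics

variable {α : Type*}

def AvoidsADD (a d : α) (A : ℕ → Finset α) (n : ℕ) : Prop :=
  ∀ i, i + 2 < n → ¬(a ∈ A i ∧ d ∈ A (i + 1) ∧ d ∈ A (i + 2))

lemma AvoidsADD.mono {a d : α} {A : ℕ → Finset α} {m n : ℕ} (h : AvoidsADD a d A n)
    (hmn : m ≤ n) : AvoidsADD a d A m :=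
  fun i hi => h i (by omega)

lemma AvoidsADD.update_insert [DecidableEq α] {a d : α} {A : ℕ → Finset α} {m : ℕ} (had : a ≠ d)
    (h : AvoidsADD a d A (m + 1)) :
    AvoidsADD a d (Function.update A m (insert a (A m))) (m + 1) := by
  intro i hi ⟨hai, hdj, hdk⟩
  rw [Function.update_of_ne (by omega)] at hai hdj
  refine h i hi ⟨hai, hdj, ?_⟩
  rcases eq_or_ne (i + 2) m with rfl | hk
  · simpa [had.symm] using hdk
  · rwa [Function.update_of_ne hk] at hdk

variable [Fintype α] [DecidableEq α]

def addWitness (d : α) (i : ℕ) : Finset α := if i ≠ 0 ∧ Even i then {d}ᶜ else univ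

lemma avoidsADD_addWitness (a d : α) (n : ℕ) : AvoidsADD a d (addWitness d) n := by
  intro i _ ⟨_, hd₁, hd₂⟩
  rcases Nat.even_or_odd i with hi | hi
  · have : ¬Even (i + 1) := by simpa [Nat.even_add_one] using hi
    simp [addWitness, this, hi.add even_two] at hd₁ hd₂
  · simp [addWitness, hi.add_one] at hd₁

lemma mem_addWitness {a d : α} (had : a ≠ d) (i : ℕ) : a ∈ addWitness d i := by
  unfold addWitness
  split_ifs <;> simp [had]

lemma card_addWitness_pos {a d : α} (had : a ≠ d) (i : ℕ) : 0 < #(addWitness d i) :=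
  card_pos.mpr ⟨a, mem_addWitness had i⟩

lemma card_addWitness (d : α) (i : ℕ) :
    #(addWitness d i) = if i ≠ 0 ∧ Even i then Fintype.card α - 1 else Fintype.card α := by
  unfold addWitness
  split_ifs <;> simp [card_compl]

lemma prod_card_addWitness_add_two (d : α) {n : ℕ} (hn : 1 ≤ n) :
    ∏ i ∈ range (n + 2), #(addWitness d i) =
      (∏ i ∈ range n, #(addWitness d i)) * (Fintype.card α * (Fintype.card α - 1)) := by
  rw [prod_range_succ, prod_range_succ, mul_assoc, card_addWitness, card_addWitness]
  rcases Nat.even_or_odd n with hn' | hn'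
  · simp [hn', Nat.even_add_one, show n ≠ 0 by omega, mul_comm]
  · simp [hn'.add_one, Nat.not_even_iff_odd.mpr hn']

lemma mul_mul_self_le_add_one_mul_mul_sub_one {x q : ℕ} (hx : x ≤ q - 1) :
    x * (q * q) ≤ (x + 1) * (q * (q - 1)) := by
  obtain _ | p := q
  · simp
  · simp only [Nat.add_sub_cancel] at hx ⊢
    nlinarith

lemma prod_card_le_prod_card_addWitness {a d : α} (had : a ≠ d) (n : ℕ) (A : ℕ → Finset α)
    (hA : AvoidsADD a d A n) :
    ∏ i ∈ range n, #(A i) ≤ ∏ i ∈ range n, #(addWitness d i) := by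
  induction n using Nat.strong_induction_on generalizing A with
  | _ n ih =>
  match n with
  | 0 | 1 | 2 =>
    refine Finset.prod_le_prod' fun i hi => ?_
    have : ¬(i ≠ 0 ∧ Even i) := by
      simp only [mem_range] at hi
      rintro ⟨h0, heven⟩
      obtain ⟨k, rfl⟩ := heven
      omega
    simpa [card_addWitness, this] using card_le_univ (A i)
  | m + 3 =>
    rw [prod_card_addWitness_add_two d (by omega), prod_range_succ, prod_range_succ, mul_assoc]
    set q := Fintype.card α
    have hq : #(A (m + 1)) ≤ q ∧ #(A (m + 2)) ≤ q := ⟨card_le_univ _, card_le_univ _⟩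
    by_cases hd : d ∈ A (m + 1) ∧ d ∈ A (m + 2)
    · have ha : a ∉ A m := fun ha => hA m (by omega) ⟨ha, hd⟩
      have hB := ih (m + 1) (by omega) _ ((hA.mono (by omega)).update_insert had)
      have hBprod : ∏ i ∈ range (m + 1), #(Function.update A m (insert a (A m)) i) =
          (∏ i ∈ range m, #(A i)) * (#(A m) + 1) := by
        rw [prod_range_succ, Function.update_self, card_insert_of_notMem ha]
        congr 1
        refine prod_congr rfl fun i hi => ?_
        rw [Function.update_of_ne (by simp only [mem_range] at hi; omega)]
      have hexchange : #(A m) * (q * q) ≤ (#(A m) + 1) * (q * (q - 1)) :=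
        mul_mul_self_le_add_one_mul_mul_sub_one (Nat.le_sub_one_of_lt (card_lt_univ_of_notMem ha))
      calc (∏ i ∈ range (m + 1), #(A i)) * (#(A (m + 1)) * #(A (m + 2)))
          ≤ (∏ i ∈ range m, #(A i)) * (#(A m) * (q * q)) := by
            rw [prod_range_succ, mul_assoc]
            gcongr
            exacts [hq.1, hq.2]
        _ ≤ (∏ i ∈ range m, #(A i)) * ((#(A m) + 1) * (q * (q - 1))) :=
            Nat.mul_le_mul_left _ hexchange
        _ ≤ (∏ i ∈ range (m + 1), #(addWitness d i)) * (q * (q - 1)) := by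
            rw [← mul_assoc, ← hBprod]
            exact Nat.mul_le_mul_right _ hB
    · have hlast : #(A (m + 1)) * #(A (m + 2)) ≤ q * (q - 1) := by
        rw [not_and_or] at hd
        rcases hd with hd | hd
        · rw [mul_comm]
          exact Nat.mul_le_mul hq.2 (Nat.le_sub_one_of_lt (card_lt_univ_of_notMem hd))
        · exact Nat.mul_le_mul hq.1 (Nat.le_sub_one_of_lt (card_lt_univ_of_notMem hd))
      exact Nat.mul_le_mul (ih (m + 1) (by omega) A (hA.mono (by omega))) hlast

end Combinatorics

lemma tendsto_div_of_add_two_eq_add {u : ℕ → ℝ} {c : ℝ} (h : ∀ n, 1 ≤ n → u (n + 2) = u n + c) :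
    Tendsto (fun n => u n / n) atTop (𝓝 (c / 2)) := by
  set C := max |u 1 - c / 2| |u 2 - c|
  have hdev : ∀ n : ℕ, |u (n + 1) - (n + 1) * (c / 2)| ≤ C := by
    intro n
    induction n using Nat.twoStepInduction with
    | zero => simp [C]
    | one =>
      refine le_max_of_le_right (le_of_eq ?_)
      norm_num [mul_div_cancel₀]
    | more n ih _ =>
      rw [h (n + 1) (by omega)]
      push_cast
      convert ih using 2
      ring
  rw [← tendsto_sub_nhds_zero_iff]
  refine squeeze_zero_norm' ?_ (tendsto_const_div_atTop_nhds_zero_nat C)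
  filter_upwards [eventually_ge_atTop 1] with n hn
  obtain ⟨k, rfl⟩ := Nat.exists_eq_add_of_le' hn
  have hpos : (0 : ℝ) < (k + 1 : ℕ) := by positivity
  rw [Real.norm_eq_abs, le_div_iff₀ hpos]
  calc |u (k + 1) / (k + 1 : ℕ) - c / 2| * (k + 1 : ℕ)
      = |u (k + 1) - (k + 1 : ℕ) * (c / 2)| := by
        rw [← abs_of_pos hpos, ← abs_mul, abs_of_pos hpos]
        congr 1
        field_simp
    _ ≤ C := by simpa using hdev k

lemma addIndepLegal.avoidsADD {a d : Fin 26} {n : ℕ} {A : Fin n → Finset (Fin 26)}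
    (hA : addIndepLegal a d A) : AvoidsADD a d (fun i => if h : i < n then A ⟨i, h⟩ else ∅) n := by
  intro i hi ⟨ha, hd₁, hd₂⟩
  simp only [dif_pos (show i < n by omega), dif_pos (show i + 1 < n by omega),
    dif_pos hi] at ha hd₁ hd₂
  choose s hs using hA.1
  let w : Fin n → Fin 26 := fun p =>
    if (p : ℕ) = i then a else if (p : ℕ) = i + 1 ∨ (p : ℕ) = i + 2 then d else s p
  have hw : ∀ p, w p ∈ A p := by
    intro p
    simp only [w]
    split_ifs with h₁ h₂
    · exact (Fin.ext h₁ : p = ⟨i, by omega⟩) ▸ ha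
    · rcases h₂ with h₂ | h₂
      · exact (Fin.ext h₂ : p = ⟨i + 1, by omega⟩) ▸ hd₁
      · exact (Fin.ext h₂ : p = ⟨i + 2, hi⟩) ▸ hd₂
    · exact hs p
  exact hA.2 w hw ⟨i, by omega⟩ ⟨i + 1, by omega⟩ ⟨i + 2, hi⟩ rfl rfl (by simp [w])

lemma addIndepLegal_addWitness {a d : Fin 26} (had : a ≠ d) (n : ℕ) :
    addIndepLegal a d (fun i : Fin n => addWitness d i) := by
  refine ⟨fun i => ⟨a, mem_addWitness had i⟩, fun w hw i j k hij hjk ⟨_, hdj, hdk⟩ => ?_⟩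
  refine avoidsADD_addWitness a d n i (by omega) ⟨mem_addWitness had i, ?_, ?_⟩
  · rw [hij]
    exact hdj ▸ hw j
  · rw [show (i : ℕ) + 2 = k by omega]
    exact hdk ▸ hw k

lemma addMaxScore_eq {a d : Fin 26} (had : a ≠ d) (n : ℕ) :
    addMaxScore a d n = Real.log (∏ i ∈ range n, #(addWitness d i) : ℕ) := by
  refine IsGreatest.csSup_eq ⟨⟨fun i => addWitness d i, addIndepLegal_addWitness had n, ?_⟩, ?_⟩
  · rw [Nat.cast_prod,
      Real.log_prod fun i _ => Nat.cast_ne_zero.mpr (card_addWitness_pos had i).ne',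
      Fin.sum_univ_eq_sum_range (fun i => Real.log #(addWitness d i))]
  · rintro r ⟨A, hA, rfl⟩
    set B : ℕ → Finset (Fin 26) := fun i => if h : i < n then A ⟨i, h⟩ else ∅
    have hB : ∀ i ∈ range n, 0 < #(B i) := fun i hi => by
      simpa only [B, dif_pos (mem_range.mp hi)] using (hA.1 ⟨i, mem_range.mp hi⟩).card_pos
    calc ∑ i, Real.log #(A i) = ∑ i ∈ range n, Real.log #(B i) := by
          rw [← Fin.sum_univ_eq_sum_range]
          simp [B]
      _ = Real.log (∏ i ∈ range n, #(B i) : ℕ) := by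
          rw [Nat.cast_prod, Real.log_prod fun i hi => Nat.cast_ne_zero.mpr (hB i hi).ne']
      _ ≤ Real.log (∏ i ∈ range n, #(addWitness d i) : ℕ) :=
          Real.log_le_log (Nat.cast_pos.mpr (prod_pos hB))
            (Nat.cast_le.mpr (prod_card_le_prod_card_addWitness had n B hA.avoidsADD))

/-- For the subshift of a 26-letter alphabet forbidding the single word `ADD`
(`A ≠ D`), the independence entropy equals `(1/2)·log 25 + (1/2)·log 26`. -/
theorem stmt2 (a d : Fin 26) (had : a ≠ d) :
    Tendsto (fun n : ℕ => addMaxScore a d n / n) atTop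
      (nhds (Real.log 25 / 2 + Real.log 26 / 2)) := by
  have hstep : ∀ n, 1 ≤ n → Real.log (∏ i ∈ range (n + 2), #(addWitness d i) : ℕ) =
      Real.log (∏ i ∈ range n, #(addWitness d i) : ℕ) + Real.log (26 * 25) := by
    intro n hn
    have hpos : (∏ i ∈ range n, #(addWitness d i) : ℝ) ≠ 0 :=
      prod_ne_zero_iff.mpr fun i _ => Nat.cast_ne_zero.mpr (card_addWitness_pos had i).ne'
    rw [prod_card_addWitness_add_two d hn, Nat.cast_mul, Nat.cast_prod,
      Real.log_mul hpos (by norm_num)]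
    norm_num
  have hlim : Real.log 25 / 2 + Real.log 26 / 2 = Real.log (26 * 25) / 2 := by
    rw [Real.log_mul (by norm_num) (by norm_num)]
    ring
  simpa only [addMaxScore_eq had, hlim] using tendsto_div_of_add_two_eq_add hstep
end

section
/- For the n-coloring shift C_n (bi-infinite sequences over {1,...,n} in which adjacent letters differ), the independence entropy equals (1/2)·log⌊n/2⌋ + (1/2)·log⌈n/2⌉ for n ≥ 2. -/
open Filter

/-- A finite word over the alphabet `{1,…,n}` (encoded as `Fin n`) is in the language of
the `n`-coloring shift iff adjacent letters differ. -/
def colLegal {n : ℕ} {m : ℕ} (w : Fin m → Fin n) : Prop :=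
  ∀ i j : Fin m, (i : ℕ) + 1 = (j : ℕ) → w i ≠ w j

/-- A string of nonempty subsets of `{1,…,n}` is independently legal for the
`n`-coloring shift if every selection yields a word with adjacent letters distinct. -/
def colIndepLegal {n : ℕ} {m : ℕ} (A : Fin m → Finset (Fin n)) : Prop :=
  (∀ i, (A i).Nonempty) ∧ ∀ w : Fin m → Fin n, (∀ i, w i ∈ A i) → colLegal w

/-- The maximal independence score of independently legal strings of length `m`. -/
noncomputable def colMaxScore (n m : ℕ) : ℝ :=
  sSup {r : ℝ | ∃ A : Fin m → Finset (Fin n), colIndepLegal A ∧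
    r = ∑ i, Real.log ((A i).card)}

namespace ColAux

/-- the limit value -/
noncomputable def L (n : ℕ) : ℝ := (Real.log (n / 2 : ℕ) + Real.log ((n + 1) / 2 : ℕ)) / 2

lemma pairmul_aux {n a b : ℕ} (hab : a ≤ b) (ha : 1 ≤ a) (hs : a + b ≤ n) :
    a * b ≤ (n / 2) * ((n + 1) / 2) := by
  have haf : a ≤ n / 2 := by omega
  obtain ⟨d, hd⟩ := Nat.le.dest haf
  have hb : b ≤ (n + 1) / 2 + d := by omega
  calc a * b ≤ a * ((n + 1) / 2 + d) := Nat.mul_le_mul_left a hb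
    _ = a * ((n + 1) / 2) + a * d := by ring
    _ ≤ a * ((n + 1) / 2) + ((n + 1) / 2) * d := by
        have : a ≤ (n + 1) / 2 := by omega
        exact Nat.add_le_add_left (Nat.mul_le_mul_right d this) _
    _ = (a + d) * ((n + 1) / 2) := by ring
    _ = (n / 2) * ((n + 1) / 2) := by rw [hd]

lemma pairmul {n a b : ℕ} (ha : 1 ≤ a) (hb : 1 ≤ b) (hs : a + b ≤ n) :
    a * b ≤ (n / 2) * ((n + 1) / 2) := by
  rcases le_total a b with h | h
  · exact pairmul_aux h ha hs
  · rw [mul_comm]; exact pairmul_aux h hb (by omega)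

lemma log_f_nonneg {n : ℕ} (hn : 2 ≤ n) : 0 ≤ Real.log (n / 2 : ℕ) :=
  Real.log_natCast_nonneg _

lemma L_nonneg {n : ℕ} (hn : 2 ≤ n) : 0 ≤ L n := by
  have h1 := Real.log_natCast_nonneg (n / 2)
  have h2 := Real.log_natCast_nonneg ((n + 1) / 2)
  unfold L; linarith

lemma log_f_le_log_c {n : ℕ} : Real.log (n / 2 : ℕ) ≤ Real.log ((n + 1) / 2 : ℕ) := by
  rcases Nat.eq_zero_or_pos (n / 2) with h | h
  · rw [h]; simpa using Real.log_natCast_nonneg ((n + 1) / 2)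
  · apply Real.log_le_log (by exact_mod_cast h)
    exact_mod_cast Nat.div_le_div_right (by omega)

/-- Upper bound for sums along pairwise-constrained sequences. -/
lemma sum_log_le {n : ℕ} (hn : 2 ≤ n) :
    ∀ (m : ℕ) (a : ℕ → ℕ), (∀ i, i < m → 1 ≤ a i ∧ a i ≤ n) →
    (∀ i, i + 1 < m → a i + a (i + 1) ≤ n) →
    ∑ i ∈ Finset.range m, Real.log (a i) ≤ m * L n + Real.log n := by
  intro m
  induction m using Nat.strong_induction_on with
  | _ m ih =>
    match m with
    | 0 =>
      intro a _ _
      simp only [Finset.range_zero, Finset.sum_empty, Nat.cast_zero, zero_mul, zero_add]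
      exact Real.log_natCast_nonneg n
    | 1 =>
      intro a h1 _
      simp only [Finset.range_one, Finset.sum_singleton, Nat.cast_one, one_mul]
      have hle : Real.log (a 0) ≤ Real.log n := by
        apply Real.log_le_log (by exact_mod_cast (h1 0 (by omega)).1)
        exact_mod_cast (h1 0 (by omega)).2
      have := L_nonneg hn
      linarith
    | (k + 2) =>
      intro a h1 h2
      rw [Finset.sum_range_succ, Finset.sum_range_succ]
      have hIH := ih k (by omega) a (fun i hi => h1 i (by omega)) (fun i hi => h2 i (by omega))
      have hk1 : 1 ≤ a k := (h1 k (by omega)).1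
      have hk2 : 1 ≤ a (k + 1) := (h1 (k + 1) (by omega)).1
      have hmul : a k * a (k + 1) ≤ (n / 2) * ((n + 1) / 2) :=
        pairmul hk1 hk2 (h2 k (by omega))
      have hpair : Real.log (a k) + Real.log (a (k + 1)) ≤
          Real.log (n / 2 : ℕ) + Real.log ((n + 1) / 2 : ℕ) := by
        have hak : (0 : ℝ) < (a k : ℝ) := by exact_mod_cast hk1
        have hak1 : (0 : ℝ) < (a (k + 1) : ℝ) := by exact_mod_cast hk2
        have hf : (0 : ℝ) < ((n / 2 : ℕ) : ℝ) := by
          have : 1 ≤ n / 2 := by omega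
          exact_mod_cast this
        have hc : (0 : ℝ) < (((n + 1) / 2 : ℕ) : ℝ) := by
          have : 1 ≤ (n + 1) / 2 := by omega
          exact_mod_cast this
        rw [← Real.log_mul (ne_of_gt hak) (ne_of_gt hak1),
            ← Real.log_mul (ne_of_gt hf) (ne_of_gt hc)]
        apply Real.log_le_log (by positivity)
        push_cast
        exact_mod_cast hmul
      have hcast : ((k + 2 : ℕ) : ℝ) = (k : ℝ) + 2 := by push_cast; ring
      rw [hcast]
      have h2L : 2 * L n = Real.log (n / 2 : ℕ) + Real.log ((n + 1) / 2 : ℕ) := by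
        unfold L; ring
      nlinarith [hIH, hpair]

/-- Lower bound for the alternating score. -/
lemma alt_sum_ge {n : ℕ} (hn : 2 ≤ n) :
    ∀ m : ℕ, (m : ℝ) * L n ≤
      ∑ i ∈ Finset.range m,
        (if Even i then Real.log ((n + 1) / 2 : ℕ) else Real.log (n / 2 : ℕ)) := by
  intro m
  induction m using Nat.strong_induction_on with
  | _ m ih =>
    match m with
    | 0 => simp
    | 1 =>
      simp only [Finset.range_one, Finset.sum_singleton, Nat.cast_one, one_mul,
        if_pos (Even.zero)]
      have := log_f_le_log_c (n := n)
      unfold L; linarith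
    | (k + 2) =>
      rw [Finset.sum_range_succ, Finset.sum_range_succ]
      have hIH := ih k (by omega)
      have hterms : (if Even k then Real.log ((n + 1) / 2 : ℕ) else Real.log (n / 2 : ℕ)) +
          (if Even (k + 1) then Real.log ((n + 1) / 2 : ℕ) else Real.log (n / 2 : ℕ)) =
          Real.log (n / 2 : ℕ) + Real.log ((n + 1) / 2 : ℕ) := by
        rcases Nat.even_or_odd k with hk | hk
        · rw [if_pos hk, if_neg (by simp [Nat.even_add_one, hk])]; ring
        · rw [if_neg (by simpa using hk), if_pos (by simp [Nat.even_add_one]; simpa using hk)]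
      have hcast : ((k + 2 : ℕ) : ℝ) = (k : ℝ) + 2 := by push_cast; ring
      rw [hcast]
      have h2L : 2 * L n = Real.log (n / 2 : ℕ) + Real.log ((n + 1) / 2 : ℕ) := by
        unfold L; ring
      nlinarith [hIH]

/-- the "low" set of `Fin n`, of cardinality `⌈n/2⌉`. -/
def Cset (n : ℕ) : Finset (Fin n) :=
  (Finset.range ((n + 1) / 2)).attachFin (by intro m hm; simp only [Finset.mem_range] at hm; omega)

/-- the "high" set of `Fin n`, of cardinality `⌊n/2⌋`. -/
def Fset (n : ℕ) : Finset (Fin n) :=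
  (Finset.Ico ((n + 1) / 2) n).attachFin (by intro m hm; simp only [Finset.mem_Ico] at hm; omega)

lemma Cset_card (n : ℕ) : (Cset n).card = (n + 1) / 2 := by
  simp [Cset, Finset.card_attachFin]

lemma Fset_card (n : ℕ) : (Fset n).card = n / 2 := by
  simp only [Fset, Finset.card_attachFin, Nat.card_Ico]; omega

lemma mem_Cset {n : ℕ} {x : Fin n} (h : x ∈ Cset n) : (x : ℕ) < (n + 1) / 2 := by
  simpa [Cset, Finset.mem_attachFin] using h

lemma mem_Fset {n : ℕ} {x : Fin n} (h : x ∈ Fset n) : (n + 1) / 2 ≤ (x : ℕ) := by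
  have := (Finset.mem_attachFin _).mp h
  simp only [Finset.mem_Ico] at this
  exact this.1

/-- The alternating string of sets. -/
def altA (n m : ℕ) : Fin m → Finset (Fin n) :=
  fun i => if Even (i : ℕ) then Cset n else Fset n

lemma altA_legal {n m : ℕ} (hn : 2 ≤ n) : colIndepLegal (altA n m) := by
  constructor
  · intro i
    rw [← Finset.card_pos]
    unfold altA
    split
    · rw [Cset_card]; omega
    · rw [Fset_card]; omega
  · intro w hw i j hij heq
    have hwi := hw i
    have hwj := hw j
    unfold altA at hwi hwj
    rcases Nat.even_or_odd (i : ℕ) with hpi | hpi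
    · rw [if_pos hpi] at hwi
      rw [if_neg (by rw [← hij]; simp [Nat.even_add_one, hpi])] at hwj
      have h1 := mem_Cset hwi
      have h2 := mem_Fset hwj
      rw [heq] at h1
      omega
    · rw [if_neg (by simpa using hpi)] at hwi
      rw [if_pos (by rw [← hij]; simp [Nat.even_add_one]; simpa using hpi)] at hwj
      have h1 := mem_Fset hwi
      have h2 := mem_Cset hwj
      rw [heq] at h1
      omega

lemma altA_score {n m : ℕ} :
    ∑ i : Fin m, Real.log ((altA n m i).card) =
      ∑ i ∈ Finset.range m,
        (if Even i then Real.log ((n + 1) / 2 : ℕ) else Real.log (n / 2 : ℕ)) := by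
  rw [← Fin.sum_univ_eq_sum_range
    (fun i => if Even i then Real.log ((n + 1) / 2 : ℕ) else Real.log (n / 2 : ℕ)) m]
  apply Finset.sum_congr rfl
  intro i _
  unfold altA
  split
  · rw [Cset_card]
  · rw [Fset_card]

/-- disjointness of consecutive sets in a legal string -/
lemma adj_card {n m : ℕ} {A : Fin m → Finset (Fin n)} (hA : colIndepLegal A)
    (i : ℕ) (h : i + 1 < m) :
    (A ⟨i, by omega⟩).card + (A ⟨i + 1, h⟩).card ≤ n := by
  classical
  obtain ⟨hne, hleg⟩ := hA
  have hdisj : Disjoint (A ⟨i, by omega⟩) (A ⟨i + 1, h⟩) := by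
    rw [Finset.disjoint_left]
    intro a ha ha'
    set w : Fin m → Fin n :=
      fun k => if k = ⟨i, by omega⟩ ∨ k = ⟨i + 1, h⟩ then a else (hne k).choose with hwdef
    have hw : ∀ k, w k ∈ A k := by
      intro k
      by_cases hk : k = ⟨i, by omega⟩ ∨ k = ⟨i + 1, h⟩
      · rw [hwdef]; simp only [if_pos hk]
        rcases hk with rfl | rfl
        · exact ha
        · exact ha'
      · rw [hwdef]; simp only [if_neg hk]
        exact (hne k).choose_spec
    refine hleg w hw ⟨i, by omega⟩ ⟨i + 1, h⟩ rfl ?_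
    rw [hwdef]
    exact (if_pos (Or.inl rfl)).trans (if_pos (Or.inr rfl)).symm
  calc (A ⟨i, by omega⟩).card + (A ⟨i + 1, h⟩).card
      = (A ⟨i, by omega⟩ ∪ A ⟨i + 1, h⟩).card := (Finset.card_union_of_disjoint hdisj).symm
    _ ≤ (Finset.univ : Finset (Fin n)).card := Finset.card_le_univ _
    _ = n := by simp

/-- The score set. -/
def scoreSet (n m : ℕ) : Set ℝ :=
  {r : ℝ | ∃ A : Fin m → Finset (Fin n), colIndepLegal A ∧
    r = ∑ i, Real.log ((A i).card)}

lemma scoreSet_nonempty {n m : ℕ} (hn : 2 ≤ n) : (scoreSet n m).Nonempty :=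
  ⟨_, altA n m, altA_legal hn, rfl⟩

lemma scoreSet_bddAbove {n m : ℕ} : BddAbove (scoreSet n m) := by
  refine ⟨m * Real.log n, ?_⟩
  rintro r ⟨A, hA, rfl⟩
  calc ∑ i, Real.log ((A i).card) ≤ ∑ _i : Fin m, Real.log n := by
        apply Finset.sum_le_sum
        intro i _
        apply Real.log_le_log
        · exact_mod_cast Finset.card_pos.mpr (hA.1 i)
        · exact_mod_cast le_trans (Finset.card_le_univ _) (le_of_eq (by simp))
    _ = m * Real.log n := by simp [Finset.sum_const, nsmul_eq_mul]

lemma colMaxScore_le {n : ℕ} (hn : 2 ≤ n) (m : ℕ) :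
    colMaxScore n m ≤ m * L n + Real.log n := by
  apply csSup_le (scoreSet_nonempty hn)
  rintro r ⟨A, hA, rfl⟩
  classical
  set a : ℕ → ℕ := fun i => if h : i < m then (A ⟨i, h⟩).card else 1 with hadef
  have hval : ∀ i : Fin m, (A i).card = a (i : ℕ) := by
    intro i
    rw [hadef]
    simp only [dif_pos i.isLt]
  have hsum : ∑ i : Fin m, Real.log ((A i).card) =
      ∑ i ∈ Finset.range m, Real.log (a i) := by
    rw [← Fin.sum_univ_eq_sum_range (fun i => Real.log (a i)) m]
    apply Finset.sum_congr rfl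
    intro i _
    rw [hval]
  rw [hsum]
  apply sum_log_le hn
  · intro i hi
    rw [hadef]
    simp only [dif_pos hi]
    constructor
    · exact Finset.card_pos.mpr (hA.1 _)
    · exact le_trans (Finset.card_le_univ _) (le_of_eq (by simp))
  · intro i hi
    rw [hadef]
    simp only [dif_pos (show i < m by omega), dif_pos hi]
    exact adj_card hA i hi

lemma colMaxScore_ge {n : ℕ} (hn : 2 ≤ n) (m : ℕ) :
    (m : ℝ) * L n ≤ colMaxScore n m := by
  have hmem : (∑ i : Fin m, Real.log ((altA n m i).card)) ∈ scoreSet n m :=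
    ⟨altA n m, altA_legal hn, rfl⟩
  calc (m : ℝ) * L n ≤ ∑ i : Fin m, Real.log ((altA n m i).card) := by
        rw [altA_score]; exact alt_sum_ge hn m
    _ ≤ colMaxScore n m := le_csSup scoreSet_bddAbove hmem

end ColAux

/-- For the `n`-coloring shift (`n ≥ 2`), the independence entropy equals
`(1/2)·log ⌊n/2⌋ + (1/2)·log ⌈n/2⌉`. -/
theorem stmt3 (n : ℕ) (hn : 2 ≤ n) :
    Tendsto (fun m : ℕ => colMaxScore n m / m) atTop
      (nhds (Real.log (n / 2 : ℕ) / 2 + Real.log ((n + 1) / 2 : ℕ) / 2)) := by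
  have hLeq : Real.log (n / 2 : ℕ) / 2 + Real.log ((n + 1) / 2 : ℕ) / 2 = ColAux.L n := by
    unfold ColAux.L; ring
  rw [hLeq]
  have hupper : Tendsto (fun m : ℕ => ColAux.L n + Real.log n / m) atTop (nhds (ColAux.L n)) := by
    have h0 : Tendsto (fun m : ℕ => Real.log n / (m : ℝ)) atTop (nhds 0) :=
      Tendsto.div_atTop tendsto_const_nhds tendsto_natCast_atTop_atTop
    simpa using tendsto_const_nhds.add h0
  apply tendsto_of_tendsto_of_tendsto_of_le_of_le' (tendsto_const_nhds) hupper
  · filter_upwards [eventually_ge_atTop 1] with m hm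
    have hmpos : (0 : ℝ) < m := by exact_mod_cast hm
    rw [le_div_iff₀ hmpos]
    calc ColAux.L n * m = (m : ℝ) * ColAux.L n := by ring
      _ ≤ colMaxScore n m := ColAux.colMaxScore_ge hn m
  · filter_upwards [eventually_ge_atTop 1] with m hm
    have hmpos : (0 : ℝ) < m := by exact_mod_cast hm
    rw [div_le_iff₀ hmpos]
    calc colMaxScore n m ≤ m * ColAux.L n + Real.log n := ColAux.colMaxScore_le hn m
      _ ≤ (ColAux.L n + Real.log n / m) * m := by
          field_simp
          ring_nf
          exact le_refl _
end

section
/- For the even shift X_E ⊂ {0,1}^ℤ (all maximal runs of 0s have even length), the symbol {0,1} can appear at most twice in any independently legal bi-infinite string of nonempty subsets of {0,1}; consequently the independence entropy of X_E is 0. -/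
open Filter

/-- The even shift: points `x ∈ {0,1}^ℤ` (with `true` = 1) in which every maximal block
of 0s bounded by 1s on both sides has even length. -/
def EvenShift : Set (ℤ → Bool) :=
  {x | ∀ i j : ℤ, i < j → x i = true → x j = true →
    (∀ k : ℤ, i < k → k < j → x k = false) → Even (j - i - 1)}

/-- A bi-infinite string of nonempty subsets of `{0,1}` is independently legal for the
even shift if every pointwise selection lies in the even shift. -/
def evenIndepLegalPoint (xh : ℤ → Finset Bool) : Prop :=
  (∀ i, (xh i).Nonempty) ∧ ∀ y : ℤ → Bool, (∀ i, y i ∈ xh i) → y ∈ EvenShift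

/-- A finite string of nonempty subsets of `{0,1}` is independently legal for the even
shift if every selection is a word in the language of the even shift. -/
def evenIndepLegal {n : ℕ} (A : Fin n → Finset Bool) : Prop :=
  (∀ i, (A i).Nonempty) ∧ ∀ w : Fin n → Bool, (∀ i, w i ∈ A i) →
    ∃ x ∈ EvenShift, ∀ i : Fin n, x (i : ℤ) = w i

/-- The maximal independence score of independently legal strings of length `n`. -/
noncomputable def evenMaxScore (n : ℕ) : ℝ :=
  sSup {r : ℝ | ∃ A : Fin n → Finset Bool, evenIndepLegal A ∧
    r = ∑ i, Real.log ((A i).card)}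

/-- Counting lemma: between two 1's in a point of the even shift the number of
0's is even. -/
lemma evenShift_count (x : ℤ → Bool) (hx : x ∈ EvenShift) :
    ∀ n : ℕ, ∀ i j : ℤ, i < j → x i = true → x j = true →
    ((Finset.Ioo i j).filter (fun k => x k = true)).card = n →
    Even (j - i - 1 - n) := by
  intro n
  induction n with
  | zero =>
    intro i j hij hxi hxj hcard
    have hall : ∀ k : ℤ, i < k → k < j → x k = false := by
      intro k h1 h2
      by_contra h
      have hk : x k = true := by
        cases hxk : x k with
        | false => exact absurd hxk h
        | true => rfl
      have : k ∈ (Finset.Ioo i j).filter (fun k => x k = true) := by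
        simp [Finset.mem_filter, Finset.mem_Ioo, h1, h2, hk]
      rw [Finset.card_eq_zero] at hcard
      simp [hcard] at this
    have := hx i j hij hxi hxj hall
    simpa using this
  | succ m ih =>
    intro i j hij hxi hxj hcard
    set S := (Finset.Ioo i j).filter (fun k => x k = true) with hS
    have hne : S.Nonempty := by
      rw [← Finset.card_pos, hcard]; omega
    set M := S.max' hne with hM
    have hMmem : M ∈ S := S.max'_mem hne
    have hMioo : M ∈ Finset.Ioo i j := (Finset.mem_filter.1 hMmem).1
    have hMi : i < M := (Finset.mem_Ioo.1 hMioo).1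
    have hMj : M < j := (Finset.mem_Ioo.1 hMioo).2
    have hxM : x M = true := by
      have := (Finset.mem_filter.1 hMmem).2
      simpa using this
    -- everything strictly between M and j is false
    have hright : ∀ k : ℤ, M < k → k < j → x k = false := by
      intro k h1 h2
      by_contra h
      have hk : x k = true := by
        cases hxk : x k with
        | false => exact absurd hxk h
        | true => rfl
      have hkS : k ∈ S := by
        simp [hS, Finset.mem_filter, Finset.mem_Ioo, hk]
        omega
      have := S.le_max' k hkS
      omega
    have hEvenRight : Even (j - M - 1) := hx M j hMj hxM hxj hright
    -- split S
    have hsplit : S = insert M ((Finset.Ioo i M).filter (fun k => x k = true)) := by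
      ext k
      simp only [Finset.mem_insert, Finset.mem_filter, Finset.mem_Ioo, hS]
      constructor
      · rintro ⟨⟨h1, h2⟩, h3⟩
        rcases lt_trichotomy k M with hlt | heq | hgt
        · exact Or.inr ⟨⟨h1, hlt⟩, h3⟩
        · exact Or.inl heq
        · exact absurd (hright k hgt h2) (by simp [h3])
      · rintro (rfl | ⟨⟨h1, h2⟩, h3⟩)
        · exact ⟨⟨hMi, hMj⟩, hxM⟩
        · exact ⟨⟨h1, h2.trans hMj⟩, h3⟩
    have hMnot : M ∉ (Finset.Ioo i M).filter (fun k => x k = true) := by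
      simp [Finset.mem_filter, Finset.mem_Ioo]
    have hcard' : ((Finset.Ioo i M).filter (fun k => x k = true)).card = m := by
      have := hcard
      rw [hsplit, Finset.card_insert_of_notMem hMnot] at this
      omega
    have hEvenLeft : Even (M - i - 1 - m) := ih i M hMi hxi hxM hcard'
    have : j - i - 1 - (m + 1 : ℕ) = (M - i - 1 - m) + (j - M - 1) := by
      push_cast; ring
    rw [this]
    exact hEvenLeft.add hEvenRight

/-- Two points of the even shift cannot agree on an interval around three marked
positions except at the middle one, taking opposite values there. -/
lemma evenShift_no_flip (x x' : ℤ → Bool) (hx : x ∈ EvenShift) (hx' : x' ∈ EvenShift)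
    (a b c : ℤ) (hab : a < b) (hbc : b < c)
    (hxa : x a = true) (hxc : x c = true) (hx'a : x' a = true) (hx'c : x' c = true)
    (hb : x b = true) (hb' : x' b = false)
    (hagree : ∀ k : ℤ, a < k → k < c → k ≠ b → x' k = x k) : False := by
  set S := (Finset.Ioo a c).filter (fun k => x k = true) with hS
  set S' := (Finset.Ioo a c).filter (fun k => x' k = true) with hS'
  have hbS : b ∈ S := by
    simp [hS, Finset.mem_filter, Finset.mem_Ioo, hab, hbc, hb]
  have hS'eq : S' = S.erase b := by
    ext k
    simp only [hS, hS', Finset.mem_erase, Finset.mem_filter, Finset.mem_Ioo]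
    constructor
    · rintro ⟨⟨h1, h2⟩, h3⟩
      have hkb : k ≠ b := by
        rintro rfl
        rw [hb'] at h3; exact Bool.false_ne_true h3
      exact ⟨hkb, ⟨h1, h2⟩, by rw [← hagree k h1 h2 hkb]; exact h3⟩
    · rintro ⟨hkb, ⟨h1, h2⟩, h3⟩
      exact ⟨⟨h1, h2⟩, by rw [hagree k h1 h2 hkb]; exact h3⟩
  have hcard : S'.card = S.card - 1 := by
    rw [hS'eq, Finset.card_erase_of_mem hbS]
  have hpos : 1 ≤ S.card := Finset.card_pos.2 ⟨b, hbS⟩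
  have h1 : Even (c - a - 1 - S.card) :=
    evenShift_count x hx S.card a c (hab.trans hbc) hxa hxc rfl
  have h2 : Even (c - a - 1 - S'.card) :=
    evenShift_count x' hx' S'.card a c (hab.trans hbc) hx'a hx'c rfl
  rw [hcard] at h2
  have : (c - a - 1 - (S.card - 1 : ℕ) : ℤ) = (c - a - 1 - S.card) + 1 := by
    have : ((S.card - 1 : ℕ) : ℤ) = (S.card : ℤ) - 1 := by
      push_cast [hpos]; ring
    rw [this]; ring
  rw [this] at h2
  rcases h1 with ⟨t, ht⟩
  rcases h2 with ⟨s, hs⟩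
  omega

/-- From three distinct elements satisfying a predicate, obtain an ordered triple. -/
lemma orderedTriple {P : ℤ → Prop} {a b c : ℤ} (ha : P a) (hb : P b) (hc : P c)
    (hab : a ≠ b) (hac : a ≠ c) (hbc : b ≠ c) :
    ∃ p q r : ℤ, p < q ∧ q < r ∧ P p ∧ P q ∧ P r := by
  rcases lt_trichotomy a b with h1 | h1 | h1
  · rcases lt_trichotomy b c with h2 | h2 | h2
    · exact ⟨a, b, c, h1, h2, ha, hb, hc⟩
    · exact absurd h2 hbc
    · rcases lt_trichotomy a c with h3 | h3 | h3
      · exact ⟨a, c, b, h3, h2, ha, hc, hb⟩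
      · exact absurd h3 hac
      · exact ⟨c, a, b, h3, h1, hc, ha, hb⟩
  · exact absurd h1 hab
  · rcases lt_trichotomy a c with h2 | h2 | h2
    · exact ⟨b, a, c, h1, h2, hb, ha, hc⟩
    · exact absurd h2 hac
    · rcases lt_trichotomy b c with h3 | h3 | h3
      · exact ⟨b, c, a, h3, h2, hb, hc, ha⟩
      · exact absurd h3 hbc
      · exact ⟨c, b, a, h3, h1, hc, hb, ha⟩

lemma full_iff_card_two (A : Finset Bool) : A = ({false, true} : Finset Bool) ↔ A.card = 2 := by
  constructor
  · rintro rfl; decide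
  · intro h
    have : A = Finset.univ := Finset.eq_univ_of_card A (by simp [h])
    rw [this]; decide

lemma mem_full (b : Bool) : b ∈ ({false, true} : Finset Bool) := by cases b <;> decide

/-- In a finite independently legal string, at most two sets are full. -/
lemma finite_fulls_le_two {n : ℕ} (A : Fin n → Finset Bool) (hA : evenIndepLegal A) :
    (Finset.univ.filter (fun i => A i = ({false, true} : Finset Bool))).card ≤ 2 := by
  by_contra h
  push_neg at h
  set T := Finset.univ.filter (fun i => A i = ({false, true} : Finset Bool)) with hT
  have h3 : 3 ≤ T.card := h
  obtain ⟨t, hsub, hcard3⟩ := Finset.exists_subset_card_eq h3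
  obtain ⟨i1, i2, i3, h12, h13, h23, rfl⟩ := Finset.card_eq_three.1 hcard3
  have hmemT : ∀ i ∈ ({i1, i2, i3} : Finset (Fin n)),
      A i = ({false, true} : Finset Bool) := by
    intro i hi
    have := hsub hi
    rw [hT, Finset.mem_filter] at this
    exact this.2
  have hfull1 : A i1 = ({false, true} : Finset Bool) := hmemT i1 (by simp)
  have hfull2 : A i2 = ({false, true} : Finset Bool) := hmemT i2 (by simp)
  have hfull3 : A i3 = ({false, true} : Finset Bool) := hmemT i3 (by simp)
  -- order them as integers
  obtain ⟨p, q, r, hpq, hqr, hp, hq, hr⟩ :=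
    orderedTriple (P := fun z : ℤ => ∃ i : Fin n, (i : ℤ) = z ∧
        A i = ({false, true} : Finset Bool))
      ⟨i1, rfl, hfull1⟩ ⟨i2, rfl, hfull2⟩ ⟨i3, rfl, hfull3⟩
      (by simpa [Fin.val_eq_val, Int.natCast_inj] using h12)
      (by simpa [Fin.val_eq_val, Int.natCast_inj] using h13)
      (by simpa [Fin.val_eq_val, Int.natCast_inj] using h23)
  obtain ⟨a, ha, hAa⟩ := hp
  obtain ⟨b, hbz, hAb⟩ := hq
  obtain ⟨c, hcz, hAc⟩ := hr
  subst ha hbz hcz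
  -- selections
  set w : Fin n → Bool := fun i => if true ∈ A i then true else false with hw
  have hwmem : ∀ i, w i ∈ A i := by
    intro i
    by_cases ht : true ∈ A i
    · simp [hw, ht]
    · obtain ⟨v, hv⟩ := hA.1 i
      cases v with
      | true => exact absurd hv ht
      | false => simpa [hw, ht] using hv
  have hwfull : ∀ i, A i = ({false, true} : Finset Bool) → w i = true := by
    intro i hi
    rw [hw]
    simp [hi]
  set w' : Fin n → Bool := Function.update w b false with hw'
  have hw'mem : ∀ i, w' i ∈ A i := by
    intro i
    rw [hw']
    rcases eq_or_ne i b with rfl | hib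
    · simp [hAb, mem_full]
    · rw [Function.update_of_ne hib]; exact hwmem i
  obtain ⟨x, hxE, hxw⟩ := hA.2 w hwmem
  obtain ⟨x', hx'E, hx'w⟩ := hA.2 w' hw'mem
  refine evenShift_no_flip x x' hxE hx'E a b c hpq hqr ?_ ?_ ?_ ?_ ?_ ?_ ?_
  · rw [hxw a]; exact hwfull a hAa
  · rw [hxw c]; exact hwfull c hAc
  · rw [hx'w a, hw', Function.update_of_ne (by
      intro h; rw [h] at hpq; exact lt_irrefl _ hpq)]
    exact hwfull a hAa
  · rw [hx'w c, hw', Function.update_of_ne (by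
      intro h; rw [h] at hqr; exact lt_irrefl _ hqr)]
    exact hwfull c hAc
  · rw [hxw b]; exact hwfull b hAb
  · rw [hx'w b, hw']; simp
  · intro k h1 h2 hkb
    have hk0 : 0 ≤ k := le_trans (Int.ofNat_nonneg _) (le_of_lt h1)
    have hkn : k < n := lt_trans h2 (by exact_mod_cast c.isLt)
    set kf : Fin n := ⟨k.toNat, by omega⟩ with hkf
    have hkk : (kf : ℤ) = k := by simp [hkf]; omega
    have hkfb : kf ≠ b := by
      intro h
      apply hkb
      rw [← hkk, h]
    rw [← hkk, hxw kf, hx'w kf, hw', Function.update_of_ne hkfb]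

/-- For the even shift: the symbol `{0,1}` occurs at most twice in any independently
legal bi-infinite string of nonempty subsets of `{0,1}`; consequently, the independence
entropy of the even shift is `0`. -/
theorem stmt4 :
    (∀ xh : ℤ → Finset Bool, evenIndepLegalPoint xh →
      {i : ℤ | xh i = ({false, true} : Finset Bool)}.encard ≤ 2) ∧
    Tendsto (fun n : ℕ => evenMaxScore n / n) atTop (nhds 0) := by
  constructor
  · -- at most two full sets in a legal point
    intro xh hxh
    by_contra h
    push_neg at h
    set s := {i : ℤ | xh i = ({false, true} : Finset Bool)} with hs
    have h1 : 1 < s.encard := lt_trans (by norm_num) h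
    obtain ⟨a, b, ha, hb, hab⟩ := Set.one_lt_encard_iff.1 h1
    have hnsub : ¬ s ⊆ {a, b} := by
      intro hsub
      have := le_trans (Set.encard_le_encard hsub) (le_of_eq (Set.encard_pair hab))
      exact absurd this (not_le.2 h)
    obtain ⟨c, hc, hcnot⟩ := Set.not_subset.1 hnsub
    have hca : a ≠ c := fun h' => hcnot (by simp [h'])
    have hcb : b ≠ c := fun h' => hcnot (by simp [h'])
    obtain ⟨p, q, r, hpq, hqr, hp, hq, hr⟩ :=
      orderedTriple (P := fun i : ℤ => xh i = ({false, true} : Finset Bool))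
        ha hb hc hab hca hcb
    set y : ℤ → Bool := fun i => if true ∈ xh i then true else false with hy
    have hymem : ∀ i, y i ∈ xh i := by
      intro i
      by_cases ht : true ∈ xh i
      · simp [hy, ht]
      · obtain ⟨v, hv⟩ := hxh.1 i
        cases v with
        | true => exact absurd hv ht
        | false => simpa [hy, ht] using hv
    have hyfull : ∀ i, xh i = ({false, true} : Finset Bool) → y i = true := by
      intro i hi; simp [hy, hi]
    set y' : ℤ → Bool := Function.update y q false with hy'
    have hy'mem : ∀ i, y' i ∈ xh i := by
      intro i
      rcases eq_or_ne i q with rfl | hiq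
      · simp [hy', hq, mem_full]
      · rw [hy', Function.update_of_ne hiq]; exact hymem i
    have hyE : y ∈ EvenShift := hxh.2 y hymem
    have hy'E : y' ∈ EvenShift := hxh.2 y' hy'mem
    refine evenShift_no_flip y y' hyE hy'E p q r hpq hqr ?_ ?_ ?_ ?_ ?_ ?_ ?_
    · exact hyfull p hp
    · exact hyfull r hr
    · rw [hy', Function.update_of_ne (ne_of_lt hpq)]; exact hyfull p hp
    · rw [hy', Function.update_of_ne (ne_of_gt hqr)]; exact hyfull r hr
    · exact hyfull q hq
    · rw [hy']; simp
    · intro k h1 h2 hkq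
      rw [hy', Function.update_of_ne hkq]
  · -- independence entropy is zero
    have key : ∀ (n : ℕ) (A : Fin n → Finset Bool), evenIndepLegal A →
        ∑ i, Real.log ((A i).card) ≤ 2 * Real.log 2 := by
      intro n A hA
      set T := Finset.univ.filter
        (fun i => A i = ({false, true} : Finset Bool)) with hT
      have hzero : ∑ i ∈ Finset.univ.filter
          (fun i => ¬ A i = ({false, true} : Finset Bool)),
          Real.log ((A i).card) = 0 := by
        refine Finset.sum_eq_zero fun i hi => ?_
        have hnot := (Finset.mem_filter.1 hi).2
        have hcard2 : (A i).card ≤ 2 :=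
          le_trans (Finset.card_le_card (Finset.subset_univ _)) (by simp)
        have hcard1 : 1 ≤ (A i).card := Finset.card_pos.2 (hA.1 i)
        have hne2 : (A i).card ≠ 2 := fun h2 =>
          hnot ((full_iff_card_two (A i)).2 h2)
        have : (A i).card = 1 := by omega
        simp [this]
      have hsum : ∑ i, Real.log ((A i).card) =
          ∑ i ∈ T, Real.log ((A i).card) := by
        rw [← Finset.sum_filter_add_sum_filter_not Finset.univ
          (fun i => A i = ({false, true} : Finset Bool))
          (fun i => Real.log ((A i).card)), hzero, add_zero]
      have hsum2 : ∑ i ∈ T, Real.log ((A i).card) = T.card * Real.log 2 := by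
        rw [Finset.sum_congr rfl (fun i hi => ?_), Finset.sum_const, nsmul_eq_mul]
        have hfull := (Finset.mem_filter.1 hi).2
        have : (A i).card = 2 := (full_iff_card_two (A i)).1 hfull
        rw [this]; norm_num
      rw [hsum, hsum2]
      have hTle : (T.card : ℝ) ≤ 2 := by
        exact_mod_cast finite_fulls_le_two A hA
      exact mul_le_mul_of_nonneg_right hTle (Real.log_nonneg one_le_two)
    have hmem0 : ∀ n : ℕ, (0 : ℝ) ∈ {r : ℝ | ∃ A : Fin n → Finset Bool,
        evenIndepLegal A ∧ r = ∑ i, Real.log ((A i).card)} := by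
      intro n
      refine ⟨fun _ => ({false} : Finset Bool), ⟨fun i => ⟨false, by simp⟩, ?_⟩, by simp⟩
      intro w hw
      refine ⟨fun _ => false, ?_, ?_⟩
      · intro i j _ hxi _ _
        exact absurd hxi (by simp)
      · intro i
        have := hw i
        simp only [Finset.mem_singleton] at this
        exact this.symm
    have hbdd : ∀ n : ℕ, BddAbove {r : ℝ | ∃ A : Fin n → Finset Bool,
        evenIndepLegal A ∧ r = ∑ i, Real.log ((A i).card)} := by
      intro n
      refine ⟨2 * Real.log 2, fun r hr => ?_⟩
      obtain ⟨A, hA, rfl⟩ := hr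
      exact key n A hA
    have hlow : ∀ n : ℕ, 0 ≤ evenMaxScore n := fun n =>
      le_csSup (hbdd n) (hmem0 n)
    have hupp : ∀ n : ℕ, evenMaxScore n ≤ 2 * Real.log 2 := fun n =>
      csSup_le ⟨0, hmem0 n⟩ (fun r hr => by
        obtain ⟨A, hA, rfl⟩ := hr; exact key n A hA)
    have hto : Tendsto (fun n : ℕ => (2 * Real.log 2) / n) atTop (nhds 0) :=
      tendsto_const_div_atTop_nhds_zero_nat _
    refine tendsto_of_tendsto_of_tendsto_of_le_of_le'
      (tendsto_const_nhds : Tendsto (fun _ : ℕ => (0:ℝ)) atTop (nhds 0)) hto ?_ ?_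
    · filter_upwards [eventually_ge_atTop 1] with n hn
      exact div_nonneg (hlow n) (by positivity)
    · filter_upwards [eventually_ge_atTop 1] with n hn
      have hnpos : (0 : ℝ) < n := by exact_mod_cast hn
      exact div_le_div_of_nonneg_right (hupp n) hnpos.le
end

section
/- Let X be a nearest-neighbor ℤ-SFT over alphabet Σ with zero independence entropy, and assume X is irreducible. Then for any a, b ∈ Σ, there is at most one c ∈ Σ such that acb lies in the language of X. -/
open Filter

/-- The nearest-neighbor ℤ-SFT determined by a set `E` of allowed 2-letter words. -/
def NNShift {α : Type*} (E : α → α → Prop) : Set (ℤ → α) :=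
  {x | ∀ i : ℤ, E (x i) (x (i + 1))}

/-- The language of the SFT: finite words (as lists) appearing in points. -/
def NNLang {α : Type*} (E : α → α → Prop) (l : List α) : Prop :=
  ∃ x ∈ NNShift E, ∃ k : ℤ, ∀ i : Fin l.length, x (k + (i : ℤ)) = l.get i

/-- Irreducibility: any two words of the language can be connected within the language. -/
def NNIrreducible {α : Type*} (E : α → α → Prop) : Prop :=
  ∀ u v : List α, NNLang E u → NNLang E v → ∃ w : List α, NNLang E (u ++ w ++ v)

/-- A string of nonempty subsets of the alphabet is independently legal if every
selection yields a word in the language. -/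
def NNIndepLegal {α : Type*} (E : α → α → Prop) {n : ℕ} (A : Fin n → Finset α) : Prop :=
  (∀ i, (A i).Nonempty) ∧ ∀ w : Fin n → α, (∀ i, w i ∈ A i) →
    ∃ x ∈ NNShift E, ∃ k : ℤ, ∀ i : Fin n, x (k + (i : ℤ)) = w i

/-- The maximal independence score over independently legal strings of length `n`. -/
noncomputable def NNMaxScore {α : Type*} [Fintype α] [DecidableEq α]
    (E : α → α → Prop) (n : ℕ) : ℝ :=
  sSup {r : ℝ | ∃ A : Fin n → Finset α, NNIndepLegal E A ∧
    r = ∑ i, Real.log ((A i).card)}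

lemma nnlang_iff {α : Type*} (E : α → α → Prop) (l : List α) :
    NNLang E l ↔ ∃ x ∈ NNShift E, ∃ k : ℤ, ∀ i : ℕ, (h : i < l.length) → x (k + i) = l[i] := by
  constructor
  · rintro ⟨x, hx, k, h⟩
    exact ⟨x, hx, k, fun i hi => h ⟨i, hi⟩⟩
  · rintro ⟨x, hx, k, h⟩
    exact ⟨x, hx, k, fun i => h i i.isLt⟩

lemma nnlang_infix {α : Type*} {E : α → α → Prop} {p m s : List α}
    (h : NNLang E (p ++ m ++ s)) : NNLang E m := by
  rw [nnlang_iff] at h ⊢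
  obtain ⟨x, hx, k, h⟩ := h
  refine ⟨x, hx, k + p.length, fun i hi => ?_⟩
  have h2 : p.length + i < (p ++ m ++ s).length := by
    simp [List.length_append]; omega
  have := h (p.length + i) h2
  rw [show (k + ↑p.length + ↑i : ℤ) = k + ↑(p.length + i) by push_cast; ring]
  rw [this]
  rw [List.getElem_append_left (by simp; omega), List.getElem_append_right (by omega)]
  congr 1
  omega

lemma nnlang_glue {α : Type*} {E : α → α → Prop} {s t : List α} {c : α}
    (hs : NNLang E (s ++ [c])) (ht : NNLang E (c :: t)) : NNLang E (s ++ c :: t) := by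
  rw [nnlang_iff] at hs ht ⊢
  obtain ⟨x, hx, k, hxk⟩ := hs
  obtain ⟨y, hy, k', hyk⟩ := ht
  set N : ℤ := k + s.length with hN
  refine ⟨fun i => if i ≤ N then x i else y (k' + (i - N)), ?_, k, ?_⟩
  · intro i
    by_cases h1 : i + 1 ≤ N
    · simp only [h1, le_of_lt (by omega : i < N + 1), if_pos]
      simp only [if_pos (by omega : i ≤ N)]
      exact hx i
    · by_cases h2 : i ≤ N
      · have hi : i = N := by omega
        simp only [if_pos h2, if_neg h1]
        have e1 : x i = c := by
          have := hxk s.length (by simp)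
          rw [hi, hN]
          rw [this, List.getElem_append_right (le_refl _)]
          simp
        have e2 : y k' = c := by
          have := hyk 0 (by simp)
          simpa using this
        rw [e1, show k' + (i + 1 - N) = k' + 1 by omega, ← e2]
        exact hy k'
      · simp only [if_neg h2, if_neg (by omega : ¬ i + 1 ≤ N)]
        rw [show k' + (i + 1 - N) = k' + (i - N) + 1 by ring]
        exact hy _
  · intro i hi
    simp only [List.length_append, List.length_cons] at hi
    dsimp only
    by_cases h1 : i ≤ s.length
    · rw [if_pos (by push_cast [hN]; omega)]
      have := hxk i (by simp; omega)
      rw [this]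
      rcases lt_or_eq_of_le h1 with h1 | h1
      · rw [List.getElem_append_left h1, List.getElem_append_left h1]
      · rw [List.getElem_append_right (by omega), List.getElem_append_right (by omega)]
        simp [h1]
    · rw [if_neg (by push_cast [hN]; omega)]
      have hlt : i - s.length < (c :: t).length := by simp; omega
      have := hyk (i - s.length) hlt
      rw [show k' + (k + ↑i - N) = k' + ↑(i - s.length) by push_cast [hN]; omega]
      rw [this, List.getElem_append_right (by omega)]

lemma forall₂_append_right_ex {α β : Type*} {R : α → β → Prop} :
    ∀ {u : List β} {l : List α} {v : List β},
      List.Forall₂ R l (u ++ v) →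
      ∃ l₁ l₂, l = l₁ ++ l₂ ∧ List.Forall₂ R l₁ u ∧ List.Forall₂ R l₂ v := by
  intro u
  induction u with
  | nil => exact fun h => ⟨[], _, rfl, List.Forall₂.nil, h⟩
  | cons b u ih =>
    intro l v h
    rw [List.cons_append, List.forall₂_cons_right_iff] at h
    obtain ⟨x, l', hx, h', rfl⟩ := h
    obtain ⟨l₁, l₂, rfl, h1, h2⟩ := ih h'
    exact ⟨x :: l₁, l₂, rfl, List.Forall₂.cons hx h1, h2⟩

lemma forall₂_singleton_eq {α : Type*} [DecidableEq α] {l w : List α}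
    (h : List.Forall₂ (· ∈ ·) l (w.map fun d => ({d} : Finset α))) : l = w := by
  rw [List.forall₂_map_right_iff] at h
  simp only [Finset.mem_singleton] at h
  exact List.forall₂_eq_eq_eq ▸ h

lemma main_sel {α : Type*} [DecidableEq α] {E : α → α → Prop} {a b c c' : α} {w : List α}
    (hbc : NNLang E ([a, c, b] ++ w ++ [a]))
    (hbc' : NNLang E ([a, c', b] ++ w ++ [a]))
    (ha : NNLang E [a]) :
    ∀ m (l : List α),
      List.Forall₂ (· ∈ ·) l
        (List.replicate m (({a} : Finset α) :: {c, c'} :: {b} :: w.map (fun d => {d}))).flatten →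
      (∃ t, l ++ [a] = a :: t) ∧ NNLang E (l ++ [a]) := by
  intro m
  induction m with
  | zero =>
    intro l h
    simp only [List.replicate_zero, List.flatten_nil, List.forall₂_nil_right_iff] at h
    subst h
    exact ⟨⟨[], rfl⟩, ha⟩
  | succ m ih =>
    intro l h
    rw [List.replicate_succ, List.flatten_cons, List.cons_append, List.cons_append,
      List.cons_append, List.forall₂_cons_right_iff] at h
    obtain ⟨x1, l1, hx1, h, rfl⟩ := h
    rw [List.forall₂_cons_right_iff] at h
    obtain ⟨γ, l2, hγ, h, rfl⟩ := h
    rw [List.forall₂_cons_right_iff] at h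
    obtain ⟨x3, l3, hx3, h, rfl⟩ := h
    obtain ⟨lw, l4, rfl, hlw, h4⟩ := forall₂_append_right_ex h
    rw [Finset.mem_singleton] at hx1 hx3
    have hlww := forall₂_singleton_eq hlw
    subst hlww
    rw [hx1, hx3]
    obtain ⟨⟨t, ht⟩, hlang⟩ := ih l4 h4
    have hblock : NNLang E ((a :: γ :: b :: lw) ++ [a]) := by
      rcases Finset.mem_insert.mp hγ with rfl | hγ
      · simpa using hbc
      · rw [Finset.mem_singleton] at hγ
        subst hγ
        simpa using hbc'
    have hglue := nnlang_glue hblock (ht ▸ hlang)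
    constructor
    · exact ⟨γ :: b :: (lw ++ l4 ++ [a]), by simp⟩
    · have : (a :: γ :: b :: lw) ++ a :: t = (a :: γ :: b :: (lw ++ l4)) ++ [a] := by
        rw [← ht]; simp
      rwa [this] at hglue

lemma list_sum_fin {α : Type*} (L : List α) (f : α → ℝ) :
    ∑ i : Fin L.length, f (L.get i) = (L.map f).sum := by
  conv_rhs => rw [← List.ofFn_get L, List.map_ofFn, List.sum_ofFn]
  rfl

lemma score_bdd {α : Type*} [Fintype α] [DecidableEq α] (E : α → α → Prop) (n : ℕ) :
    BddAbove {r : ℝ | ∃ A : Fin n → Finset α, NNIndepLegal E A ∧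
      r = ∑ i, Real.log ((A i).card)} := by
  refine ⟨n * Real.log (Fintype.card α), ?_⟩
  rintro r ⟨A, hA, rfl⟩
  calc ∑ i, Real.log ((A i).card) ≤ ∑ _i : Fin n, Real.log (Fintype.card α) := by
        refine Finset.sum_le_sum fun i _ => ?_
        have h1 : 0 < ((A i).card : ℝ) := by
          exact_mod_cast Finset.card_pos.2 (hA.1 i)
        exact Real.log_le_log h1 (by exact_mod_cast Finset.card_le_univ (A i))
    _ = n * Real.log (Fintype.card α) := by simp [mul_comm]

/-- For an irreducible nearest-neighbor ℤ-SFT with zero independence entropy, for any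
letters `a, b` there is at most one `c` such that `acb` lies in the language. -/
theorem stmt5 {α : Type*} [Fintype α] [DecidableEq α] (E : α → α → Prop)
    (hirr : NNIrreducible E)
    (hzero : Tendsto (fun n : ℕ => NNMaxScore E n / n) atTop (nhds 0)) :
    ∀ a b c c' : α, NNLang E [a, c, b] → NNLang E [a, c', b] → c = c' := by
  intro a b c c' hacb hacb'
  by_contra hne
  obtain ⟨w, hw⟩ := hirr [a, c, b] [a, c, b] hacb hacb
  have ha : NNLang E [a] :=
    nnlang_infix (p := []) (m := [a]) (s := [c, b] ++ w ++ [a, c, b]) (by simpa using hw)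
  have hbc : NNLang E ([a, c, b] ++ w ++ [a]) := by
    refine nnlang_infix (p := []) (s := [c, b]) ?_
    simpa [List.append_assoc] using hw
  have hmid : NNLang E (b :: (w ++ [a])) := by
    refine nnlang_infix (p := [a, c]) (s := [c, b]) ?_
    simpa [List.append_assoc] using hw
  have hbc' : NNLang E ([a, c', b] ++ w ++ [a]) := by
    have := nnlang_glue (s := [a, c']) (c := b) (t := w ++ [a]) (by simpa using hacb') hmid
    simpa using this
  set Block : List (Finset α) := {a} :: {c, c'} :: {b} :: w.map (fun d => {d}) with hB
  set q : ℕ := w.length + 3 with hq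
  set AL : ℕ → List (Finset α) := fun m => (List.replicate m Block).flatten with hAL
  have hALlen : ∀ m, (AL m).length = m * q := by
    intro m
    simp [hAL, List.length_flatten, List.map_replicate, hB, hq, mul_comm]
  have hlegal : ∀ m, NNIndepLegal E (fun i : Fin (AL m).length => (AL m).get i) := by
    intro m
    constructor
    · intro i
      have hmem : (AL m).get i ∈ AL m := by
        rw [List.get_eq_getElem]; exact List.getElem_mem _
      obtain ⟨L, hL, hmemL⟩ := List.mem_flatten.mp hmem
      rw [List.mem_replicate] at hL
      rw [hL.2, hB] at hmemL
      show ((AL m).get i).Nonempty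
      rcases List.mem_cons.mp hmemL with h | hmemL
      · exact ⟨a, h ▸ by simp⟩
      rcases List.mem_cons.mp hmemL with h | hmemL
      · exact ⟨c, h ▸ by simp⟩
      rcases List.mem_cons.mp hmemL with h | hmemL
      · exact ⟨b, h ▸ by simp⟩
      obtain ⟨d, _, heq⟩ := List.mem_map.mp hmemL
      exact ⟨d, by rw [← heq]; simp⟩
    · intro sel hsel
      have hf : List.Forall₂ (· ∈ ·) (List.ofFn sel) (AL m) := by
        rw [List.forall₂_iff_get]
        refine ⟨by simp, fun i h1 h2 => ?_⟩
        simpa using hsel ⟨i, h2⟩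
      obtain ⟨_, hlang⟩ := main_sel hbc hbc' ha m _ hf
      have hlang2 : NNLang E (List.ofFn sel) :=
        nnlang_infix (p := []) (m := List.ofFn sel) (s := [a]) (by simpa using hlang)
      rw [nnlang_iff] at hlang2
      obtain ⟨x, hx, k, hk⟩ := hlang2
      refine ⟨x, hx, k, fun i => ?_⟩
      have := hk i (by simp)
      simpa using this
  have hscore : ∀ m : ℕ, (m : ℝ) * Real.log 2 ≤ NNMaxScore E ((m * q : ℕ)) := by
    intro m
    have hmem : (∑ i : Fin (AL m).length, Real.log (((AL m).get i).card)) ∈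
        {r : ℝ | ∃ A : Fin (AL m).length → Finset α, NNIndepLegal E A ∧
          r = ∑ i, Real.log ((A i).card)} := ⟨_, hlegal m, rfl⟩
    have hle := le_csSup (score_bdd E (AL m).length) hmem
    have hsum : (∑ i : Fin (AL m).length, Real.log (((AL m).get i).card))
        = (m : ℝ) * Real.log 2 := by
      have h1 := list_sum_fin (AL m) (fun s : Finset α => Real.log s.card)
      rw [h1]
      simp only [hAL, List.map_flatten, List.map_replicate, List.sum_flatten, List.sum_replicate]
      have hBsum : (Block.map fun s : Finset α => Real.log s.card).sum = Real.log 2 := by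
        rw [hB]
        simp only [List.map_cons, List.sum_cons, List.map_map, Function.comp]
        rw [Finset.card_singleton, Finset.card_singleton, Finset.card_pair hne,
          List.sum_eq_zero (by simp)]
        simp
      rw [hBsum]
      simp [mul_comm]
    rw [← hsum, ← hALlen m]
    exact hle
  -- final limit argument
  have hq1 : 1 ≤ q := by omega
  have htend : Tendsto (fun m : ℕ => NNMaxScore E (m * q) / ((m * q : ℕ) : ℝ)) atTop (nhds 0) :=
    hzero.comp (tendsto_atTop_mono (fun m => Nat.le_mul_of_pos_right m (by omega)) tendsto_id)
  have hkey : ∀ᶠ m : ℕ in atTop, Real.log 2 / q ≤ NNMaxScore E (m * q) / ((m * q : ℕ) : ℝ) := by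
    filter_upwards [eventually_ge_atTop 1] with m hm
    have hmq : (0 : ℝ) < (m : ℝ) * q := by
      have : (0:ℝ) < (m:ℝ) := by exact_mod_cast hm
      have : (0:ℝ) < (q:ℝ) := by exact_mod_cast hq1
      positivity
    have h1 : ((m * q : ℕ) : ℝ) = (m : ℝ) * q := by push_cast; ring
    rw [h1]
    calc Real.log 2 / q = ((m : ℝ) * Real.log 2) / ((m : ℝ) * q) := by
          rw [mul_div_mul_left]
          exact ne_of_gt (by exact_mod_cast hm)
      _ ≤ NNMaxScore E ((m * q : ℕ)) / ((m : ℝ) * q) := by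
          rw [div_le_div_iff_of_pos_right hmq]
          exact hscore m
  have hfin := ge_of_tendsto htend hkey
  have hpos : 0 < Real.log 2 / q := by
    apply div_pos (Real.log_pos one_lt_two)
    exact_mod_cast hq1
  linarith
end

section
/- Let X be an irreducible nearest-neighbor ℤ-SFT over alphabet Σ such that for all a,b ∈ Σ there is at most one c with acb in the language of X. Then for every n, the number of configurations on the square [1,n]² that are legal for the two-dimensional axial power X^{⊗2} is at most |Σ|^{4n+4}; consequently the topological entropy h(X^{⊗2}) = 0. -/
open Filter

/-- The two-dimensional axial power of the SFT: all rows and columns lie in the shift. -/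
def NNAxial2 {α : Type*} (E : α → α → Prop) : Set (ℤ × ℤ → α) :=
  {x | (∀ j : ℤ, (fun n : ℤ => x (n, j)) ∈ NNShift E) ∧
       (∀ i : ℤ, (fun n : ℤ => x (i, n)) ∈ NNShift E)}

/-- The set of legal configurations of `X^{⊗2}` on the square `[1,n]²`. -/
def NNLang2 {α : Type*} (E : α → α → Prop) (n : ℕ) : Set (Fin n × Fin n → α) :=
  {w | ∃ x ∈ NNAxial2 E, ∀ p : Fin n × Fin n, x ((p.1 : ℤ) + 1, (p.2 : ℤ) + 1) = w p}

/-- Key step: in any point of the axial power, the two off-diagonal corners of a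
`2×2` block are equal, since both are middle letters of a legal word from `x (i,j)`
to `x (i+1,j+1)` (one going right-then-up, the other up-then-right). -/
lemma nn_diag_step {α : Type*} (E : α → α → Prop)
    (huniq : ∀ a b c c' : α, NNLang E [a, c, b] → NNLang E [a, c', b] → c = c')
    {x : ℤ × ℤ → α} (hx : x ∈ NNAxial2 E) (i j : ℤ) :
    x (i + 1, j) = x (i, j + 1) := by
  apply huniq (x (i, j)) (x (i + 1, j + 1))
  · refine ⟨fun m => if m ≤ 1 then x (i + m, j) else x (i + 1, j + m - 1), ?_, 0, ?_⟩
    · intro m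
      rcases lt_trichotomy m 1 with h | h | h
      · have h0 : m ≤ 1 := le_of_lt h
        have h1 : m + 1 ≤ 1 := by omega
        simp only [h0, h1, if_pos]
        have := hx.1 j (i + m)
        simpa [add_assoc] using this
      · subst h
        norm_num
        have := hx.2 (i + 1) j
        convert this using 3 <;> ring
      · have h0 : ¬ m ≤ 1 := by omega
        have h1 : ¬ m + 1 ≤ 1 := by omega
        simp only [h0, h1, if_neg, not_false_iff]
        have := hx.2 (i + 1) (j + m - 1)
        convert this using 3 <;> ring
    · intro v
      fin_cases v <;> norm_num <;> (congr 1 <;> ring)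
  · refine ⟨fun m => if m ≤ 1 then x (i, j + m) else x (i + m - 1, j + 1), ?_, 0, ?_⟩
    · intro m
      rcases lt_trichotomy m 1 with h | h | h
      · have h0 : m ≤ 1 := le_of_lt h
        have h1 : m + 1 ≤ 1 := by omega
        simp only [h0, h1, if_pos]
        have := hx.2 i (j + m)
        simpa [add_assoc] using this
      · subst h
        norm_num
        have := hx.1 (j + 1) i
        convert this using 3 <;> ring
      · have h0 : ¬ m ≤ 1 := by omega
        have h1 : ¬ m + 1 ≤ 1 := by omega
        simp only [h0, h1, if_neg, not_false_iff]
        have := hx.1 (j + 1) (i + m - 1)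
        convert this using 3 <;> ring
    · intro v
      fin_cases v <;> norm_num <;> (congr 1 <;> ring)

/-- Points of the axial power are constant on anti-diagonals. -/
lemma nn_diag_eq {α : Type*} (E : α → α → Prop)
    (huniq : ∀ a b c c' : α, NNLang E [a, c, b] → NNLang E [a, c', b] → c = c')
    {x : ℤ × ℤ → α} (hx : x ∈ NNAxial2 E) (i j i' j' : ℤ) (hsum : i + j = i' + j') :
    x (i, j) = x (i', j') := by
  have key : ∀ k : ℕ, ∀ i j : ℤ, x (i + k, j) = x (i, j + k) := by
    intro k
    induction k with
    | zero => intro i j; norm_num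
    | succ k ih =>
      intro i j
      have h1 : (i + ((k : ℤ) + 1) : ℤ) = (i + 1) + k := by ring
      push_cast
      rw [h1, ih (i + 1) j, nn_diag_step E huniq hx i (j + k)]
      congr 1
      ring
  have hmain : ∀ a b a' b' : ℤ, a + b = a' + b' → a ≤ a' → x (a, b) = x (a', b') := by
    intro a b a' b' hs hle
    obtain ⟨k, hk⟩ : ∃ k : ℕ, a' = a + k := ⟨(a' - a).toNat, by omega⟩
    have hb : b = b' + k := by omega
    rw [hk, key k a b', hb]
  rcases le_total i i' with h | h
  · exact hmain i j i' j' hsum h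
  · exact (hmain i' j' i j hsum.symm h).symm

/-- Legal square configurations are constant on anti-diagonals. -/
lemma nn_lang2_diag {α : Type*} (E : α → α → Prop)
    (huniq : ∀ a b c c' : α, NNLang E [a, c, b] → NNLang E [a, c', b] → c = c')
    {n : ℕ} {w : Fin n × Fin n → α} (hw : w ∈ NNLang2 E n)
    (p q : Fin n × Fin n) (h : (p.1 : ℕ) + (p.2 : ℕ) = (q.1 : ℕ) + (q.2 : ℕ)) :
    w p = w q := by
  obtain ⟨x, hx, hxw⟩ := hw
  rw [← hxw p, ← hxw q]
  exact nn_diag_eq E huniq hx _ _ _ _ (by push_cast; omega)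

/-- The counting bound. -/
lemma nn_card_bound {α : Type*} [Fintype α] [DecidableEq α] (E : α → α → Prop)
    (huniq : ∀ a b c c' : α, NNLang E [a, c, b] → NNLang E [a, c', b] → c = c')
    (n : ℕ) : Nat.card (NNLang2 E n) ≤ Fintype.card α ^ (4 * n + 4) := by
  rcases isEmpty_or_nonempty α with hα | hα
  · have : NNLang2 E n = ∅ := by
      ext w
      simp only [NNLang2, Set.mem_setOf_eq, Set.mem_empty_iff_false, iff_false]
      rintro ⟨x, -, -⟩
      exact (hα.false (x (0, 0)))
    simp [this]
  · have hcard1 : 1 ≤ Fintype.card α := Fintype.card_pos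
    rcases n with - | m
    · calc Nat.card (NNLang2 E 0)
          ≤ Nat.card (Fin 0 × Fin 0 → α) :=
            Nat.card_le_card_of_injective Subtype.val Subtype.val_injective
        _ = 1 := by simp [Nat.card_eq_fintype_card]
        _ ≤ Fintype.card α ^ (4 * 0 + 4) := Nat.one_le_pow _ _ hcard1
    · set n := m + 1 with hn
      have hmlt : m < n := by omega
      let ψ : NNLang2 E n → (Fin n → α) × (Fin n → α) :=
        fun w => (fun a => w.1 (a, ⟨0, by omega⟩), fun b => w.1 (⟨m, hmlt⟩, b))
      have hψ : Function.Injective ψ := by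
        intro w w' hww
        have h1 : ∀ a : Fin n, w.1 (a, ⟨0, by omega⟩) = w'.1 (a, ⟨0, by omega⟩) :=
          fun a => congrFun (congrArg Prod.fst hww) a
        have h2 : ∀ b : Fin n, w.1 (⟨m, hmlt⟩, b) = w'.1 (⟨m, hmlt⟩, b) :=
          fun b => congrFun (congrArg Prod.snd hww) b
        apply Subtype.ext
        funext p
        by_cases hs : (p.1 : ℕ) + (p.2 : ℕ) < n
        · have e1 := nn_lang2_diag E huniq w.2 p (⟨(p.1 : ℕ) + (p.2 : ℕ), hs⟩, ⟨0, by omega⟩)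
            (by simp)
          have e2 := nn_lang2_diag E huniq w'.2 p (⟨(p.1 : ℕ) + (p.2 : ℕ), hs⟩, ⟨0, by omega⟩)
            (by simp)
          rw [e1, e2, h1]
        · have hs2 : (p.1 : ℕ) + (p.2 : ℕ) - m < n := by omega
          have e1 := nn_lang2_diag E huniq w.2 p (⟨m, hmlt⟩, ⟨(p.1 : ℕ) + (p.2 : ℕ) - m, hs2⟩)
            (by simp; omega)
          have e2 := nn_lang2_diag E huniq w'.2 p (⟨m, hmlt⟩, ⟨(p.1 : ℕ) + (p.2 : ℕ) - m, hs2⟩)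
            (by simp; omega)
          rw [e1, e2, h2]
      calc Nat.card (NNLang2 E n)
          ≤ Nat.card ((Fin n → α) × (Fin n → α)) := Nat.card_le_card_of_injective ψ hψ
        _ = Fintype.card α ^ n * Fintype.card α ^ n := by
            simp [Nat.card_eq_fintype_card]
        _ = Fintype.card α ^ (2 * n) := by ring
        _ ≤ Fintype.card α ^ (4 * n + 4) := Nat.pow_le_pow_right hcard1 (by omega)

/-- The entropy limit, from the counting bound. -/
lemma nn_tendsto_aux {α : Type*} [Fintype α] (c : ℕ → ℕ)
    (hb : ∀ n : ℕ, c n ≤ Fintype.card α ^ (4 * n + 4)) :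
    Tendsto (fun n : ℕ => Real.log (c n) / (n ^ 2 : ℝ)) atTop (nhds 0) := by
  have hlognn : ∀ m : ℕ, 0 ≤ Real.log m := by
    intro m
    rcases Nat.eq_zero_or_pos m with h | h
    · simp [h]
    · exact Real.log_nonneg (by exact_mod_cast h)
  apply squeeze_zero (g := fun n : ℕ => (8 * Real.log (Fintype.card α)) / n)
  · intro n
    exact div_nonneg (hlognn _) (by positivity)
  · intro n
    rcases Nat.eq_zero_or_pos n with h | hnpos
    · simp [h]
    rcases Nat.eq_zero_or_pos (Fintype.card α) with h | hcpos
    · have : c n = 0 := by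
        have := hb n
        simpa [h] using this
      simp [this, h]
    have hL : 0 ≤ Real.log (Fintype.card α) := hlognn _
    have hlog : Real.log (c n) ≤ (4 * n + 4) * Real.log (Fintype.card α) := by
      rcases Nat.eq_zero_or_pos (c n) with h0 | h0
      · simp only [h0, Nat.cast_zero, Real.log_zero]
        positivity
      · calc Real.log (c n) ≤ Real.log ((Fintype.card α : ℝ) ^ (4 * n + 4)) := by
              apply Real.log_le_log (by exact_mod_cast h0)
              exact_mod_cast hb n
          _ = (4 * n + 4) * Real.log (Fintype.card α) := by rw [Real.log_pow]; push_cast; ring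
    have h8 : ((4 * n + 4 : ℕ) : ℝ) * Real.log (Fintype.card α)
        ≤ (8 * n : ℝ) * Real.log (Fintype.card α) := by
      apply mul_le_mul_of_nonneg_right _ hL
      push_cast
      have : (1 : ℝ) ≤ n := by exact_mod_cast hnpos
      linarith
    have hn0 : (0 : ℝ) < (n : ℝ) ^ 2 := by positivity
    calc Real.log (c n) / (n ^ 2 : ℝ)
        ≤ ((8 * n : ℝ) * Real.log (Fintype.card α)) / (n ^ 2 : ℝ) := by
          apply div_le_div_of_nonneg_right ?_ hn0.le
          · calc Real.log (c n) ≤ _ := hlog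
              _ ≤ _ := by exact_mod_cast h8
      _ = (8 * Real.log (Fintype.card α)) / n := by
          field_simp
  · exact tendsto_const_div_atTop_nhds_zero_nat _

/-- If `X` is an irreducible nearest-neighbor ℤ-SFT in which for all `a, b` there is at
most one `c` with `acb` in the language, then the number of legal configurations of
`X^{⊗2}` on `[1,n]²` is at most `|Σ|^{4n+4}`, and hence `h(X^{⊗2}) = 0`. -/
theorem stmt6 {α : Type*} [Fintype α] [DecidableEq α] (E : α → α → Prop)
    (hirr : NNIrreducible E)
    (huniq : ∀ a b c c' : α, NNLang E [a, c, b] → NNLang E [a, c', b] → c = c') :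
    (∀ n : ℕ, Nat.card (NNLang2 E n) ≤ Fintype.card α ^ (4 * n + 4)) ∧
    Tendsto (fun n : ℕ => Real.log (Nat.card (NNLang2 E n)) / (n ^ 2 : ℝ)) atTop
      (nhds 0) := by
  refine ⟨nn_card_bound E huniq, ?_⟩
  exact nn_tendsto_aux (fun n => Nat.card (NNLang2 E n)) (nn_card_bound E huniq)
end

section
/- Let X be a ℤ subshift and d ∈ ℕ. For every finite S ⊂ ℤ^d, the language of the d-dimensional axial power X^{⊗d} on S equals the language of the infinite-dimensional axial power X^{⊗∞} on S (identifying ℤ^d with its natural embedding into ℤ^∞ = ⊕_ℕ ℤ). In particular, for any configuration w ∈ Σ^S legal in X^{⊗d}, the point x' ∈ Σ^{ℤ^∞} defined by x'_g := x_{(g_1,...,g_{d-1}, Σ_{i≥d} g_i)}, where x ∈ X^{⊗d} extends w, lies in X^{⊗∞}. -/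
/-- The `d`-dimensional axial power of a ℤ subshift `X`: every row in each of the `d`
cardinal directions lies in `X`. -/
def axialPow {α : Type*} (X : Set (ℤ → α)) (d : ℕ) : Set ((Fin d → ℤ) → α) :=
  {x | ∀ g : Fin d → ℤ, ∀ i : Fin d,
    (fun n : ℤ => x (Function.update g i (g i + n))) ∈ X}

/-- The infinite-dimensional axial power of `X`, over `ℤ^∞ = ⊕_ℕ ℤ`. -/
def axialInf {α : Type*} (X : Set (ℤ → α)) : Set ((ℕ →₀ ℤ) → α) :=
  {x | ∀ g : ℕ →₀ ℤ, ∀ i : ℕ, (fun n : ℤ => x (g + Finsupp.single i n)) ∈ X}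

/-- The natural embedding of `ℤ^d` into `ℤ^∞`. -/
noncomputable def embZd (d : ℕ) (g : Fin d → ℤ) : ℕ →₀ ℤ :=
  ∑ j : Fin d, Finsupp.single (j : ℕ) (g j)

/-- The projection `ℤ^∞ → ℤ^d` collapsing all coordinates `≥ d` (1-indexed: `≥ d`,
i.e. 0-indexed `≥ d-1`) onto the last coordinate by summation. -/
noncomputable def collapseProj (d : ℕ) (g : ℕ →₀ ℤ) : Fin d → ℤ :=
  fun j => if (j : ℕ) + 1 < d then g (j : ℕ)
    else ∑ i ∈ g.support.filter (fun i => d - 1 ≤ i), g i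


/-- The "tail sum" as an additive hom. -/
noncomputable def tailHom (d : ℕ) : (ℕ →₀ ℤ) →+ ℤ where
  toFun g := g.sum fun i v => if d - 1 ≤ i then v else 0
  map_zero' := by simp
  map_add' g h := by
    exact Finsupp.sum_add_index' (fun i => ite_self 0) (fun i b c => by split <;> simp)

lemma tailHom_single (d i : ℕ) (n : ℤ) :
    tailHom d (Finsupp.single i n) = if d - 1 ≤ i then n else 0 := by
  show (Finsupp.single i n).sum (fun i v => if d - 1 ≤ i then v else 0) = _
  exact Finsupp.sum_single_index (ite_self 0)

lemma tailSum_eq (d : ℕ) (g : ℕ →₀ ℤ) :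
    (∑ i ∈ g.support.filter (fun i => d - 1 ≤ i), g i) = tailHom d g := by
  show _ = g.sum fun i v => if d - 1 ≤ i then v else 0
  rw [Finsupp.sum, Finset.sum_filter]

lemma collapseProj_apply (d : ℕ) (g : ℕ →₀ ℤ) (j : Fin d) :
    collapseProj d g j = if (j : ℕ) + 1 < d then g (j : ℕ) else tailHom d g := by
  rw [collapseProj, tailSum_eq]

lemma embZd_apply (d : ℕ) (g : Fin d → ℤ) (k : ℕ) (hk : k < d) :
    embZd d g k = g ⟨k, hk⟩ := by
  rw [embZd, Finsupp.finset_sum_apply]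
  rw [Finset.sum_eq_single (⟨k, hk⟩ : Fin d)]
  · simp
  · intro b _ hb
    rw [Finsupp.single_apply, if_neg]
    intro h
    exact hb (Fin.ext h)
  · simp

lemma tailHom_embZd (d : ℕ) (hd : 1 ≤ d) (g : Fin d → ℤ) :
    tailHom d (embZd d g) = g ⟨d - 1, by omega⟩ := by
  rw [embZd, map_sum]
  rw [Finset.sum_eq_single (⟨d - 1, by omega⟩ : Fin d)]
  · rw [tailHom_single, if_pos le_rfl]
  · intro b _ hb
    rw [tailHom_single, if_neg]
    intro h
    have hb2 := b.isLt
    exact hb (Fin.ext (by show (b : ℕ) = d - 1; omega))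
  · simp

lemma collapseProj_embZd (d : ℕ) (hd : 1 ≤ d) (g : Fin d → ℤ) :
    collapseProj d (embZd d g) = g := by
  funext j
  rw [collapseProj_apply]
  split
  · exact embZd_apply d g j j.isLt
  · rw [tailHom_embZd d hd g]
    congr 1
    have := j.isLt
    exact Fin.ext (by show d - 1 = (j : ℕ); omega)

lemma embZd_update (d : ℕ) (g : Fin d → ℤ) (i : Fin d) (n : ℤ) :
    embZd d (Function.update g i (g i + n)) = embZd d g + Finsupp.single (i : ℕ) n := by
  have h : ∀ j : Fin d, Finsupp.single (j : ℕ) (Function.update g i (g i + n) j) =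
      Finsupp.single (j : ℕ) (g j) + if j = i then Finsupp.single (i : ℕ) n else 0 := by
    intro j
    rcases eq_or_ne j i with rfl | hj
    · simp [Finsupp.single_add]
    · simp [Function.update_of_ne hj, hj]
  rw [embZd, embZd]
  simp_rw [h, Finset.sum_add_distrib, Finset.sum_ite_eq' Finset.univ i, Finset.mem_univ,
    if_pos]

lemma collapseProj_add_single (d : ℕ) (hd : 1 ≤ d) (g : ℕ →₀ ℤ) (i : ℕ) (n : ℤ) :
    collapseProj d (g + Finsupp.single i n) =
      Function.update (collapseProj d g) ⟨min i (d - 1), by omega⟩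
        (collapseProj d g ⟨min i (d - 1), by omega⟩ + n) := by
  funext j
  have hjd := j.isLt
  rw [Function.update_apply]
  simp only [collapseProj_apply, Fin.ext_iff, Fin.val_mk, map_add, tailHom_single,
    Finsupp.add_apply, Finsupp.single_apply]
  by_cases hi : i + 1 < d
  · have hmin : min i (d - 1) = i := by omega
    rw [hmin]
    by_cases hj : (j : ℕ) + 1 < d
    · rw [if_pos hj]
      by_cases he : (j : ℕ) = i
      · rw [if_pos (by omega : i = (j : ℕ)), if_pos he, if_pos hi, he]
      · rw [if_neg (by omega : ¬ i = (j : ℕ)), add_zero, if_neg he, if_pos hj]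
    · rw [if_neg hj, if_neg (by omega : ¬ (j : ℕ) = i), if_neg hj,
        if_neg (by omega : ¬ d - 1 ≤ i), add_zero]
  · have hmin : min i (d - 1) = d - 1 := by omega
    rw [hmin]
    by_cases hj : (j : ℕ) + 1 < d
    · rw [if_pos hj, if_neg (by omega : ¬ i = (j : ℕ)),
        if_neg (by omega : ¬ (j : ℕ) = d - 1), if_pos hj, add_zero]
    · rw [if_neg hj, if_pos (by omega : (j : ℕ) = d - 1),
        if_pos (by omega : d - 1 ≤ i), if_neg (by omega : ¬ d - 1 + 1 < d)]
/-- For a ℤ subshift `X` and finite `S ⊂ ℤ^d`, the language of `X^{⊗d}` on `S` equals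
the language of `X^{⊗∞}` on (the embedded copy of) `S`; moreover, for `x ∈ X^{⊗d}`, the
point `x' ∈ Σ^{ℤ^∞}` given by `x'_g = x_{(g_1,…,g_{d-1}, Σ_{i≥d} g_i)}` lies in
`X^{⊗∞}`. -/
theorem stmt8 {α : Type*} (X : Set (ℤ → α))
    (hshift : ∀ x ∈ X, ∀ k : ℤ, (fun n => x (n + k)) ∈ X)
    (d : ℕ) (hd : 1 ≤ d) (S : Finset (Fin d → ℤ)) :
    ({w : S → α | ∃ x ∈ axialPow X d, ∀ s : S, x (s : Fin d → ℤ) = w s} =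
      {w : S → α | ∃ x ∈ axialInf X, ∀ s : S, x (embZd d (s : Fin d → ℤ)) = w s}) ∧
    (∀ x ∈ axialPow X d, (fun g : ℕ →₀ ℤ => x (collapseProj d g)) ∈ axialInf X) := by
  have part2 : ∀ x ∈ axialPow X d,
      (fun g : ℕ →₀ ℤ => x (collapseProj d g)) ∈ axialInf X := by
    intro x hx g i
    have key := collapseProj_add_single d hd g i
    simp only [key]
    exact hx (collapseProj d g) ⟨min i (d - 1), by omega⟩
  refine ⟨?_, part2⟩
  ext w
  simp only [Set.mem_setOf_eq]
  constructor
  · rintro ⟨x, hx, hw⟩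
    refine ⟨fun g => x (collapseProj d g), part2 x hx, fun s => ?_⟩
    show x (collapseProj d (embZd d (s : Fin d → ℤ))) = w s
    rw [collapseProj_embZd d hd]
    exact hw s
  · rintro ⟨x, hx, hw⟩
    refine ⟨fun g => x (embZd d g), fun g i => ?_, hw⟩
    have key := embZd_update d g i
    simp only [key]
    exact hx (embZd d g) i
end

section
/- Let X be a ℤ subshift. The sequence d ↦ h(X^{⊗d}) of topological entropies of the axial powers is nonincreasing in d. -/
open Filter

/-- The set of legal configurations of `X^{⊗d}` on the cube `[-n,n]^d`, with the cube
coordinatized by `Fin (2n+1)` via `v ↦ v - n`. -/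
def axialLang {α : Type*} (X : Set (ℤ → α)) (d n : ℕ) :
    Set ((Fin d → Fin (2 * n + 1)) → α) :=
  {w | ∃ x ∈ axialPow X d, ∀ v : Fin d → Fin (2 * n + 1),
    x (fun j => ((v j : ℤ) - n)) = w v}

section Aux

variable {β : Type*} {d₁ d₂ : ℕ}

/-- Glue a `d₁`-tuple and a `(d₂-d₁)`-tuple into a `d₂`-tuple. -/
def glue (hd : d₁ ≤ d₂) (g : Fin d₁ → β) (c : Fin (d₂ - d₁) → β) : Fin d₂ → β :=
  fun j => if h : (j : ℕ) < d₁ then g ⟨j, h⟩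
    else c ⟨(j : ℕ) - d₁, by have := j.2; omega⟩

lemma glue_castLE (hd : d₁ ≤ d₂) (g : Fin d₁ → β) (c : Fin (d₂ - d₁) → β) (i : Fin d₁) :
    glue hd g c (Fin.castLE hd i) = g i := by
  unfold glue
  rw [dif_pos (show ((Fin.castLE hd i : Fin d₂) : ℕ) < d₁ from i.2)]
  exact congrArg g (Fin.ext rfl)

lemma glue_update (hd : d₁ ≤ d₂) (g : Fin d₁ → β) (c : Fin (d₂ - d₁) → β)
    (i : Fin d₁) (t : β) :
    glue hd (Function.update g i t) c
      = Function.update (glue hd g c) (Fin.castLE hd i) t := by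
  funext j
  by_cases hj : (j : ℕ) = (i : ℕ)
  · have h2 : j = Fin.castLE hd i := Fin.ext hj
    subst h2
    rw [glue_castLE, Function.update_self, Function.update_self]
  · have h2 : j ≠ Fin.castLE hd i := fun h => hj (congrArg Fin.val h)
    rw [Function.update_of_ne h2]
    unfold glue
    split
    · next h =>
        rw [Function.update_of_ne
          (show (⟨(j : ℕ), h⟩ : Fin d₁) ≠ i from fun he => hj (congrArg Fin.val he))]
    · rfl

lemma glue_comp (hd : d₁ ≤ d₂) (u : Fin d₂ → β) :
    glue hd (fun i => u (Fin.castLE hd i))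
      (fun j => u ⟨d₁ + (j : ℕ), by have := j.2; omega⟩) = u := by
  funext j
  unfold glue
  split
  · rfl
  · next h =>
    have hval : d₁ + ((j : ℕ) - d₁) = (j : ℕ) := by omega
    exact congrArg u (Fin.ext hval)

lemma slice_mem {α : Type*} (X : Set (ℤ → α)) (hd : d₁ ≤ d₂) {n : ℕ}
    {w : (Fin d₂ → Fin (2 * n + 1)) → α} (hw : w ∈ axialLang X d₂ n)
    (c : Fin (d₂ - d₁) → Fin (2 * n + 1)) :
    (fun v => w (glue hd v c)) ∈ axialLang X d₁ n := by
  obtain ⟨x, hx, hxw⟩ := hw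
  refine ⟨fun g => x (glue hd g (fun j => ((c j : ℤ) - n))), ?_, ?_⟩
  · intro g i
    have hmem := hx (glue hd g (fun j => ((c j : ℤ) - n))) (Fin.castLE hd i)
    simpa [glue_update, glue_castLE] using hmem
  · intro v
    show x (glue hd (fun j => ((v j : ℤ) - n)) (fun j => ((c j : ℤ) - n)))
      = w (glue hd v c)
    rw [← hxw (glue hd v c)]
    congr 1
    funext j
    by_cases hjd : (j : ℕ) < d₁ <;> simp [glue, hjd]

lemma card_le {α : Type*} [Fintype α] (X : Set (ℤ → α)) {n : ℕ} (hd : d₁ ≤ d₂) :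
    Nat.card (axialLang X d₂ n)
      ≤ Nat.card (axialLang X d₁ n) ^ ((2 * n + 1) ^ (d₂ - d₁)) := by
  classical
  set Φ : axialLang X d₂ n →
      ((Fin (d₂ - d₁) → Fin (2 * n + 1)) → axialLang X d₁ n) :=
    fun w c => ⟨fun v => w.1 (glue hd v c), slice_mem X hd w.2 c⟩ with hΦ
  have hinj : Function.Injective Φ := by
    intro w w' hww
    apply Subtype.ext
    funext u
    have h1 := congrArg Subtype.val (congrFun hww
      (fun j => u ⟨d₁ + (j : ℕ), by have := j.2; omega⟩))
    have h2 := congrFun h1 (fun i => u (Fin.castLE hd i))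
    simpa [hΦ, glue_comp] using h2
  have hcard := Nat.card_le_card_of_injective Φ hinj
  rwa [Nat.card_fun, Nat.card_eq_fintype_card (α := Fin (d₂ - d₁) → Fin (2 * n + 1)),
    Fintype.card_fun, Fintype.card_fin, Fintype.card_fin] at hcard

end Aux

/-- The sequence `d ↦ h(X^{⊗d})` of topological entropies of the axial powers is
nonincreasing in `d` (for `d ≥ 1`). -/
theorem stmt9 {α : Type*} [Fintype α] [TopologicalSpace α] [DiscreteTopology α] (X : Set (ℤ → α))
    (hshift : ∀ x ∈ X, ∀ k : ℤ, (fun n => x (n + k)) ∈ X)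
    (hclosed : IsClosed X) (h : ℕ → ℝ)
    (hlim : ∀ d : ℕ, 1 ≤ d →
      Tendsto (fun n : ℕ => Real.log (Nat.card (axialLang X d n)) / ((2 * n + 1 : ℝ) ^ d))
        atTop (nhds (h d))) :
    ∀ d₁ d₂ : ℕ, 1 ≤ d₁ → d₁ ≤ d₂ → h d₂ ≤ h d₁ := by
  intro d₁ d₂ hd₁ hd
  have hd₂ : 1 ≤ d₂ := hd₁.trans hd
  refine le_of_tendsto_of_tendsto' (hlim d₂ hd₂) (hlim d₁ hd₁) fun n => ?_
  set N₁ := Nat.card (axialLang X d₁ n) with hN₁def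
  set N₂ := Nat.card (axialLang X d₂ n) with hN₂def
  have hP₁ : (0 : ℝ) < (2 * n + 1 : ℝ) ^ d₁ := by positivity
  have hP₂ : (0 : ℝ) < (2 * n + 1 : ℝ) ^ d₂ := by positivity
  have hlog₁ : 0 ≤ Real.log N₁ := Real.log_natCast_nonneg _
  have key : N₂ ≤ N₁ ^ ((2 * n + 1) ^ (d₂ - d₁)) := card_le X hd
  rcases Nat.eq_zero_or_pos N₂ with h0 | hpos
  · rw [h0]
    simp only [Nat.cast_zero, Real.log_zero, zero_div]
    exact div_nonneg hlog₁ hP₁.le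
  · have hN₁pos : 0 < N₁ := by
      rcases Nat.eq_zero_or_pos N₁ with h1 | h1
      · exfalso
        rw [h1, Nat.zero_pow (by positivity)] at key
        omega
      · exact h1
    have hlog : Real.log N₂ ≤ ((2 * n + 1 : ℝ) ^ (d₂ - d₁)) * Real.log N₁ := by
      have h1 : Real.log N₂ ≤ Real.log ((N₁ ^ ((2 * n + 1) ^ (d₂ - d₁)) : ℕ) : ℝ) := by
        apply Real.log_le_log (by exact_mod_cast hpos)
        exact_mod_cast key
      calc Real.log N₂ ≤ Real.log ((N₁ ^ ((2 * n + 1) ^ (d₂ - d₁)) : ℕ) : ℝ) := h1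
        _ = ((2 * n + 1) ^ (d₂ - d₁) : ℕ) * Real.log N₁ := by
          rw [Nat.cast_pow, Real.log_pow]
        _ = ((2 * n + 1 : ℝ) ^ (d₂ - d₁)) * Real.log N₁ := by push_cast; ring
    rw [div_le_div_iff₀ hP₂ hP₁]
    have hpow : (2 * n + 1 : ℝ) ^ d₂ = (2 * n + 1 : ℝ) ^ d₁ * (2 * n + 1 : ℝ) ^ (d₂ - d₁) := by
      rw [← pow_add]
      congr 1
      omega
    calc Real.log N₂ * (2 * n + 1 : ℝ) ^ d₁
        ≤ (((2 * n + 1 : ℝ) ^ (d₂ - d₁)) * Real.log N₁) * (2 * n + 1 : ℝ) ^ d₁ :=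
          mul_le_mul_of_nonneg_right hlog hP₁.le
      _ = Real.log N₁ * (2 * n + 1 : ℝ) ^ d₂ := by rw [hpow]; ring
end

section
/- Let X be a ℤ subshift. Then the limiting entropy h_∞(X) := lim_{d→∞} h(X^{⊗d}) equals the topological entropy of the infinite-dimensional axial power X^{⊗∞}, where the latter is computed along the Følner sequence F_n = [-n,n]^n × {0}^∞ in ℤ^∞. -/
open Filter

/-- The set of legal configurations of `X^{⊗∞}` on the Følner set
`F_n = [-n,n]^n × {0}^∞ ⊂ ℤ^∞`. -/
def axialLangInf {α : Type*} (X : Set (ℤ → α)) (n : ℕ) :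
    Set ((Fin n → Fin (2 * n + 1)) → α) :=
  {w | ∃ x ∈ axialInf X, ∀ v : Fin n → Fin (2 * n + 1),
    x (∑ j : Fin n, Finsupp.single (j : ℕ) ((v j : ℤ) - n)) = w v}

section Aux
variable {α : Type*} {X : Set (ℤ → α)}

/-- evaluation of a sum of singles -/
lemma aux_sum_single_apply {n : ℕ} (c : Fin n → ℤ) (k : ℕ) :
    (∑ j : Fin n, Finsupp.single (j : ℕ) (c j)) k
      = if hk : k < n then c ⟨k, hk⟩ else 0 := by
  rw [Finsupp.finset_sum_apply]
  split_ifs with hk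
  · rw [Finset.sum_eq_single (⟨k, hk⟩ : Fin n)]
    · simp
    · intro b _ hb
      rw [Finsupp.single_apply, if_neg]
      exact fun hbk => hb (Fin.ext hbk)
    · simp
  · apply Finset.sum_eq_zero
    intro b _
    rw [Finsupp.single_apply, if_neg]
    exact fun hbk => hk (hbk ▸ b.isLt)

/-- restriction of a point of the infinite axial power -/
lemma aux_restrict {n : ℕ} {x : (ℕ →₀ ℤ) → α} (hx : x ∈ axialInf X) :
    (fun u : Fin n → ℤ => x (∑ j : Fin n, Finsupp.single (j : ℕ) (u j))) ∈ axialPow X n := by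
  intro g i
  have key : ∀ m : ℤ, (∑ j : Fin n, Finsupp.single (j : ℕ) (Function.update g i (g i + m) j))
      = (∑ j : Fin n, Finsupp.single (j : ℕ) (g j)) + Finsupp.single (i : ℕ) m := by
    intro m
    have : ∀ j : Fin n, Finsupp.single (j : ℕ) (Function.update g i (g i + m) j)
        = Finsupp.single (j : ℕ) (g j) + (if j = i then Finsupp.single (i : ℕ) m else 0) := by
      intro j
      rcases eq_or_ne j i with rfl | hj
      · simp [Finsupp.single_add]
      · simp [Function.update_of_ne hj, hj]
    rw [Finset.sum_congr rfl (fun j _ => this j), Finset.sum_add_distrib,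
      Finset.sum_ite_eq' Finset.univ i (fun _ => Finsupp.single (i : ℕ) m)]
    simp
  have := hx (∑ j : Fin n, Finsupp.single (j : ℕ) (g j)) (i : ℕ)
  convert this using 2 with m
  simp only []
  rw [key m]

/-- tail sum of a finsupp -/
noncomputable def tailSum (n : ℕ) (g : ℕ →₀ ℤ) : ℤ :=
  g.sum (fun i v => if n ≤ i then v else 0)

lemma tailSum_add (n : ℕ) (g : ℕ →₀ ℤ) (i : ℕ) (m : ℤ) :
    tailSum n (g + Finsupp.single i m) = tailSum n g + (if n ≤ i then m else 0) := by
  unfold tailSum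
  rw [Finsupp.sum_add_index' (fun a => by simp) (fun a b₁ b₂ => by split_ifs <;> simp),
    Finsupp.sum_single_index (by simp)]

lemma tailSum_sum_single {n : ℕ} (c : Fin n → ℤ) :
    tailSum n (∑ j : Fin n, Finsupp.single (j : ℕ) (c j)) = 0 := by
  unfold tailSum
  rw [Finsupp.sum]
  apply Finset.sum_eq_zero
  intro i hi
  rw [if_neg]
  intro hni
  have := aux_sum_single_apply c i
  rw [dif_neg (by omega)] at this
  exact (Finsupp.mem_support_iff.mp hi) this

/-- extension of a point of the finite axial power to the infinite one -/
lemma aux_extend {n : ℕ} (hn : 0 < n) {x : (Fin n → ℤ) → α} (hx : x ∈ axialPow X n) :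
    (fun g : ℕ →₀ ℤ => x (fun j : Fin n =>
      g (j : ℕ) + if (j : ℕ) = 0 then tailSum n g else 0)) ∈ axialInf X := by
  intro g i
  set u : Fin n → ℤ := fun j => g (j : ℕ) + if (j : ℕ) = 0 then tailSum n g else 0 with hu
  by_cases hi : i < n
  · -- axis inside the first n coordinates
    have := hx u ⟨i, hi⟩
    convert this using 2 with m
    simp only []
    congr 1
    funext j
    have hts : tailSum n (g + Finsupp.single i m) = tailSum n g := by
      rw [tailSum_add, if_neg (by omega), add_zero]
    rcases eq_or_ne j (⟨i, hi⟩ : Fin n) with rfl | hj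
    · simp only [Function.update_self, hts, Finsupp.add_apply, Finsupp.single_apply, hu]
      split_ifs <;> ring
    · have hji : (j : ℕ) ≠ i := fun hc => hj (Fin.ext hc)
      simp only [Function.update_of_ne hj, hts, Finsupp.add_apply, Finsupp.single_apply, hu]
      rw [if_neg (Ne.symm hji), add_zero]
  · -- axis outside: shift along coordinate 0
    have := hx u ⟨0, hn⟩
    convert this using 2 with m
    simp only []
    congr 1
    funext j
    have hts : tailSum n (g + Finsupp.single i m) = tailSum n g + m := by
      rw [tailSum_add, if_pos (by omega)]
    have hji : (j : ℕ) ≠ i := by omega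
    rcases eq_or_ne j (⟨0, hn⟩ : Fin n) with rfl | hj
    · simp only [Function.update_self, hts, Finsupp.add_apply, Finsupp.single_apply, hu]
      rw [if_neg (Ne.symm hji)]
      simp only [if_true, Fin.val_zero, if_pos rfl]
      ring
    · have hj0 : (j : ℕ) ≠ 0 := fun hc => hj (Fin.ext hc)
      simp only [Function.update_of_ne hj, hts, Finsupp.add_apply, Finsupp.single_apply, hu]
      rw [if_neg (Ne.symm hji), add_zero, if_neg hj0, if_neg hj0]

lemma aux_extend_apply {n : ℕ} (x : (Fin n → ℤ) → α) (c : Fin n → ℤ) :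
    x (fun j : Fin n => (∑ j' : Fin n, Finsupp.single (j' : ℕ) (c j')) (j : ℕ)
        + if (j : ℕ) = 0 then tailSum n (∑ j' : Fin n, Finsupp.single (j' : ℕ) (c j')) else 0)
      = x c := by
  congr 1
  funext j
  rw [tailSum_sum_single, aux_sum_single_apply, dif_pos j.isLt]
  simp

/-- the key identification of languages -/
lemma aux_lang_eq {n : ℕ} (hn : 0 < n) : axialLangInf X n = axialLang X n n := by
  ext w
  constructor
  · rintro ⟨x, hx, hw⟩
    exact ⟨_, aux_restrict hx, hw⟩
  · rintro ⟨x, hx, hw⟩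
    refine ⟨_, aux_extend hn hx, fun v => ?_⟩
    rw [aux_extend_apply x (fun j => (v j : ℤ) - n)]
    exact hw v

lemma aux_slice_mem {d n : ℕ} {w : (Fin (d + 1) → Fin (2 * n + 1)) → α}
    (hw : w ∈ axialLang X (d + 1) n) (c : Fin (2 * n + 1)) :
    (fun v : Fin d → Fin (2 * n + 1) => w (Fin.snoc v c)) ∈ axialLang X d n := by
  obtain ⟨x, hx, hwx⟩ := hw
  refine ⟨fun u => x (Fin.snoc u ((c : ℤ) - n)), ?_, ?_⟩
  · intro g i
    have := hx (Fin.snoc g ((c : ℤ) - n)) i.castSucc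
    convert this using 2 with m
    simp only []
    rw [Fin.snoc_update, Fin.snoc_castSucc]
  · intro v
    show x (Fin.snoc (fun j => ((v j : ℤ) - n)) ((c : ℤ) - n)) = w (Fin.snoc v c)
    rw [← hwx (Fin.snoc v c)]
    congr 1
    funext j
    refine Fin.lastCases ?_ ?_ j
    · simp
    · intro j'
      simp

lemma aux_card_slice [Finite α] (d n : ℕ) :
    Nat.card (axialLang X (d + 1) n) ≤ Nat.card (axialLang X d n) ^ (2 * n + 1) := by
  set f : ↥(axialLang X (d + 1) n) → (Fin (2 * n + 1) → ↥(axialLang X d n)) :=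
    fun w c => ⟨fun v => w.1 (Fin.snoc v c), aux_slice_mem w.2 c⟩ with hf
  have hinj : Function.Injective f := by
    intro w w' hww
    apply Subtype.ext
    funext v
    have h2 := congrFun (congrArg Subtype.val (congrFun hww (v (Fin.last d)))) (Fin.init v)
    simpa [hf, Fin.snoc_init_self] using h2
  calc Nat.card (axialLang X (d + 1) n)
      ≤ Nat.card (Fin (2 * n + 1) → ↥(axialLang X d n)) :=
        Nat.card_le_card_of_injective f hinj
    _ = Nat.card (axialLang X d n) ^ (2 * n + 1) := by
        rw [Nat.card_fun]
        congr 1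
        rw [Nat.card_eq_fintype_card, Fintype.card_fin]

lemma aux_tile_bound {n t : ℕ} (a : Fin (2 * t + 1)) (b : Fin (2 * n + 1)) :
    (a : ℕ) * (2 * n + 1) + (b : ℕ) < 2 * (n + t * (2 * n + 1)) + 1 := by
  calc (a : ℕ) * (2 * n + 1) + (b : ℕ)
      < (a : ℕ) * (2 * n + 1) + (2 * n + 1) := Nat.add_lt_add_left b.isLt _
    _ ≤ 2 * t * (2 * n + 1) + (2 * n + 1) :=
        Nat.add_le_add_right (Nat.mul_le_mul_right _ (by omega)) _
    _ = 2 * (n + t * (2 * n + 1)) + 1 := by ring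

lemma aux_tile_mem {d n t : ℕ} {w : (Fin d → Fin (2 * (n + t * (2 * n + 1)) + 1)) → α}
    (hw : w ∈ axialLang X d (n + t * (2 * n + 1))) (c : Fin d → Fin (2 * t + 1)) :
    (fun v : Fin d → Fin (2 * n + 1) =>
        w (fun j => ⟨(c j : ℕ) * (2 * n + 1) + (v j : ℕ), aux_tile_bound (c j) (v j)⟩))
      ∈ axialLang X d n := by
  obtain ⟨x, hx, hwx⟩ := hw
  refine ⟨fun u => x (fun j => u j + ((c j : ℤ) - t) * (2 * n + 1)), ?_, ?_⟩
  · intro g i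
    have := hx (fun j => g j + ((c j : ℤ) - t) * (2 * n + 1)) i
    convert this using 2 with mm
    simp only []
    congr 1
    funext j
    rcases eq_or_ne j i with rfl | hj
    · simp only [Function.update_self]; ring
    · simp only [Function.update_of_ne hj]
  · intro v
    have hkey := hwx (fun j => ⟨(c j : ℕ) * (2 * n + 1) + (v j : ℕ), aux_tile_bound (c j) (v j)⟩)
    refine Eq.trans ?_ hkey
    show x (fun j => ((v j : ℤ) - n) + ((c j : ℤ) - t) * (2 * n + 1)) = _
    congr 1
    funext j
    push_cast
    ring

lemma aux_card_tile [Finite α] (d n t : ℕ) :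
    Nat.card (axialLang X d (n + t * (2 * n + 1)))
      ≤ Nat.card (axialLang X d n) ^ ((2 * t + 1) ^ d) := by
  set m := n + t * (2 * n + 1) with hm
  set f : ↥(axialLang X d m) → ((Fin d → Fin (2 * t + 1)) → ↥(axialLang X d n)) :=
    fun w c => ⟨fun v => w.1 (fun j => ⟨(c j : ℕ) * (2 * n + 1) + (v j : ℕ),
      aux_tile_bound (c j) (v j)⟩), aux_tile_mem w.2 c⟩ with hf
  have hinj : Function.Injective f := by
    intro w w' hww
    apply Subtype.ext
    funext u
    have hpos : 0 < 2 * n + 1 := by omega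
    set c : Fin d → Fin (2 * t + 1) := fun j => ⟨(u j : ℕ) / (2 * n + 1), by
      rw [Nat.div_lt_iff_lt_mul hpos]
      have h1 := (u j).isLt
      have h2 : 2 * m + 1 = (2 * t + 1) * (2 * n + 1) := by rw [hm]; ring
      omega⟩ with hc
    set v : Fin d → Fin (2 * n + 1) := fun j => ⟨(u j : ℕ) % (2 * n + 1),
      Nat.mod_lt _ hpos⟩ with hv
    have key : u = fun j => (⟨(c j : ℕ) * (2 * n + 1) + (v j : ℕ),
        aux_tile_bound (c j) (v j)⟩ : Fin (2 * m + 1)) := by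
      funext j
      apply Fin.ext
      show (u j : ℕ) = (u j : ℕ) / (2 * n + 1) * (2 * n + 1) + (u j : ℕ) % (2 * n + 1)
      rw [Nat.div_add_mod']
    rw [key]
    exact congrFun (congrArg Subtype.val (congrFun hww c)) v
  calc Nat.card (axialLang X d m)
      ≤ Nat.card ((Fin d → Fin (2 * t + 1)) → ↥(axialLang X d n)) :=
        Nat.card_le_card_of_injective f hinj
    _ = Nat.card (axialLang X d n) ^ ((2 * t + 1) ^ d) := by
        rw [Nat.card_fun]
        congr 1
        rw [Nat.card_fun]
        simp [Nat.card_eq_fintype_card]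

lemma aux_pow_nonempty (hX : X.Nonempty)
    (hshift : ∀ x ∈ X, ∀ k : ℤ, (fun n => x (n + k)) ∈ X) (d : ℕ) :
    (axialPow X d).Nonempty := by
  obtain ⟨x0, hx0⟩ := hX
  refine ⟨fun u => x0 (∑ j, u j), fun g i => ?_⟩
  have key : ∀ m : ℤ, (∑ j, Function.update g i (g i + m) j) = (∑ j, g j) + m := by
    intro m
    rw [Finset.sum_update_of_mem (Finset.mem_univ i), Finset.sdiff_singleton_eq_erase]
    have h2 := Finset.add_sum_erase Finset.univ g (Finset.mem_univ i)
    rw [← h2]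
    ring
  have := hshift x0 hx0 (∑ j, g j)
  convert this using 2 with m
  simp only []
  rw [key m, add_comm]

lemma aux_lang_nonempty (hX : X.Nonempty)
    (hshift : ∀ x ∈ X, ∀ k : ℤ, (fun n => x (n + k)) ∈ X) (d n : ℕ) :
    (axialLang X d n).Nonempty := by
  obtain ⟨y, hy⟩ := aux_pow_nonempty hX hshift d
  exact ⟨fun v => y (fun j => ((v j : ℤ) - n)), y, hy, fun v => rfl⟩

lemma aux_card_pos [Finite α] (hX : X.Nonempty)
    (hshift : ∀ x ∈ X, ∀ k : ℤ, (fun n => x (n + k)) ∈ X) (d n : ℕ) :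
    1 ≤ Nat.card (axialLang X d n) := by
  have : Nonempty ↥(axialLang X d n) := (aux_lang_nonempty hX hshift d n).to_subtype
  exact Nat.card_pos

end Aux

/-- The limiting entropy `h_∞(X) = lim_d h(X^{⊗d})` equals the topological entropy of
the infinite-dimensional axial power `X^{⊗∞}`, computed along the Følner sequence
`F_n = [-n,n]^n × {0}^∞`. -/
theorem stmt10 {α : Type*} [Fintype α] [TopologicalSpace α] [DiscreteTopology α]
    (X : Set (ℤ → α))
    (hshift : ∀ x ∈ X, ∀ k : ℤ, (fun n => x (n + k)) ∈ X)
    (hclosed : IsClosed X) (h : ℕ → ℝ) (hinf : ℝ)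
    (hlim : ∀ d : ℕ, 1 ≤ d →
      Tendsto (fun n : ℕ => Real.log (Nat.card (axialLang X d n)) / ((2 * n + 1 : ℝ) ^ d))
        atTop (nhds (h d)))
    (hlimd : Tendsto h atTop (nhds hinf)) :
    Tendsto (fun n : ℕ => Real.log (Nat.card (axialLangInf X n)) / ((2 * n + 1 : ℝ) ^ n))
      atTop (nhds hinf) := by
  have : Finite α := Finite.of_fintype α
  by_cases hX : X.Nonempty
  · -- main case
    set a : ℕ → ℕ → ℝ :=
      fun d n => Real.log (Nat.card (axialLang X d n)) / ((2 * n + 1 : ℝ) ^ d) with ha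
    have hC : ∀ d n : ℕ, 1 ≤ Nat.card (axialLang X d n) :=
      fun d n => aux_card_pos hX hshift d n
    have hCcast : ∀ d n : ℕ, (1 : ℝ) ≤ (Nat.card (axialLang X d n) : ℝ) :=
      fun d n => by exact_mod_cast hC d n
    have hlog : ∀ d n : ℕ, 0 ≤ Real.log (Nat.card (axialLang X d n)) :=
      fun d n => Real.log_nonneg (hCcast d n)
    have hbpos : ∀ n : ℕ, (0 : ℝ) < 2 * n + 1 := fun n => by positivity
    -- step down in d
    have step : ∀ d n : ℕ, a (d + 1) n ≤ a d n := by
      intro d n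
      have h1 : Real.log (Nat.card (axialLang X (d + 1) n))
          ≤ (2 * n + 1 : ℝ) * Real.log (Nat.card (axialLang X d n)) := by
        have := aux_card_slice (X := X) d n
        have hle : (Nat.card (axialLang X (d + 1) n) : ℝ)
            ≤ (Nat.card (axialLang X d n) : ℝ) ^ (2 * n + 1) := by
          exact_mod_cast this
        calc Real.log (Nat.card (axialLang X (d + 1) n))
            ≤ Real.log ((Nat.card (axialLang X d n) : ℝ) ^ (2 * n + 1)) :=
              Real.log_le_log (lt_of_lt_of_le zero_lt_one (hCcast _ _)) hle
          _ = (2 * n + 1 : ℕ) * Real.log (Nat.card (axialLang X d n)) := Real.log_pow _ _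
          _ = (2 * n + 1 : ℝ) * Real.log (Nat.card (axialLang X d n)) := by push_cast; ring
      have h2 : a (d + 1) n
          ≤ ((2 * n + 1 : ℝ) * Real.log (Nat.card (axialLang X d n))) / (2 * n + 1 : ℝ) ^ (d + 1) := by
        show Real.log (Nat.card (axialLang X (d + 1) n)) / ((2 * n + 1 : ℝ) ^ (d + 1)) ≤ _
        gcongr
      refine le_trans h2 (le_of_eq ?_)
      show _ = Real.log (Nat.card (axialLang X d n)) / ((2 * n + 1 : ℝ) ^ d)
      rw [pow_succ', mul_div_mul_left _ _ (ne_of_gt (hbpos n))]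
    have mono_d : ∀ d d' : ℕ, d ≤ d' → ∀ n : ℕ, a d' n ≤ a d n := by
      intro d d' hdd n
      induction d' , hdd using Nat.le_induction with
      | base => exact le_refl _
      | succ k hk ih => exact le_trans (step k n) ih
    -- tiling bound
    have tile : ∀ d n t : ℕ, a d (n + t * (2 * n + 1)) ≤ a d n := by
      intro d n t
      set m := n + t * (2 * n + 1) with hm
      have h1 : Real.log (Nat.card (axialLang X d m))
          ≤ ((2 * t + 1 : ℝ) ^ d) * Real.log (Nat.card (axialLang X d n)) := by
        have := aux_card_tile (X := X) d n t
        have hle : (Nat.card (axialLang X d m) : ℝ)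
            ≤ (Nat.card (axialLang X d n) : ℝ) ^ ((2 * t + 1) ^ d) := by
          exact_mod_cast this
        calc Real.log (Nat.card (axialLang X d m))
            ≤ Real.log ((Nat.card (axialLang X d n) : ℝ) ^ ((2 * t + 1) ^ d)) :=
              Real.log_le_log (lt_of_lt_of_le zero_lt_one (hCcast _ _)) hle
          _ = ((2 * t + 1) ^ d : ℕ) * Real.log (Nat.card (axialLang X d n)) := Real.log_pow _ _
          _ = ((2 * t + 1 : ℝ) ^ d) * Real.log (Nat.card (axialLang X d n)) := by push_cast; ring
      have hmd : ((2 * (m : ℝ) + 1)) ^ d = ((2 * n + 1 : ℝ) ^ d) * ((2 * t + 1 : ℝ) ^ d) := by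
        rw [← mul_pow]
        congr 1
        rw [hm]
        push_cast
        ring
      have h2 : a d m ≤ (((2 * t + 1 : ℝ) ^ d) * Real.log (Nat.card (axialLang X d n)))
          / ((2 * m + 1 : ℝ) ^ d) := by
        show Real.log (Nat.card (axialLang X d m)) / ((2 * m + 1 : ℝ) ^ d) ≤ _
        gcongr
      refine le_trans h2 (le_of_eq ?_)
      show _ = Real.log (Nat.card (axialLang X d n)) / ((2 * n + 1 : ℝ) ^ d)
      rw [hmd, mul_comm ((2 * (n:ℝ) + 1) ^ d), mul_div_mul_left]
      positivity
    -- entropy below the finite-box averages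
    have hda : ∀ d : ℕ, 1 ≤ d → ∀ n : ℕ, h d ≤ a d n := by
      intro d hd n
      have htt : Tendsto (fun t : ℕ => n + t * (2 * n + 1)) atTop atTop := by
        apply tendsto_atTop_mono (fun t => ?_) tendsto_id
        show id t ≤ n + t * (2 * n + 1)
        simp only [id]
        have : t ≤ t * (2 * n + 1) := Nat.le_mul_of_pos_right t (by omega)
        omega
      have hsub : Tendsto (fun t : ℕ => a d (n + t * (2 * n + 1))) atTop (nhds (h d)) :=
        (hlim d hd).comp htt
      exact le_of_tendsto hsub (Eventually.of_forall (fun t => tile d n t))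
    -- final assembly
    rw [Metric.tendsto_atTop]
    intro ε hε
    rw [Metric.tendsto_atTop] at hlimd
    obtain ⟨N0, hN0⟩ := hlimd (ε / 2) (by linarith)
    set d := max N0 1 with hd
    have hd1 : 1 ≤ d := le_max_right _ _
    have hhd : dist (h d) hinf < ε / 2 := hN0 d (le_max_left _ _)
    have hlimd' := hlim d hd1
    rw [Metric.tendsto_atTop] at hlimd'
    obtain ⟨N1, hN1⟩ := hlimd' (ε / 2) (by linarith)
    refine ⟨max (max d 1) (max N0 N1), fun n hn => ?_⟩
    have hnd : d ≤ n := le_trans (le_trans (le_max_left d 1) (le_max_left _ _)) hn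
    have hn1 : 1 ≤ n := le_trans hd1 hnd
    have hnN0 : N0 ≤ n := le_trans (le_trans (le_max_left N0 N1) (le_max_right _ _)) hn
    have hnN1 : N1 ≤ n := le_trans (le_trans (le_max_right N0 N1) (le_max_right _ _)) hn
    have hTn : Real.log (Nat.card (axialLangInf X n)) / ((2 * n + 1 : ℝ) ^ n) = a n n := by
      show _ = Real.log (Nat.card (axialLang X n n)) / ((2 * n + 1 : ℝ) ^ n)
      rw [aux_lang_eq (X := X) (by omega : 0 < n)]
    rw [hTn]
    -- upper bound
    have hub : a n n ≤ a d n := mono_d d n hnd n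
    have hadn : dist (a d n) (h d) < ε / 2 := hN1 n hnN1
    -- lower bound
    have hlb : h n ≤ a n n := hda n hn1 n
    have hhn : dist (h n) hinf < ε / 2 := hN0 n hnN0
    rw [Real.dist_eq] at hadn hhn hhd ⊢
    rw [abs_lt] at hadn hhn hhd
    rw [abs_lt]
    constructor <;> linarith [hadn.1, hadn.2, hhn.1, hhn.2, hhd.1, hhd.2, hub, hlb]
  · -- empty case
    rw [Set.not_nonempty_iff_eq_empty] at hX
    have hIempty : ∀ n : ℕ, axialLangInf X n = ∅ := by
      intro n
      rw [Set.eq_empty_iff_forall_notMem]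
      rintro w ⟨x, hx, -⟩
      have := hx 0 0
      rw [hX] at this
      exact this
    have hLempty : ∀ d : ℕ, 1 ≤ d → ∀ n : ℕ, axialLang X d n = ∅ := by
      intro d hd n
      rw [Set.eq_empty_iff_forall_notMem]
      rintro w ⟨x, hx, -⟩
      have := hx 0 ⟨0, hd⟩
      rw [hX] at this
      exact this
    have hzero : ∀ d : ℕ, 1 ≤ d → h d = 0 := by
      intro d hd
      have h1 := hlim d hd
      have h2 : Tendsto (fun n : ℕ =>
          Real.log (Nat.card (axialLang X d n)) / ((2 * n + 1 : ℝ) ^ d)) atTop (nhds 0) := by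
        apply Tendsto.congr (f₁ := fun _ : ℕ => (0 : ℝ))
        · intro n
          rw [hLempty d hd n]
          simp
        · exact tendsto_const_nhds
      exact tendsto_nhds_unique h1 h2
    have hinf0 : hinf = 0 := by
      have h2 : Tendsto h atTop (nhds 0) := by
        apply Tendsto.congr' _ (tendsto_const_nhds (x := (0 : ℝ)))
        filter_upwards [eventually_ge_atTop 1] with d hd
        exact (hzero d hd).symm
      exact tendsto_nhds_unique hlimd h2
    rw [hinf0]
    apply Tendsto.congr (f₁ := fun _ : ℕ => (0 : ℝ))
    · intro n
      rw [hIempty n]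
      simp
    · exact tendsto_const_nhds
end

section
/- For the run-length limited shift RLL(d,∞) (binary sequences in which every maximal run of 0s has length at least d), the independence entropy equals (log 2)/(d+1). -/
open Filter

/-- A finite binary word (`true` = 1) is in the language of `RLL(d,∞)` iff any two 1s are
at distance greater than `d` (equivalently, between any two 1s there are at least `d`
0s). -/
def rllInfLegal (d : ℕ) {n : ℕ} (w : Fin n → Bool) : Prop :=
  ∀ i j : Fin n, (i : ℕ) < (j : ℕ) → (j : ℕ) ≤ (i : ℕ) + d →
    ¬(w i = true ∧ w j = true)

/-- A string of nonempty subsets of `{0,1}` is independently legal for `RLL(d,∞)` if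
every selection yields a word in the language. -/
def rllInfIndepLegal (d : ℕ) {n : ℕ} (A : Fin n → Finset Bool) : Prop :=
  (∀ i, (A i).Nonempty) ∧ ∀ w : Fin n → Bool, (∀ i, w i ∈ A i) → rllInfLegal d w

/-- The maximal independence score of independently legal strings of length `n`. -/
noncomputable def rllInfMaxScore (d : ℕ) (n : ℕ) : ℝ :=
  sSup {r : ℝ | ∃ A : Fin n → Finset Bool, rllInfIndepLegal d A ∧
    r = ∑ i, Real.log ((A i).card)}

/-!
A string of nonempty subsets of `{0,1}` is independently legal exactly when the positions
allowing a `1` are pairwise more than `d` apart, and its score is at most `log 2` times the number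
of those positions, with equality when every set is `{0,1}` or `{0}`. Among `0, …, n-1` at most
`⌈n/(d+1)⌉ = (n+d)/(d+1)` positions are pairwise more than `d` apart (no two share a block
`[k(d+1), (k+1)(d+1))`), and the multiples of `d+1` attain this. Hence the maximal score is exactly
`⌈n/(d+1)⌉ log 2`, and dividing by `n` gives the limit `log 2 / (d+1)`.
-/

open Finset

def IsSeparatedBy {n : ℕ} (d : ℕ) (s : Finset (Fin n)) : Prop :=
  ∀ i ∈ s, ∀ j ∈ s, i < j → (i : ℕ) + d < j

section Separated

variable {n d : ℕ} {s : Finset (Fin n)}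

theorem IsSeparatedBy.card_le (hs : IsSeparatedBy d s) : #s ≤ (n + d) / (d + 1) := by
  have hd : 0 < d + 1 := d.succ_pos
  have hmaps : ∀ i ∈ s, (i : ℕ) / (d + 1) ∈ range ((n + d) / (d + 1)) := fun i _ => by
    rw [mem_range, Nat.div_lt_iff_lt_mul hd]
    have := Nat.lt_div_mul_add (a := n + d) hd
    omega
  have hmono : StrictMonoOn (fun i : Fin n => (i : ℕ) / (d + 1)) s := fun i hi j hj hij => by
    calc (i : ℕ) / (d + 1) < (i + (d + 1)) / (d + 1) := by
          rw [Nat.add_div_right _ hd]; exact Nat.lt_succ_self _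
      _ ≤ j / (d + 1) := Nat.div_le_div_right (by have := hs i hi j hj hij; omega)
  simpa using card_le_card_of_injOn _ hmaps hmono.injOn

theorem exists_isSeparatedBy_card_eq (n d : ℕ) :
    ∃ s : Finset (Fin n), IsSeparatedBy d s ∧ #s = (n + d) / (d + 1) := by
  have hd : 0 < d + 1 := d.succ_pos
  set M := (range ((n + d) / (d + 1))).image (· * (d + 1))
  have hM : ∀ m ∈ M, m < n := by
    simp only [M, mem_image, mem_range]
    rintro _ ⟨t, ht, rfl⟩
    have := (Nat.le_div_iff_mul_le hd).1 (Nat.lt_iff_add_one_le.1 ht)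
    rw [add_one_mul] at this
    omega
  refine ⟨M.attachFin hM, ?_, ?_⟩
  · intro i hi j hj hij
    simp only [mem_attachFin, M, mem_image, mem_range] at hi hj
    obtain ⟨a, -, ha⟩ := hi
    obtain ⟨b, -, hb⟩ := hj
    rw [Fin.lt_def, ← ha, ← hb] at hij
    rw [← ha, ← hb]
    have := Nat.mul_le_mul_right (d + 1) (Nat.lt_iff_add_one_le.1 (Nat.lt_of_mul_lt_mul_right hij))
    rw [add_one_mul] at this
    omega
  · rw [card_attachFin, card_image_of_injective _ (mul_left_injective₀ hd.ne'), card_range]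

end Separated

section Score

variable {d n : ℕ}

theorem rllInfIndepLegal_iff {A : Fin n → Finset Bool} :
    rllInfIndepLegal d A ↔ (∀ i, (A i).Nonempty) ∧ IsSeparatedBy d {i | true ∈ A i} := by
  refine and_congr_right fun hA => ⟨fun hlegal i hi j hj hij => ?_, fun hsep w hw => ?_⟩
  · have hw : ∀ k, decide (true ∈ A k) ∈ A k := fun k => by
      by_cases hk : true ∈ A k
      · simp [hk]
      · obtain ⟨b, hb⟩ := hA k
        cases b <;> simp_all
    by_contra! hle
    exact hlegal _ hw i j hij hle ⟨by simpa using hi, by simpa using hj⟩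
  · rintro i j hij hle ⟨hi, hj⟩
    have := hsep i (by simpa [← hi] using hw i) j (by simpa [← hj] using hw j) hij
    omega

theorem log_card_le_of_nonempty {B : Finset Bool} (hB : B.Nonempty) :
    Real.log #B ≤ if true ∈ B then Real.log 2 else 0 := by
  have hcard : #B ≤ if true ∈ B then 2 else 1 := by
    revert B; decide
  split_ifs at hcard ⊢
  · exact Real.log_le_log (by simpa using hB.card_pos) (by exact_mod_cast hcard)
  · exact Real.log_nonpos (by positivity) (by exact_mod_cast hcard)

theorem sum_log_card_le {A : Fin n → Finset Bool} (hA : ∀ i, (A i).Nonempty) :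
    ∑ i, Real.log #(A i) ≤ #{i | true ∈ A i} * Real.log 2 := by
  calc ∑ i, Real.log #(A i) ≤ ∑ i, if true ∈ A i then Real.log 2 else 0 :=
        sum_le_sum fun i _ => log_card_le_of_nonempty (hA i)
    _ = #{i | true ∈ A i} * Real.log 2 := by rw [← sum_filter, sum_const, nsmul_eq_mul]

theorem rllInfIndepLegal_ite {s : Finset (Fin n)} (hs : IsSeparatedBy d s) :
    rllInfIndepLegal d (fun i => if i ∈ s then univ else {false}) := by
  refine rllInfIndepLegal_iff.2 ⟨fun i => by split_ifs <;> simp, ?_⟩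
  convert hs
  ext i
  rw [mem_filter]
  by_cases hi : i ∈ s <;> simp [hi]

theorem sum_log_card_ite (s : Finset (Fin n)) :
    ∑ i, Real.log #(if i ∈ s then univ else ({false} : Finset Bool)) = #s * Real.log 2 := by
  simp [apply_ite]

theorem rllInfMaxScore_eq (d n : ℕ) : rllInfMaxScore d n = ((n + d) / (d + 1) : ℕ) * Real.log 2 := by
  refine IsGreatest.csSup_eq ⟨?_, ?_⟩
  · obtain ⟨s, hs, hcard⟩ := exists_isSeparatedBy_card_eq n d
    exact ⟨_, rllInfIndepLegal_ite hs, by rw [sum_log_card_ite, hcard]⟩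
  · rintro _ ⟨A, hA, rfl⟩
    obtain ⟨hne, hsep⟩ := rllInfIndepLegal_iff.1 hA
    exact (sum_log_card_le hne).trans (by gcongr; exact hsep.card_le)

end Score

section CeilDiv

variable {K : Type*} [Field K] [LinearOrder K] [IsStrictOrderedRing K]

theorem Nat.cast_div_succ_le_cast_add_div_succ (n d : ℕ) :
    (n : K) / (d + 1) ≤ ((n + d) / (d + 1) : ℕ) := by
  have hd : (0 : K) < d + 1 := by positivity
  rw [div_le_iff₀ hd]
  have hlt := Nat.lt_div_mul_add (a := n + d) (b := d + 1) d.succ_pos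
  have hle : n ≤ (n + d) / (d + 1) * (d + 1) := by omega
  exact_mod_cast hle

theorem Nat.cast_add_div_succ_le (n d : ℕ) :
    (((n + d) / (d + 1) : ℕ) : K) ≤ n / (d + 1) + 1 := by
  have hd : (0 : K) < d + 1 := by positivity
  calc (((n + d) / (d + 1) : ℕ) : K) ≤ ((n + d : ℕ) : K) / ((d + 1 : ℕ) : K) := Nat.cast_div_le
    _ ≤ n / (d + 1) + 1 := by
      push_cast
      rw [div_add_one hd.ne']
      gcongr
      linarith

end CeilDiv

theorem tendsto_div_natCast_of_le_of_le {a : ℕ → ℝ} {c b : ℝ} (hlow : ∀ n, c * n ≤ a n)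
    (hup : ∀ n, a n ≤ c * n + b) : Tendsto (fun n => a n / n) atTop (nhds c) := by
  have hb : Tendsto (fun n : ℕ => c + b / n) atTop (nhds c) := by
    simpa using tendsto_const_nhds.add (tendsto_const_div_atTop_nhds_zero_nat b)
  refine tendsto_of_tendsto_of_tendsto_of_le_of_le' tendsto_const_nhds hb ?_ ?_ <;>
    filter_upwards [eventually_gt_atTop 0] with n hn
  · rw [le_div_iff₀ (by positivity)]
    exact hlow n
  · rw [div_le_iff₀ (by positivity), add_mul, div_mul_cancel₀ _ (by positivity)]
    exact hup n

/-- The independence entropy of the run-length limited shift `RLL(d,∞)` equals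
`(log 2)/(d+1)`. -/
theorem stmt12 (d : ℕ) :
    Tendsto (fun n : ℕ => rllInfMaxScore d n / n) atTop
      (nhds (Real.log 2 / (d + 1))) := by
  have hlog : 0 ≤ Real.log 2 := Real.log_nonneg one_le_two
  refine tendsto_div_natCast_of_le_of_le (b := Real.log 2) (fun n => ?_) (fun n => ?_) <;>
    rw [rllInfMaxScore_eq]
  · calc Real.log 2 / (d + 1) * n = n / (d + 1) * Real.log 2 := by ring
      _ ≤ _ := by gcongr; exact Nat.cast_div_succ_le_cast_add_div_succ n d
  · calc _ ≤ (n / (d + 1) + 1) * Real.log 2 := by gcongr; exact Nat.cast_add_div_succ_le n d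
      _ = _ := by ring
end

section
/- For 0 ≤ d < k < ∞, the independence entropy of the run-length limited shift RLL(d,k) equals ⌊(k−d)/(d+1)⌋·log 2 / (⌊(k+1)/(d+1)⌋·(d+1)). -/
/-
Write `m = (p + 1)(d + 1)` with `p = ⌊(k - d)/(d + 1)⌋`, so that `m ≤ k + 1 ≤ m + d`.

Lower bound: force a 1 at every multiple of `m` and leave the other `p` multiples of `d + 1` in
each period free. Every selection keeps the 1s at distance `≥ d + 1` and every window of length
`k + 1` meets a multiple of `m`, so this string is independently legal with `p` free symbols per
period.

Upper bound: in an independently legal string, two positions allowing a 1 are more than `d`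
apart, and choosing 0 wherever possible shows that every window of length `k + 1` contains a
position forced to be 1. If a block of length `m` contained `p + 1` free positions, their span
would be at least `p(d + 1)`, so a window of length `k + 1` around them would contain a forced 1
strictly between them, giving `p + 2` separated positions in a block of length `m`, which is
impossible. Hence at most `p` free symbols per block, and the score is `p n / m + O(1)` both ways.
-/

open Filter

/-- The run-length limited shift `RLL(d,k)`: binary bi-infinite sequences (`true` = 1)
in which every maximal run of 0s has length in `[d,k]`. Equivalently: every window of
length `k+1` contains a 1, and consecutive 1s are at distance `≥ d+1`. -/
def RLL (d k : ℕ) : Set (ℤ → Bool) :=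
  {x | (∀ i : ℤ, ∃ j : ℤ, i ≤ j ∧ j ≤ i + k ∧ x j = true) ∧
       (∀ i j : ℤ, i < j → j ≤ i + d → ¬(x i = true ∧ x j = true))}

/-- A string of nonempty subsets of `{0,1}` is independently legal for `RLL(d,k)` if
every selection yields a word appearing in a point of `RLL(d,k)`. -/
def rllIndepLegal (d k : ℕ) {n : ℕ} (A : Fin n → Finset Bool) : Prop :=
  (∀ i, (A i).Nonempty) ∧ ∀ w : Fin n → Bool, (∀ i, w i ∈ A i) →
    ∃ x ∈ RLL d k, ∃ m : ℤ, ∀ i : Fin n, x (m + (i : ℤ)) = w i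

/-- The maximal independence score of independently legal strings of length `n`. -/
noncomputable def rllMaxScore (d k : ℕ) (n : ℕ) : ℝ :=
  sSup {r : ℝ | ∃ A : Fin n → Finset Bool, rllIndepLegal d k A ∧
    r = ∑ i, Real.log ((A i).card)}

open Finset Topology

theorem card_mul_le_of_separated {d : ℕ} (S : Finset ℕ) {a b : ℕ}
    (hsep : ∀ i ∈ S, ∀ j ∈ S, i < j → i + d < j) (hS : S ⊆ Icc a b) :
    #S * (d + 1) ≤ b + d + 1 - a := by
  induction S using Finset.induction_on_max generalizing b with
  | empty => simp
  | insert x s hlt ih =>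
    have hx := mem_Icc.mp (hS (mem_insert_self x s))
    have hbelow : ∀ y ∈ s, a ≤ y ∧ y + d < x := fun y hy =>
      ⟨(mem_Icc.mp (hS (mem_insert_of_mem hy))).1,
        hsep y (mem_insert_of_mem hy) x (mem_insert_self x s) (hlt y hy)⟩
    have hs := ih (b := x - (d + 1))
      (fun i hi j hj => hsep i (mem_insert_of_mem hi) j (mem_insert_of_mem hj))
      (fun y hy => mem_Icc.mpr ⟨(hbelow y hy).1, by have := (hbelow y hy).2; omega⟩)
    rw [card_insert_of_notMem (fun h => lt_irrefl x (hlt x h)), add_one_mul]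
    rcases s.eq_empty_or_nonempty with rfl | ⟨y, hy⟩
    · simp only [card_empty, zero_mul, zero_add]
      omega
    · have := hbelow y hy
      omega

theorem card_inter_Ico_le_mul {F : Finset ℕ} {c m p q : ℕ}
    (hblock : ∀ t < q, #(F ∩ Ico (c + t * m) (c + (t + 1) * m)) ≤ p) :
    #(F ∩ Ico c (c + q * m)) ≤ p * q := by
  induction q with
  | zero => simp
  | succ q ih =>
    have hsplit :
        Ico c (c + (q + 1) * m) = Ico c (c + q * m) ∪ Ico (c + q * m) (c + (q + 1) * m) :=
      (Ico_union_Ico_eq_Ico (by omega) (by gcongr; omega)).symm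
    calc #(F ∩ Ico c (c + (q + 1) * m))
        ≤ #(F ∩ Ico c (c + q * m)) + #(F ∩ Ico (c + q * m) (c + (q + 1) * m)) := by
          rw [hsplit, inter_union_distrib_left]
          exact card_union_le _ _
      _ ≤ p * q + p := add_le_add (ih fun t ht => hblock t (by omega)) (hblock q (by omega))
      _ = p * (q + 1) := by ring

theorem card_le_of_card_inter_Ico_le {F : Finset ℕ} {n c m p q : ℕ} (hF : F ⊆ range n)
    (hn : q * m ≤ n - c) (hblock : ∀ t < q, #(F ∩ Ico (c + t * m) (c + (t + 1) * m)) ≤ p) :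
    #F ≤ p * q + (n - q * m) := by
  have hIco : Ico c (c + q * m) ⊆ range n := fun i hi => by
    simp only [mem_Ico, mem_range] at hi ⊢; omega
  have hrest : #(F \ Ico c (c + q * m)) ≤ n - q * m := by
    calc #(F \ Ico c (c + q * m)) ≤ #(range n \ Ico c (c + q * m)) :=
          card_le_card (sdiff_subset_sdiff hF le_rfl)
      _ = n - q * m := by
          rw [card_sdiff_of_subset hIco, card_range, Nat.card_Ico]; omega
  rw [← card_inter_add_card_sdiff F (Ico c (c + q * m))]
  exact add_le_add (card_inter_Ico_le_mul hblock) hrest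

theorem add_lt_of_separated {T : Finset ℕ} {d i j : ℕ}
    (hsep : ∀ i ∈ T, ∀ j ∈ T, i < j → i + d < j) (hi : i ∈ T) (hj : j ∈ T)
    (hij : i ≠ j) (h : i ≤ j + d) : i + d < j := by
  rcases hij.lt_or_gt with hlt | hgt
  · exact hsep i hi j hj hlt
  · have := hsep j hj i hi hgt
    omega

theorem card_inter_Ico_le_of_forced {T F : Finset ℕ} {n d k p a : ℕ} (hFT : F ⊆ T)
    (hsep : ∀ i ∈ T, ∀ j ∈ T, i < j → i + d < j)
    (hforced : ∀ b, b + k < n → ∃ i ∈ T \ F, b ≤ i ∧ i ≤ b + k)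
    (hk : k ≤ p * (d + 1) + 2 * d) (ha : d ≤ a) (han : a + (p + 1) * (d + 1) + d ≤ n) :
    #(F ∩ Ico a (a + (p + 1) * (d + 1))) ≤ p := by
  set S := F ∩ Ico a (a + (p + 1) * (d + 1))
  by_contra! hS
  have hSne : S.Nonempty := card_pos.mp (by omega)
  have hST : S ⊆ T := inter_subset_left.trans hFT
  have hsep' : ∀ T' ⊆ T, ∀ i ∈ T', ∀ j ∈ T', i < j → i + d < j :=
    fun T' hT' i hi j hj => hsep i (hT' hi) j (hT' hj)
  have hSIco : ∀ y ∈ S, a ≤ y ∧ y < a + (p + 1) * (d + 1) := fun y hy =>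
    mem_Ico.mp (mem_inter.mp hy).2
  set y₀ := S.min' hSne
  set y₁ := S.max' hSne
  have hy₀ := S.min'_mem hSne
  have hy₁ := S.max'_mem hSne
  have hSIcc : S ⊆ Icc y₀ y₁ := fun i hi => mem_Icc.mpr ⟨S.min'_le i hi, S.le_max' i hi⟩
  have hm : (p + 1) * (d + 1) = p * (d + 1) + d + 1 := by ring
  have hspan : y₀ + p * (d + 1) ≤ y₁ := by
    have := card_mul_le_of_separated S (hsep' S hST) hSIcc
    have : (p + 1) * (d + 1) ≤ #S * (d + 1) := Nat.mul_le_mul_right _ hS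
    omega
  have := hSIco y₀ hy₀
  have := hSIco y₁ hy₁
  -- the window of length `k + 1` starting `d` before `y₀` ends within `d` after `y₁`
  obtain ⟨i, hiTF, hi₀, hi₁⟩ := hforced (y₀ - d) (by omega)
  obtain ⟨hiT, hiF⟩ := mem_sdiff.mp hiTF
  have hiS : i ∉ S := fun h => hiF (mem_inter.mp h).1
  have hy₀i : y₀ + d < i :=
    add_lt_of_separated hsep (hST hy₀) hiT (ne_of_mem_of_not_mem hy₀ hiS) (by omega)
  have hiy₁ : i + d < y₁ :=
    add_lt_of_separated hsep hiT (hST hy₁) (ne_of_mem_of_not_mem hy₁ hiS).symm (by omega)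
  have hcard := card_mul_le_of_separated (insert i S) (hsep' _ (insert_subset hiT hST))
    (insert_subset (mem_Icc.mpr ⟨by omega, by omega⟩) hSIcc)
  rw [card_insert_of_notMem hiS] at hcard
  have : (p + 2) * (d + 1) ≤ (#S + 1) * (d + 1) := Nat.mul_le_mul_right _ (by omega)
  have : (p + 2) * (d + 1) = p * (d + 1) + 2 * d + 2 := by ring
  omega

theorem card_le_of_forced {T F : Finset ℕ} {n d k p : ℕ} (hF : F ⊆ range n) (hFT : F ⊆ T)
    (hsep : ∀ i ∈ T, ∀ j ∈ T, i < j → i + d < j)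
    (hforced : ∀ b, b + k < n → ∃ i ∈ T \ F, b ≤ i ∧ i ≤ b + k)
    (hk : k ≤ p * (d + 1) + 2 * d) :
    #F ≤ p * (n / ((p + 1) * (d + 1))) + (2 * d + (p + 1) * (d + 1)) := by
  set m := (p + 1) * (d + 1)
  have hm : 0 < m := by positivity
  set q := (n - 2 * d) / m
  have hqm : q * m ≤ n - 2 * d := Nat.div_mul_le_self _ _
  have hrem : n - 2 * d < q * m + m := Nat.lt_div_mul_add hm
  have hF' := card_le_of_card_inter_Ico_le (c := d) (m := m) (q := q) hF (by omega) fun t ht => by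
    have : (t + 1) * m ≤ q * m := Nat.mul_le_mul_right _ ht
    rw [add_one_mul, ← add_assoc]
    rw [add_one_mul] at this
    exact card_inter_Ico_le_of_forced hFT hsep hforced hk (by omega) (by omega)
  have : p * q ≤ p * (n / m) := Nat.mul_le_mul_left _ (Nat.div_le_div_right (Nat.sub_le _ _))
  omega

theorem mem_RLL_of_dvd {d k m : ℕ} {x : ℤ → Bool} (c : ℤ) (hm₀ : 0 < m) (hm : m ≤ k + 1)
    (hone : ∀ j, (m : ℤ) ∣ j + c → x j = true)
    (hsep : ∀ j, x j = true → (d + 1 : ℤ) ∣ j + c) : x ∈ RLL d k := by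
  refine ⟨fun i => ?_, fun i j hij hji ⟨hi, hj⟩ => ?_⟩
  · -- `i + (-(i + c)) % m` is the first `j ≥ i` with `m ∣ j + c`
    have hr := Int.emod_add_mul_ediv (-(i + c)) m
    refine ⟨i + (-(i + c)) % m, ?_, ?_, hone _ ⟨-(-(i + c) / m), by linarith⟩⟩
    · have := Int.emod_nonneg (-(i + c)) (by omega : (m : ℤ) ≠ 0); omega
    · have := Int.emod_lt_of_pos (-(i + c)) (by omega : (0 : ℤ) < m); omega
  · have := Int.le_of_dvd (by omega) (dvd_sub (hsep j hj) (hsep i hi))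
    omega

def onePositions {n : ℕ} (A : Fin n → Finset Bool) : Finset ℕ :=
  (univ.filter fun i => true ∈ A i).map Fin.valEmbedding

def freePositions {n : ℕ} (A : Fin n → Finset Bool) : Finset ℕ :=
  (univ.filter fun i => #(A i) = 2).map Fin.valEmbedding

section Positions

variable {n : ℕ} {A : Fin n → Finset Bool}

theorem mem_onePositions {i : ℕ} :
    i ∈ onePositions A ↔ ∃ h : i < n, true ∈ A ⟨i, h⟩ := by
  simp only [onePositions, Finset.mem_map, mem_filter, mem_univ, true_and, Fin.valEmbedding_apply]
  exact ⟨fun ⟨a, ha, hai⟩ => hai ▸ ⟨a.isLt, ha⟩,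
    fun ⟨h, hi⟩ => ⟨⟨i, h⟩, hi, rfl⟩⟩

theorem mem_freePositions {i : ℕ} :
    i ∈ freePositions A ↔ ∃ h : i < n, #(A ⟨i, h⟩) = 2 := by
  simp only [freePositions, Finset.mem_map, mem_filter, mem_univ, true_and, Fin.valEmbedding_apply]
  exact ⟨fun ⟨a, ha, hai⟩ => hai ▸ ⟨a.isLt, ha⟩,
    fun ⟨h, hi⟩ => ⟨⟨i, h⟩, hi, rfl⟩⟩

theorem freePositions_subset_range : freePositions A ⊆ range n := by
  intro i hi
  obtain ⟨h, -⟩ := mem_freePositions.mp hi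
  exact mem_range.mpr h

theorem freePositions_subset_onePositions : freePositions A ⊆ onePositions A := by
  intro i hi
  obtain ⟨h, hcard⟩ := mem_freePositions.mp hi
  have htrue : ∀ B : Finset Bool, #B = 2 → true ∈ B := by decide
  exact mem_onePositions.mpr ⟨h, htrue _ hcard⟩

theorem sum_log_card_eq (hA : ∀ i, (A i).Nonempty) :
    ∑ i, Real.log #(A i) = #(freePositions A) * Real.log 2 := by
  have hcard : ∀ B : Finset Bool, B.Nonempty → #B = 1 ∨ #B = 2 := by decide
  calc ∑ i, Real.log #(A i) = ∑ i, if #(A i) = 2 then Real.log 2 else 0 :=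
        sum_congr rfl fun i _ => by rcases hcard _ (hA i) with h | h <;> simp [h]
    _ = #(freePositions A) * Real.log 2 := by
        rw [sum_ite, sum_const, sum_const_zero, add_zero, nsmul_eq_mul, freePositions, card_map]

namespace rllIndepLegal

variable {d k : ℕ}

theorem add_lt_of_mem_onePositions (hA : rllIndepLegal d k A) :
    ∀ i ∈ onePositions A, ∀ j ∈ onePositions A, i < j → i + d < j := by
  intro i hi j hj hij
  obtain ⟨hi, hiA⟩ := mem_onePositions.mp hi
  obtain ⟨hj, hjA⟩ := mem_onePositions.mp hj
  by_contra! hji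
  let w : Fin n → Bool := fun t =>
    if (t : ℕ) = i ∨ (t : ℕ) = j then true else (hA.1 t).choose
  have hw : ∀ t, w t ∈ A t := by
    intro t
    by_cases ht : (t : ℕ) = i ∨ (t : ℕ) = j
    · rcases ht with rfl | rfl <;> simpa [w]
    · simpa only [w, if_neg ht] using (hA.1 t).choose_spec
  obtain ⟨x, hx, m₀, hxw⟩ := hA.2 w hw
  refine hx.2 (m₀ + i) (m₀ + j) (by omega) (by omega) ⟨?_, ?_⟩
  · simpa [w] using hxw ⟨i, hi⟩
  · simpa [w] using hxw ⟨j, hj⟩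

theorem exists_mem_onePositions_sdiff (hA : rllIndepLegal d k A) {b : ℕ} (hb : b + k < n) :
    ∃ i ∈ onePositions A \ freePositions A, b ≤ i ∧ i ≤ b + k := by
  have hbool : ∀ B : Finset Bool, B.Nonempty → false ∉ B → true ∈ B ∧ #B ≠ 2 := by
    decide
  -- choose 0 wherever it is allowed: the 1 that every window must contain is then forced
  let w : Fin n → Bool := fun t => decide (false ∉ A t)
  have hw : ∀ t, w t ∈ A t := by
    intro t
    by_cases ht : false ∈ A t
    · simp [w, ht]
    · simpa [w, ht] using (hbool _ (hA.1 t) ht).1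
  obtain ⟨x, hx, m₀, hxw⟩ := hA.2 w hw
  obtain ⟨j, hj₀, hj₁, hxj⟩ := hx.1 (m₀ + b)
  have hi : (j - m₀).toNat < n := by omega
  have hfalse : false ∉ A ⟨(j - m₀).toNat, hi⟩ := by
    have := hxw ⟨(j - m₀).toNat, hi⟩
    rw [show m₀ + ((j - m₀).toNat : ℤ) = j by omega, hxj] at this
    simpa [w] using this.symm
  obtain ⟨htrue, hcard⟩ := hbool _ (hA.1 _) hfalse
  have hfree : (j - m₀).toNat ∉ freePositions A := fun h =>
    hcard (mem_freePositions.mp h).2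
  exact ⟨_, mem_sdiff.mpr ⟨mem_onePositions.mpr ⟨hi, htrue⟩, hfree⟩, by omega, by omega⟩

theorem card_freePositions_le (hA : rllIndepLegal d k A) {p : ℕ}
    (hk : k ≤ p * (d + 1) + 2 * d) :
    #(freePositions A) ≤ p * (n / ((p + 1) * (d + 1))) + (2 * d + (p + 1) * (d + 1)) :=
  card_le_of_forced freePositions_subset_range freePositions_subset_onePositions
    hA.add_lt_of_mem_onePositions (fun _ hb => hA.exists_mem_onePositions_sdiff hb) hk

theorem sum_log_card_le (hA : rllIndepLegal d k A) {p : ℕ}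
    (hk : k ≤ p * (d + 1) + 2 * d) :
    ∑ i, Real.log #(A i) ≤
      ((p * (n / ((p + 1) * (d + 1))) + (2 * d + (p + 1) * (d + 1)) : ℕ) : ℝ) * Real.log 2 := by
  rw [sum_log_card_eq hA.1]
  gcongr
  exact hA.card_freePositions_le hk

end rllIndepLegal

end Positions

/-- Positions are counted from `1` (hence `i + 1`) so that `Nat.card_multiples` counts them. -/
def rllPattern (d p i : ℕ) : Finset Bool :=
  if (p + 1) * (d + 1) ∣ i + 1 then {true} else if d + 1 ∣ i + 1 then univ else {false}

section Pattern

variable {d p : ℕ}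

theorem dvd_of_true_mem_rllPattern {i : ℕ} (h : true ∈ rllPattern d p i) : d + 1 ∣ i + 1 := by
  unfold rllPattern at h
  split_ifs at h with hm hd
  · exact (Dvd.intro_left _ rfl).trans hm
  · exact hd
  · simp at h

theorem card_rllPattern_eq_two {i : ℕ} :
    #(rllPattern d p i) = 2 ↔ d + 1 ∣ i + 1 ∧ ¬ (p + 1) * (d + 1) ∣ i + 1 := by
  unfold rllPattern
  split_ifs with hm hd <;> simp [*]

theorem rllPattern_nonempty (i : ℕ) : (rllPattern d p i).Nonempty := by
  unfold rllPattern
  split_ifs <;> simp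

theorem rllIndepLegal_rllPattern {k n : ℕ} (hm : (p + 1) * (d + 1) ≤ k + 1) :
    rllIndepLegal d k fun i : Fin n => rllPattern d p i := by
  refine ⟨fun i => rllPattern_nonempty i, fun w hw => ?_⟩
  -- outside the window, continue with the 1s at the multiples of `(p + 1)(d + 1)`
  let x : ℤ → Bool := fun j =>
    if h : 0 ≤ j ∧ j < n then w ⟨j.toNat, by omega⟩
    else decide ((((p + 1) * (d + 1) : ℕ) : ℤ) ∣ j + 1)
  have hx : ∀ i : Fin n, x i = w i := fun i => by simp [x]
  have hxn : ∀ j : ℤ, ¬ (0 ≤ j ∧ j < n) →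
      x j = decide ((((p + 1) * (d + 1) : ℕ) : ℤ) ∣ j + 1) := fun j hj => dif_neg hj
  refine ⟨x, mem_RLL_of_dvd 1 (by positivity) hm (fun j hj => ?_) (fun j hj => ?_), 0,
    fun i => ?_⟩
  · by_cases hjn : 0 ≤ j ∧ j < n
    · lift j to ℕ using hjn.1
      have hin : w ⟨j, by omega⟩ ∈ rllPattern d p j := hw _
      rw [rllPattern, if_pos (by exact_mod_cast hj)] at hin
      exact (hx _).trans (mem_singleton.mp hin)
    · simpa [hxn j hjn] using hj
  · have hd : ((d + 1 : ℕ) : ℤ) ∣ ((p + 1) * (d + 1) : ℕ) :=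
      Int.natCast_dvd_natCast.mpr (Dvd.intro_left _ rfl)
    by_cases hjn : 0 ≤ j ∧ j < n
    · lift j to ℕ using hjn.1
      have hin : w ⟨j, by omega⟩ ∈ rllPattern d p j := hw _
      rw [(hx ⟨j, by omega⟩).symm.trans hj] at hin
      exact_mod_cast dvd_of_true_mem_rllPattern hin
    · push_cast at hd
      exact hd.trans (by simpa [hxn j hjn] using hj)
  · rw [zero_add, hx]

theorem card_freePositions_rllPattern {n : ℕ} :
    p * (n / ((p + 1) * (d + 1))) ≤ #(freePositions fun i : Fin n => rllPattern d p i) := by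
  have hfree : freePositions (fun i : Fin n => rllPattern d p i) =
      {i ∈ {i ∈ range n | d + 1 ∣ i + 1} | ¬ (p + 1) * (d + 1) ∣ i + 1} := by
    ext i
    simp only [mem_freePositions, card_rllPattern_eq_two, mem_filter, mem_range]
    tauto
  have hforced : {i ∈ {i ∈ range n | d + 1 ∣ i + 1} | (p + 1) * (d + 1) ∣ i + 1} =
      {i ∈ range n | (p + 1) * (d + 1) ∣ i + 1} := by
    rw [filter_filter]
    exact filter_congr fun i _ => ⟨And.right, fun h => ⟨(Dvd.intro_left _ rfl).trans h, h⟩⟩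
  have hsplit := card_filter_add_card_filter_not (s := {i ∈ range n | d + 1 ∣ i + 1})
    (fun i => (p + 1) * (d + 1) ∣ i + 1)
  rw [hforced, Nat.card_multiples, Nat.card_multiples, ← hfree] at hsplit
  have := Nat.div_mul_le_self (n / (d + 1)) (p + 1)
  rw [Nat.div_div_eq_div_mul, mul_comm (d + 1), mul_add_one] at this
  rw [mul_comm p]
  omega

end Pattern

theorem tendsto_div_of_floor_bounds {f : ℕ → ℝ} {m : ℕ} {a C : ℝ} (hm : 0 < m)
    (ha : 0 ≤ a) (hlo : ∀ n, a * (n / m : ℕ) ≤ f n)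
    (hhi : ∀ n, f n ≤ a * (n / m : ℕ) + C) :
    Tendsto (fun n => f n / n) atTop (𝓝 (a / m)) := by
  have hlin : ∀ C' : ℝ, Tendsto (fun n : ℕ => (a / m * n + C') / n) atTop (𝓝 (a / m)) := by
    intro C'
    have := (tendsto_const_div_atTop_nhds_zero_nat C').const_add (a / m)
    rw [add_zero] at this
    refine this.congr' ?_
    filter_upwards [eventually_ne_atTop 0] with n hn
    field_simp
  refine tendsto_of_tendsto_of_tendsto_of_le_of_le' (hlin (-a)) (hlin C) ?_ ?_ <;>
    filter_upwards [eventually_gt_atTop 0] with n hn <;>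
    gcongr ?_ / _
  · have : (n : ℝ) / m - 1 ≤ (n / m : ℕ) := by
      rw [sub_le_iff_le_add, div_le_iff₀ (by positivity)]
      have := (Nat.lt_div_mul_add (a := n) hm).le
      rw [← add_one_mul] at this
      exact_mod_cast this
    calc a / m * n + -a = a * ((n : ℝ) / m - 1) := by ring
      _ ≤ a * (n / m : ℕ) := by gcongr
      _ ≤ f n := hlo n
  · calc f n ≤ a * (n / m : ℕ) + C := hhi n
      _ ≤ a * ((n : ℝ) / m) + C := by gcongr; exact Nat.cast_div_le
      _ = a / m * n + C := by ring

section MaxScore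

variable {d k p : ℕ}

theorem rllMaxScore_le (hk : k ≤ p * (d + 1) + 2 * d) (n : ℕ) :
    rllMaxScore d k n ≤
      ((p * (n / ((p + 1) * (d + 1))) + (2 * d + (p + 1) * (d + 1)) : ℕ) : ℝ) * Real.log 2 :=
  Real.sSup_le (by rintro _ ⟨A, hA, rfl⟩; exact hA.sum_log_card_le hk) (by positivity)

theorem le_rllMaxScore (hk : k ≤ p * (d + 1) + 2 * d) (hm : (p + 1) * (d + 1) ≤ k + 1)
    (n : ℕ) :
    ((p * (n / ((p + 1) * (d + 1))) : ℕ) : ℝ) * Real.log 2 ≤ rllMaxScore d k n := by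
  have hA := rllIndepLegal_rllPattern (n := n) hm
  calc ((p * (n / ((p + 1) * (d + 1))) : ℕ) : ℝ) * Real.log 2
      ≤ #(freePositions fun i : Fin n => rllPattern d p i) * Real.log 2 := by
        gcongr
        exact card_freePositions_rllPattern
    _ ≤ rllMaxScore d k n :=
        le_csSup ⟨_, by rintro _ ⟨A, hA, rfl⟩; exact hA.sum_log_card_le hk⟩
          ⟨_, hA, (sum_log_card_eq hA.1).symm⟩

end MaxScore

/-- For `0 ≤ d < k < ∞`, the independence entropy of `RLL(d,k)` equals
`⌊(k−d)/(d+1)⌋·log 2 / (⌊(k+1)/(d+1)⌋·(d+1))`. -/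
theorem stmt13 (d k : ℕ) (hdk : d < k) :
    Tendsto (fun n : ℕ => rllMaxScore d k n / n) atTop
      (nhds ((((k - d) / (d + 1) : ℕ) : ℝ) * Real.log 2 /
        ((((k + 1) / (d + 1) : ℕ) : ℝ) * (d + 1)))) := by
  have hq : (k + 1) / (d + 1) = (k - d) / (d + 1) + 1 := by
    rw [show k + 1 = k - d + (d + 1) by omega, Nat.add_div_right _ d.succ_pos]
  have hlt := Nat.lt_div_mul_add (a := k - d) (b := d + 1) (by omega)
  have hle := Nat.div_mul_le_self (k - d) (d + 1)
  set p := (k - d) / (d + 1)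
  have hk : k ≤ p * (d + 1) + 2 * d := by omega
  have hm : (p + 1) * (d + 1) ≤ k + 1 := by rw [add_one_mul]; omega
  have := tendsto_div_of_floor_bounds (f := fun n => rllMaxScore d k n) (m := (p + 1) * (d + 1))
    (a := p * Real.log 2) (C := (2 * d + (p + 1) * (d + 1) : ℕ) * Real.log 2) (by positivity)
    (by positivity)
    (fun n => by have := le_rllMaxScore hk hm n; push_cast at this ⊢; linarith)
    (fun n => by have := rllMaxScore_le hk n; push_cast at this ⊢; linarith)
  rw [hq]
  convert this using 2
  push_cast
  ring
end

section
/- For the beach model B_M with M > 2 (alphabet {−M,...,−1,1,...,M}, adjacent letters must have product ≥ −1), the independence entropy equals log M, and the only words ŵ of nonempty subsets with ŵ^∞ independently legal, score log M, and no repeated letter are the single-letter words {−M,...,−1} and {1,...,M}. -/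
open Filter

/-- The alphabet `{−M,…,−1,1,…,M}` of the beach model, encoded as a sign together with a
magnitude in `{1,…,M}`. -/
def BeachAlph (M : ℕ) := Bool × Fin M

instance (M : ℕ) : Fintype (BeachAlph M) := instFintypeProd _ _
instance (M : ℕ) : DecidableEq (BeachAlph M) := instDecidableEqProd

/-- The integer value of a letter of the beach alphabet. -/
def beachVal {M : ℕ} (a : BeachAlph M) : ℤ :=
  if a.1 then ((a.2 : ℕ) + 1 : ℤ) else -((a.2 : ℕ) + 1 : ℤ)

/-- The beach model: adjacent letters must have product `≥ −1`. -/
def Beach (M : ℕ) : Set (ℤ → BeachAlph M) :=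
  {x | ∀ i : ℤ, -1 ≤ beachVal (x i) * beachVal (x (i + 1))}

/-- A string of nonempty subsets of the alphabet is independently legal if every
selection yields a word appearing in a point of the beach model. -/
def beachIndepLegal (M : ℕ) {n : ℕ} (A : Fin n → Finset (BeachAlph M)) : Prop :=
  (∀ i, (A i).Nonempty) ∧ ∀ w : Fin n → BeachAlph M, (∀ i, w i ∈ A i) →
    ∃ x ∈ Beach M, ∃ m : ℤ, ∀ i : Fin n, x (m + (i : ℤ)) = w i

/-- The maximal independence score of independently legal strings of length `n`. -/
noncomputable def beachMaxScore (M : ℕ) (n : ℕ) : ℝ :=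
  sSup {r : ℝ | ∃ A : Fin n → Finset (BeachAlph M), beachIndepLegal M A ∧
    r = ∑ i, Real.log ((A i).card)}

/-- The set `{1,…,M}` of positive letters. -/
def beachPos (M : ℕ) : Finset (BeachAlph M) := Finset.univ.filter (fun a => a.1 = true)

/-- The set `{−M,…,−1}` of negative letters. -/
def beachNeg (M : ℕ) : Finset (BeachAlph M) := Finset.univ.filter (fun a => a.1 = false)

/-! Call two sets of letters compatible if every letter of the first may precede every letter of
the second. Compatible sets satisfy `|S| |T| ≤ M²`, with equality only if `S = T` is one of the two
sides `{−M,…,−1}`, `{1,…,M}`: a set containing both signs forces its neighbour into `{−1, 1}`,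
which for `M > 2` costs more than the mixed set can gain. Summing the bound over consecutive pairs
gives `n log M ≤ beachMaxScore M n ≤ (n + 1) log M`, the lower bound coming from a constant string
of one side. For a periodic word of score `log M`, the pair sums over a period add up to exactly
twice the score, so every pair is extremal; hence `ŵ₀ = ŵ₁` is a side, and distinct letters force
period `1`. -/

open Finset Real

def beachSide (M : ℕ) (s : Bool) : Finset (BeachAlph M) := univ.filter (fun a => a.1 = s)

def BeachCompat (M : ℕ) (S T : Finset (BeachAlph M)) : Prop :=
  ∀ a ∈ S, ∀ b ∈ T, -1 ≤ beachVal a * beachVal b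

section Letters

variable {M : ℕ}

lemma mem_beachSide {a : BeachAlph M} {s : Bool} : a ∈ beachSide M s ↔ a.1 = s := by
  simp [beachSide]

lemma card_beachSide (s : Bool) : (beachSide M s).card = M := by
  change (univ.filter fun a : Bool × Fin M => a.1 = s).card = M
  rw [card_filter, Fintype.sum_prod_type]
  cases s <;> simp

lemma card_beachAlph_le (S : Finset (BeachAlph M)) : S.card ≤ 2 * M :=
  (card_le_univ S).trans_eq (by simp [BeachAlph])

lemma beachVal_of_sign_true {a : BeachAlph M} (h : a.1 = true) :
    beachVal a = (a.2 : ℕ) + 1 := by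
  simp [beachVal, h]

lemma beachVal_of_sign_false {a : BeachAlph M} (h : a.1 = false) :
    beachVal a = -((a.2 : ℕ) + 1) := by
  simp [beachVal, h]

lemma mem_beach_of_forall_sign_eq {x : ℤ → BeachAlph M} {s : Bool}
    (hx : ∀ i, (x i).1 = s) : x ∈ Beach M := by
  intro i
  cases s
  · rw [beachVal_of_sign_false (hx i), beachVal_of_sign_false (hx (i + 1))]; nlinarith
  · rw [beachVal_of_sign_true (hx i), beachVal_of_sign_true (hx (i + 1))]; nlinarith

/-- Here `(a.2 : ℕ) = 0` encodes the letters `±1`. -/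
lemma mag_eq_zero_of_sign_ne {a b : BeachAlph M} (hab : a.1 ≠ b.1)
    (h : -1 ≤ beachVal a * beachVal b) : (a.2 : ℕ) = 0 ∧ (b.2 : ℕ) = 0 := by
  have hx : (0 : ℤ) ≤ (a.2 : ℕ) := by positivity
  have hy : (0 : ℤ) ≤ (b.2 : ℕ) := by positivity
  suffices ((a.2 : ℕ) : ℤ) = 0 ∧ ((b.2 : ℕ) : ℤ) = 0 by exact_mod_cast this
  cases ha : a.1 <;> cases hb : b.1 <;> simp only [ha, hb, ne_eq, not_true_eq_false] at hab
  · rw [beachVal_of_sign_false ha, beachVal_of_sign_true hb] at h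
    constructor <;> nlinarith
  · rw [beachVal_of_sign_true ha, beachVal_of_sign_false hb] at h
    constructor <;> nlinarith

end Letters

section Compat

variable {M : ℕ} {S T : Finset (BeachAlph M)}

lemma sign_ne_of_mag_eq_zero {a b : BeachAlph M} (ha : (a.2 : ℕ) = 0) (hb : (b.2 : ℕ) = 0)
    (hab : a ≠ b) : a.1 ≠ b.1 :=
  fun h => hab (Prod.ext h (Fin.ext (ha.trans hb.symm)))

lemma card_le_two_of_forall_mag_eq_zero (h : ∀ a ∈ S, (a.2 : ℕ) = 0) : S.card ≤ 2 := by
  have := card_le_card_of_injOn Prod.fst (t := (univ : Finset Bool)) (fun _ _ => mem_univ _)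
    fun a ha b hb hab => by_contra fun hne => sign_ne_of_mag_eq_zero (h a ha) (h b hb) hne hab
  exact this.trans_eq (by simp)

lemma BeachCompat.symm (hC : BeachCompat M S T) : BeachCompat M T S :=
  fun b hb a ha => mul_comm (beachVal a) (beachVal b) ▸ hC a ha b hb

lemma BeachCompat.mag_eq_zero_of_mem_of_sign_ne (hC : BeachCompat M S T) {a c b : BeachAlph M}
    (ha : a ∈ S) (hc : c ∈ S) (hac : a.1 ≠ c.1) (hb : b ∈ T) : (b.2 : ℕ) = 0 := by
  by_cases hba : b.1 = a.1
  · exact (mag_eq_zero_of_sign_ne (hba ▸ hac).symm (hC c hc b hb)).2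
  · exact (mag_eq_zero_of_sign_ne (Ne.symm hba) (hC a ha b hb)).2

lemma BeachCompat.card_mul_card_lt_of_sign_ne (hM : 2 < M) (hC : BeachCompat M S T)
    {a c : BeachAlph M} (ha : a ∈ S) (hc : c ∈ S) (hac : a.1 ≠ c.1) :
    S.card * T.card < M ^ 2 := by
  have hT : ∀ b ∈ T, (b.2 : ℕ) = 0 := fun b hb => hC.mag_eq_zero_of_mem_of_sign_ne ha hc hac hb
  rcases le_or_gt T.card 1 with hT1 | hT1
  · calc S.card * T.card ≤ 2 * M * 1 := Nat.mul_le_mul (card_beachAlph_le S) hT1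
      _ < M ^ 2 := by nlinarith
  · obtain ⟨b, hb, d, hd, hbd⟩ := one_lt_card.mp hT1
    have hbd' := sign_ne_of_mag_eq_zero (hT b hb) (hT d hd) hbd
    have hS : ∀ a ∈ S, (a.2 : ℕ) = 0 := fun _ ha' =>
      hC.symm.mag_eq_zero_of_mem_of_sign_ne hb hd hbd' ha'
    calc S.card * T.card ≤ 2 * 2 := Nat.mul_le_mul
          (card_le_two_of_forall_mag_eq_zero hS) (card_le_two_of_forall_mag_eq_zero hT)
      _ < M ^ 2 := by nlinarith

lemma BeachCompat.sign_eq (hM : 1 < M) {s t : Bool}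
    (hC : BeachCompat M (beachSide M s) (beachSide M t)) : s = t := by
  by_contra hst
  have h := mag_eq_zero_of_sign_ne (a := ((s, ⟨1, hM⟩) : BeachAlph M)) (b := (t, ⟨0, by omega⟩))
    hst (hC _ (mem_beachSide.mpr rfl) _ (mem_beachSide.mpr rfl))
  exact one_ne_zero h.1

lemma BeachCompat.card_mul_card_lt_or_eq_beachSide (hM : 2 < M) (hC : BeachCompat M S T) :
    S.card * T.card < M ^ 2 ∨ ∃ s, S = beachSide M s ∧ T = beachSide M s := by
  rcases S.eq_empty_or_nonempty with rfl | ⟨a, ha⟩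
  · left; simpa using pow_pos (by omega) 2
  rcases T.eq_empty_or_nonempty with rfl | ⟨b, hb⟩
  · left; simpa using pow_pos (by omega) 2
  by_cases hSmix : ∃ c ∈ S, c.1 ≠ a.1
  · obtain ⟨c, hc, hca⟩ := hSmix
    exact Or.inl (hC.card_mul_card_lt_of_sign_ne hM hc ha hca)
  by_cases hTmix : ∃ d ∈ T, d.1 ≠ b.1
  · obtain ⟨d, hd, hdb⟩ := hTmix
    exact Or.inl (mul_comm T.card S.card ▸ hC.symm.card_mul_card_lt_of_sign_ne hM hd hb hdb)
  push Not at hSmix hTmix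
  have hSsub : S ⊆ beachSide M a.1 := fun c hc => mem_beachSide.mpr (hSmix c hc)
  have hTsub : T ⊆ beachSide M b.1 := fun d hd => mem_beachSide.mpr (hTmix d hd)
  have hSle := card_beachSide (M := M) a.1 ▸ card_le_card hSsub
  have hTle := card_beachSide (M := M) b.1 ▸ card_le_card hTsub
  refine or_iff_not_imp_left.mpr fun hge => ?_
  have hSM : S.card = M := by nlinarith
  have hTM : T.card = M := by nlinarith
  have hS := eq_of_subset_of_card_le hSsub (by rw [card_beachSide, hSM])
  have hT := eq_of_subset_of_card_le hTsub (by rw [card_beachSide, hTM])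
  have hab : a.1 = b.1 := (hS ▸ hT ▸ hC).sign_eq (by omega)
  exact ⟨a.1, hS, hab ▸ hT⟩

lemma BeachCompat.log_card_add_log_card_lt_or_eq_beachSide (hM : 2 < M)
    (hC : BeachCompat M S T) (hS : S.Nonempty) (hT : T.Nonempty) :
    log S.card + log T.card < 2 * log M ∨ ∃ s, S = beachSide M s ∧ T = beachSide M s := by
  refine (hC.card_mul_card_lt_or_eq_beachSide hM).imp_left fun h => ?_
  have hS0 : (S.card : ℝ) ≠ 0 := by exact_mod_cast hS.card_pos.ne'
  have hT0 : (T.card : ℝ) ≠ 0 := by exact_mod_cast hT.card_pos.ne'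
  rw [← log_mul hS0 hT0, ← Nat.cast_ofNat, ← log_pow]
  exact log_lt_log (by positivity) (by exact_mod_cast h)

lemma BeachCompat.log_card_add_log_card_le (hM : 2 < M) (hC : BeachCompat M S T)
    (hS : S.Nonempty) (hT : T.Nonempty) : log S.card + log T.card ≤ 2 * log M := by
  rcases hC.log_card_add_log_card_lt_or_eq_beachSide hM hS hT with h | ⟨s, rfl, rfl⟩
  · exact h.le
  · rw [card_beachSide]; linarith

lemma log_card_le_two_mul_log (hM : 2 ≤ M) (S : Finset (BeachAlph M)) :
    log S.card ≤ 2 * log M := by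
  rcases S.eq_empty_or_nonempty with rfl | hS
  · simpa using log_natCast_nonneg M
  · rw [← Nat.cast_ofNat, ← log_pow]
    exact log_le_log (by exact_mod_cast hS.card_pos)
      (by exact_mod_cast (card_beachAlph_le S).trans (by nlinarith))

end Compat

lemma sum_range_add_succ {G : Type*} [AddCommGroup G] (g : ℕ → G) (n : ℕ) :
    ∑ i ∈ range n, (g i + g (i + 1)) = ∑ i ∈ range n, g i + ∑ i ∈ range n, g i + g n - g 0 := by
  rw [sum_add_distrib, ← sub_add_cancel (∑ i ∈ range n, g (i + 1)) (∑ i ∈ range n, g i),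
    ← sum_sub_distrib, sum_range_sub]
  abel

lemma two_mul_sum_range_le {g : ℕ → ℝ} {B : ℝ} (hg : ∀ i, 0 ≤ g i)
    (hB : ∀ i, g i + g (i + 1) ≤ B) (n : ℕ) : 2 * ∑ i ∈ range n, g i ≤ (n + 1) * B := by
  have h := sum_le_sum fun i (_ : i ∈ range n) => hB i
  rw [sum_range_add_succ, sum_const, card_range, nsmul_eq_mul] at h
  linarith [hg n, hg 1, hB 0]

lemma add_succ_eq_of_two_mul_sum_range_eq {g : ℕ → ℝ} {B : ℝ} {n : ℕ} (hper : g n = g 0)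
    (hB : ∀ i, g i + g (i + 1) ≤ B) (hsum : 2 * ∑ i ∈ range n, g i = n * B) {i : ℕ}
    (hi : i < n) : g i + g (i + 1) = B := by
  have h : ∑ i ∈ range n, (g i + g (i + 1)) = ∑ i ∈ range n, B := by
    rw [sum_range_add_succ, hper, sum_const, card_range, nsmul_eq_mul]
    linarith
  exact (sum_eq_sum_iff_of_le fun i _ => hB i).mp h i (mem_range.mpr hi)

lemma exists_forall_mem_apply_eq_apply_eq {ι α : Type*} [DecidableEq ι] {A : ι → Finset α}
    (hA : ∀ i, (A i).Nonempty) {i j : ι} (hij : i ≠ j) {a b : α} (ha : a ∈ A i)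
    (hb : b ∈ A j) : ∃ w : ι → α, (∀ k, w k ∈ A k) ∧ w i = a ∧ w j = b := by
  refine ⟨Function.update (Function.update (fun k => (hA k).choose) i a) j b, fun k => ?_,
    by simp [hij], by simp⟩
  rcases eq_or_ne k j with rfl | hkj
  · simpa
  rcases eq_or_ne k i with rfl | hki
  · simpa [hkj]
  · simpa [hkj, hki] using (hA k).choose_spec

section Strings

variable {M : ℕ}

lemma beachCompat_succ_of_forall_mem_beach {wh : ℤ → Finset (BeachAlph M)}
    (hne : ∀ i, (wh i).Nonempty) (hy : ∀ y : ℤ → BeachAlph M, (∀ i, y i ∈ wh i) → y ∈ Beach M)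
    (i : ℤ) : BeachCompat M (wh i) (wh (i + 1)) := by
  intro a ha b hb
  obtain ⟨y, hyw, rfl, rfl⟩ := exists_forall_mem_apply_eq_apply_eq hne (by omega) ha hb
  exact hy y hyw i

lemma beachIndepLegal.beachCompat_succ {n : ℕ} {A : Fin n → Finset (BeachAlph M)}
    (hA : beachIndepLegal M A) {i : ℕ} (hi : i + 1 < n) :
    BeachCompat M (A ⟨i, by omega⟩) (A ⟨i + 1, hi⟩) := by
  intro a ha b hb
  obtain ⟨w, hw, rfl, rfl⟩ :=
    exists_forall_mem_apply_eq_apply_eq hA.1 (by simp [Fin.ext_iff]) ha hb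
  obtain ⟨x, hx, m, hxw⟩ := hA.2 w hw
  rw [← hxw, ← hxw, Nat.cast_succ, ← add_assoc]
  exact hx _

lemma beachIndepLegal.sum_log_card_le (hM : 2 < M) {n : ℕ} {A : Fin n → Finset (BeachAlph M)}
    (hA : beachIndepLegal M A) : ∑ i, log (A i).card ≤ (n + 1) * log M := by
  set g : ℕ → ℝ := fun k => if h : k < n then log (A ⟨k, h⟩).card else 0
  have hsum : ∑ i, log (A i).card = ∑ k ∈ range n, g k := by
    rw [← Fin.sum_univ_eq_sum_range]
    simp [g]
  have hg : ∀ k, 0 ≤ g k := fun k => by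
    unfold g; split_ifs
    exacts [log_natCast_nonneg _, le_rfl]
  have hB : ∀ k, g k + g (k + 1) ≤ 2 * log M := fun k => by
    by_cases hk : k + 1 < n
    · simpa [g, hk, (by omega : k < n)] using
        (hA.beachCompat_succ hk).log_card_add_log_card_le hM (hA.1 _) (hA.1 _)
    · rw [show g (k + 1) = 0 from dif_neg hk, add_zero]
      unfold g; split_ifs
      exacts [log_card_le_two_mul_log hM.le _, by positivity]
  linarith [two_mul_sum_range_le hg hB n]

lemma beachIndepLegal_const_beachSide (hM : 0 < M) (n : ℕ) (s : Bool) :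
    beachIndepLegal M (fun _ : Fin n => beachSide M s) := by
  obtain ⟨d, hd⟩ : (beachSide M s).Nonempty := ⟨(s, ⟨0, hM⟩), mem_beachSide.mpr rfl⟩
  refine ⟨fun _ => ⟨d, hd⟩, fun w hw => ?_⟩
  set x : ℤ → BeachAlph M := fun j => if h : j.toNat < n then w ⟨j.toNat, h⟩ else d
  have hx : ∀ j, x j ∈ beachSide M s := fun j => by
    by_cases h : j.toNat < n
    · simpa [x, h] using hw ⟨j.toNat, h⟩
    · simpa [x, h] using hd
  exact ⟨x, mem_beach_of_forall_sign_eq fun j => mem_beachSide.mp (hx j), 0, fun i => by simp [x]⟩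

end Strings

section Entropy

variable {M : ℕ}

lemma beachMaxScore_le (hM : 2 < M) (n : ℕ) : beachMaxScore M n ≤ (n + 1) * log M :=
  Real.sSup_le (by rintro _ ⟨A, hA, rfl⟩; exact hA.sum_log_card_le hM)
    (mul_nonneg (by positivity) (log_natCast_nonneg M))

lemma le_beachMaxScore (hM : 2 < M) (n : ℕ) : n * log M ≤ beachMaxScore M n :=
  le_csSup ⟨_, by rintro _ ⟨A, hA, rfl⟩; exact hA.sum_log_card_le hM⟩
    ⟨_, beachIndepLegal_const_beachSide (by omega) n true, by simp [card_beachSide]⟩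

lemma tendsto_beachMaxScore_div (hM : 2 < M) :
    Tendsto (fun n : ℕ => beachMaxScore M n / n) atTop (nhds (log M)) := by
  have hup : Tendsto (fun n : ℕ => log M + log M / n) atTop (nhds (log M)) := by
    simpa using tendsto_const_nhds.add (tendsto_const_div_atTop_nhds_zero_nat (log M))
  refine tendsto_of_tendsto_of_tendsto_of_le_of_le' tendsto_const_nhds hup ?_ ?_
  · filter_upwards [eventually_gt_atTop 0] with n hn
    rw [le_div_iff₀ (by exact_mod_cast hn)]
    linarith [le_beachMaxScore hM n]
  · filter_upwards [eventually_gt_atTop 0] with n hn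
    rw [div_le_iff₀ (by exact_mod_cast hn), add_mul, div_mul_cancel₀ _ (by positivity)]
    linarith [beachMaxScore_le hM n]

end Entropy

/-- For the beach model with `M > 2`: the independence entropy equals `log M`, and the
only words `ŵ` of nonempty subsets with `ŵ^∞` independently legal, score `log M`, and no
repeated letter are the single-letter words `{−M,…,−1}` and `{1,…,M}`. -/
theorem stmt14 (M : ℕ) (hM : 2 < M) :
    (Tendsto (fun n : ℕ => beachMaxScore M n / n) atTop (nhds (Real.log M))) ∧
    (∀ m : ℕ, 0 < m → ∀ wh : ℤ → Finset (BeachAlph M),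
      (∀ i : ℤ, wh (i + m) = wh i) →
      (∀ i : ℤ, (wh i).Nonempty) →
      (∀ y : ℤ → BeachAlph M, (∀ i, y i ∈ wh i) → y ∈ Beach M) →
      ((∑ i ∈ Finset.range m, Real.log ((wh (i : ℤ)).card)) / m = Real.log M) →
      (∀ i j : ℕ, i < m → j < m → wh (i : ℤ) = wh (j : ℤ) → i = j) →
      m = 1 ∧ (wh 0 = beachNeg M ∨ wh 0 = beachPos M)) := by
  refine ⟨tendsto_beachMaxScore_div hM, fun m hm wh hper hne hy hsum hinj => ?_⟩
  have hC := beachCompat_succ_of_forall_mem_beach hne hy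
  set g : ℕ → ℝ := fun i => log (wh i).card
  have hpair : ∀ i, g i + g (i + 1) ≤ 2 * log M := fun i => by
    simpa [g] using (hC i).log_card_add_log_card_le hM (hne _) (hne _)
  have hg0 : g 0 + g 1 = 2 * log M := by
    refine add_succ_eq_of_two_mul_sum_range_eq (by simp [g, ← hper 0]) hpair ?_ hm
    rw [div_eq_iff (by positivity)] at hsum
    linarith
  obtain ⟨s, hs0, hs1⟩ :=
    ((hC 0).log_card_add_log_card_lt_or_eq_beachSide hM (hne _) (hne _)).resolve_left
      (by simpa [g] using hg0.not_lt)
  have hm1 : m = 1 := by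
    by_contra hm1
    exact one_ne_zero (hinj 1 0 (by omega) hm (by simpa using hs1.trans hs0.symm))
  refine ⟨hm1, ?_⟩
  cases s
  exacts [Or.inl hs0, Or.inr hs0]
end

section
/- For the Dyck shift D with M > 2 bracket types, the independence entropy equals log M, and the only (up to shift) simple maximizing cycles in the multi-choice shift D̂ are the constant sequences on {α_1,...,α_M} and on {β_1,...,β_M}. -/
open Filter

/-- The Dyck alphabet with `M` bracket types: `Sum.inl j` is the opening bracket `α_j`
and `Sum.inr j` is the closing bracket `β_j`. -/
abbrev DyckAlph (M : ℕ) := Fin M ⊕ Fin M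

/-- Stack semantics for reading a Dyck word: the stack records the types of the
currently unmatched opening brackets; a closing bracket popping a nonmatching opener is
illegal (`none`), while a closing bracket on an empty stack is an unmatched closer
(matched outside the word), which is legal. -/
def dyckStep {M : ℕ} : Option (List (Fin M)) → DyckAlph M → Option (List (Fin M))
  | none, _ => none
  | some s, Sum.inl a => some (a :: s)
  | some s, Sum.inr b =>
    match s with
    | [] => some []
    | a :: t => if a = b then some t else none

/-- A finite word is legal for the Dyck shift iff every matched pair of brackets inside
it has the same type. -/
def dyckLegal {M : ℕ} (l : List (DyckAlph M)) : Prop :=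
  l.foldl dyckStep (some ([] : List (Fin M))) ≠ none

/-- The Dyck shift: bi-infinite sequences all of whose finite subwords are legal. -/
def Dyck (M : ℕ) : Set (ℤ → DyckAlph M) :=
  {x | ∀ k : ℤ, ∀ n : ℕ, dyckLegal (List.ofFn fun i : Fin n => x (k + (i : ℤ)))}

/-- A string of nonempty subsets of the alphabet is independently legal if every
selection yields a word appearing in a point of the Dyck shift. -/
def dyckIndepLegal (M : ℕ) {n : ℕ} (A : Fin n → Finset (DyckAlph M)) : Prop :=
  (∀ i, (A i).Nonempty) ∧ ∀ w : Fin n → DyckAlph M, (∀ i, w i ∈ A i) →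
    ∃ x ∈ Dyck M, ∃ m : ℤ, ∀ i : Fin n, x (m + (i : ℤ)) = w i

/-- The maximal independence score of independently legal strings of length `n`. -/
noncomputable def dyckMaxScore (M : ℕ) (n : ℕ) : ℝ :=
  sSup {r : ℝ | ∃ A : Fin n → Finset (DyckAlph M), dyckIndepLegal M A ∧
    r = ∑ i, Real.log ((A i).card)}

/-- The set `{α_1,…,α_M}` of opening brackets. -/
def dyckOpen (M : ℕ) : Finset (DyckAlph M) := Finset.univ.image Sum.inl

/-- The set `{β_1,…,β_M}` of closing brackets. -/
def dyckClose (M : ℕ) : Finset (DyckAlph M) := Finset.univ.image Sum.inr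

/-!
Let `o_i` and `c_i` count the openers and closers of the `i`-th set of a multi-choice string.
If the `i`-th set contains an opener and the next one a closer, every selection puts them side
by side, so all these brackets share one type: `o_i ≥ 1` and `c_{i+1} ≥ 1` force
`o_i = c_{i+1} = 1`. With the weights `w(0) = 2M`, `w(1) = M + 1` and `w(c) = M` for `c ≥ 2`,
this gives `|A_i| w(c_i) ≤ M w(c_{i+1})` once `M ≥ 3`. Taking logarithms and telescoping, a
string of length `n` scores at most `n log M + log 2`, while the constant string of openers
scores `n log M`. Along a maximizing cycle the telescoping sum forces equality at every step,
and the equality cases leave only the constant cycles of all openers and of all closers.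
-/

open Finset

namespace DyckShift

variable {M : ℕ}

theorem foldl_dyckStep_ne_none_of_forall_isLeft {l : List (DyckAlph M)}
    (h : ∀ z ∈ l, z.isLeft) (s : List (Fin M)) : l.foldl dyckStep (some s) ≠ none := by
  induction l generalizing s with
  | nil => simp
  | cons z l ih =>
    obtain ⟨a, rfl⟩ := Sum.isLeft_iff.1 (h z List.mem_cons_self)
    exact ih (fun y hy => h y (List.mem_cons_of_mem _ hy)) (a :: s)

theorem mem_dyck_of_forall_isLeft {x : ℤ → DyckAlph M} (h : ∀ k, (x k).isLeft) :
    x ∈ Dyck M := fun k n =>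
  foldl_dyckStep_ne_none_of_forall_isLeft (by simp [List.mem_ofFn, h]) []

theorem eq_of_mem_dyck_of_inl_of_inr {x : ℤ → DyckAlph M} (hx : x ∈ Dyck M) {k : ℤ}
    {a b : Fin M} (ha : x k = .inl a) (hb : x (k + 1) = .inr b) : a = b := by
  by_contra hab
  apply hx k 2
  simp [List.ofFn_succ, ha, hb, dyckStep, hab]

theorem exists_selection_of_ne {ι α : Type*} [DecidableEq ι] {B : ι → Finset α}
    (hB : ∀ k, (B k).Nonempty) {i j : ι} (hij : i ≠ j) {a b : α} (ha : a ∈ B i)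
    (hb : b ∈ B j) : ∃ w : ι → α, (∀ k, w k ∈ B k) ∧ w i = a ∧ w j = b := by
  refine ⟨Function.update (Function.update (fun k => (hB k).choose) i a) j b, fun k => ?_,
    by simp [hij], by simp⟩
  by_cases hkj : k = j
  · subst hkj; simpa using hb
  by_cases hki : k = i
  · subst hki; simpa [hkj] using ha
  simpa [hkj, hki] using (hB k).choose_spec

def BracketCompatible (A B : Finset (DyckAlph M)) : Prop :=
  ∀ a ∈ A.toLeft, ∀ b ∈ B.toRight, a = b

theorem bracketCompatible_of_forall_mem_dyck {wh : ℤ → Finset (DyckAlph M)}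
    (hne : ∀ i, (wh i).Nonempty)
    (hsel : ∀ y : ℤ → DyckAlph M, (∀ i, y i ∈ wh i) → y ∈ Dyck M) (i : ℤ) :
    BracketCompatible (wh i) (wh (i + 1)) := by
  intro a ha b hb
  rw [mem_toLeft] at ha
  rw [mem_toRight] at hb
  obtain ⟨y, hy, hya, hyb⟩ := exists_selection_of_ne hne (by omega : i ≠ i + 1) ha hb
  exact eq_of_mem_dyck_of_inl_of_inr (hsel y hy) hya hyb

theorem bracketCompatible_of_dyckIndepLegal {n : ℕ} {A : Fin n → Finset (DyckAlph M)}
    (hA : dyckIndepLegal M A) {i : ℕ} (hi : i + 1 < n) :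
    BracketCompatible (A ⟨i, by omega⟩) (A ⟨i + 1, hi⟩) := by
  intro a ha b hb
  rw [mem_toLeft] at ha
  rw [mem_toRight] at hb
  obtain ⟨w, hw, hwa, hwb⟩ := exists_selection_of_ne hA.1 (by simp [Fin.ext_iff]) ha hb
  obtain ⟨x, hx, k, hxw⟩ := hA.2 w hw
  refine eq_of_mem_dyck_of_inl_of_inr hx (k := k + i) ((hxw _).trans hwa) ?_
  simpa [add_assoc] using (hxw ⟨i + 1, hi⟩).trans hwb

theorem BracketCompatible.card_eq_one {A B : Finset (DyckAlph M)} (h : BracketCompatible A B)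
    (hA : 1 ≤ #A.toLeft) (hB : 1 ≤ #B.toRight) : #A.toLeft = 1 ∧ #B.toRight = 1 := by
  obtain ⟨a, ha⟩ := card_pos.1 hA
  obtain ⟨b, hb⟩ := card_pos.1 hB
  refine ⟨le_antisymm (card_le_one.2 fun a₁ h₁ a₂ h₂ => ?_) hA,
    le_antisymm (card_le_one.2 fun b₁ h₁ b₂ h₂ => ?_) hB⟩
  · rw [h a₁ h₁ b hb, h a₂ h₂ b hb]
  · rw [← h a ha b₁ h₁, ← h a ha b₂ h₂]

theorem card_toLeft_le (A : Finset (DyckAlph M)) : #A.toLeft ≤ M := by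
  simpa using card_le_univ A.toLeft

theorem card_toRight_le (A : Finset (DyckAlph M)) : #A.toRight ≤ M := by
  simpa using card_le_univ A.toRight

theorem dyckOpen_eq_disjSum : dyckOpen M = univ.disjSum ∅ := by
  rw [disjSum_empty, map_eq_image]
  rfl

theorem dyckClose_eq_disjSum : dyckClose M = (∅ : Finset (Fin M)).disjSum univ := by
  rw [empty_disjSum, map_eq_image]
  rfl

theorem eq_dyckOpen_iff {A : Finset (DyckAlph M)} :
    A = dyckOpen M ↔ #A.toLeft = M ∧ #A.toRight = 0 := by
  rw [dyckOpen_eq_disjSum, eq_disjSum_iff, card_eq_zero, ← card_eq_iff_eq_univ,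
    Fintype.card_fin]

theorem eq_dyckClose_iff {A : Finset (DyckAlph M)} :
    A = dyckClose M ↔ #A.toLeft = 0 ∧ #A.toRight = M := by
  rw [dyckClose_eq_disjSum, eq_disjSum_iff, card_eq_zero, ← card_eq_iff_eq_univ,
    Fintype.card_fin]

def weight (M : ℕ) : ℕ → ℕ
  | 0 => 2 * M
  | 1 => M + 1
  | _ + 2 => M

theorem le_weight (c : ℕ) : M ≤ weight M c := by
  rcases c with _ | _ | c <;> simp only [weight] <;> omega

theorem weight_pos (hM : 0 < M) (c : ℕ) : 0 < weight M c :=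
  hM.trans_le (le_weight c)

theorem weight_le (hM : 0 < M) (c : ℕ) : weight M c ≤ 2 * M := by
  rcases c with _ | _ | c <;> simp only [weight] <;> omega

theorem add_mul_weight_le {o c c' : ℕ} (hM : 3 ≤ M) (ho : o ≤ M) (hc : c ≤ M)
    (hoc' : 1 ≤ o → 1 ≤ c' → o = 1 ∧ c' = 1) :
    (o + c) * weight M c ≤ M * weight M c' := by
  rcases c' with _ | _ | c'
  · rcases c with _ | _ | c <;> simp only [weight] <;> nlinarith
  · have ho1 : o ≤ 1 := by omega
    rcases c with _ | _ | c <;> simp only [weight] <;> nlinarith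
  · obtain rfl : o = 0 := by omega
    rcases c with _ | _ | c <;> simp only [weight] <;> nlinarith

theorem eq_cases_of_add_mul_weight_eq {o c c' : ℕ} (hM : 3 ≤ M) (ho : o ≤ M) (hc : c ≤ M)
    (hoc' : 1 ≤ o → 1 ≤ c' → o = 1 ∧ c' = 1)
    (h : (o + c) * weight M c = M * weight M c') :
    (o = M ∧ c' = 0 ∧ (c = 0 ∨ c = M)) ∨ (o = 1 ∧ c = M ∧ c' = 1) ∨
      (o = 0 ∧ c = M ∧ 2 ≤ c') := by
  have hM0 : 0 < M := by omega
  rcases c' with _ | _ | c'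
  · rcases c with _ | _ | c <;> simp only [weight] at h
    · left; refine ⟨?_, rfl, Or.inl rfl⟩; nlinarith
    · nlinarith
    · have : o + (c + 2) = 2 * M := Nat.eq_of_mul_eq_mul_right hM0 (by linarith)
      omega
  · have ho1 : o ≤ 1 := by omega
    rcases c with _ | _ | c <;> simp only [weight] at h
    · nlinarith
    · nlinarith
    · have : o + (c + 2) = M + 1 := Nat.eq_of_mul_eq_mul_right hM0 (by linarith)
      omega
  · obtain rfl : o = 0 := by omega
    rcases c with _ | _ | c <;> simp only [weight] at h
    · nlinarith
    · nlinarith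
    · have : 0 + (c + 2) = M := Nat.eq_of_mul_eq_mul_right hM0 (by linarith)
      omega

theorem card_mul_weight_le (hM : 3 ≤ M) {A B : Finset (DyckAlph M)}
    (hAB : BracketCompatible A B) : #A * weight M #A.toRight ≤ M * weight M #B.toRight := by
  rw [← card_toLeft_add_card_toRight]
  exact add_mul_weight_le hM (card_toLeft_le A) (card_toRight_le A) hAB.card_eq_one

noncomputable def potential (M : ℕ) (A : Finset (DyckAlph M)) : ℝ :=
  Real.log (weight M #A.toRight)

theorem potential_sub_potential_le (hM : 0 < M) (A B : Finset (DyckAlph M)) :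
    potential M A - potential M B ≤ Real.log 2 := by
  have hM' : (0 : ℝ) < M := by exact_mod_cast hM
  have hA : (weight M #A.toRight : ℝ) ≤ 2 * M := by exact_mod_cast weight_le hM _
  have hA' : (M : ℝ) ≤ weight M #A.toRight := by exact_mod_cast le_weight _
  have hB : (M : ℝ) ≤ weight M #B.toRight := by exact_mod_cast le_weight _
  rw [potential, potential, sub_le_iff_le_add, ← Real.log_mul two_ne_zero (by linarith)]
  exact Real.log_le_log (by linarith) (by linarith)

theorem log_card_add_potential {A : Finset (DyckAlph M)} (hM : 0 < M) (hA : A.Nonempty) :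
    Real.log #A + potential M A = Real.log (#A * weight M #A.toRight : ℕ) := by
  have := weight_pos hM #A.toRight
  rw [potential, Nat.cast_mul, Real.log_mul (by simpa using hA.ne_empty) (by positivity)]

theorem log_add_potential {B : Finset (DyckAlph M)} (hM : 0 < M) :
    Real.log M + potential M B = Real.log (M * weight M #B.toRight : ℕ) := by
  have := weight_pos hM #B.toRight
  rw [potential, Nat.cast_mul, Real.log_mul (by positivity) (by positivity)]

theorem log_card_le (hM : 3 ≤ M) {A B : Finset (DyckAlph M)} (hA : A.Nonempty)
    (hAB : BracketCompatible A B) :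
    Real.log #A ≤ Real.log M + (potential M B - potential M A) := by
  have hM0 : 0 < M := by omega
  have hpos : 0 < #A * weight M #A.toRight := Nat.mul_pos hA.card_pos (weight_pos hM0 _)
  suffices Real.log #A + potential M A ≤ Real.log M + potential M B by linarith
  rw [log_card_add_potential hM0 hA, log_add_potential hM0]
  exact Real.log_le_log (by exact_mod_cast hpos) (by exact_mod_cast card_mul_weight_le hM hAB)

theorem card_mul_weight_eq_of_log_card_eq (hM : 0 < M) {A B : Finset (DyckAlph M)}
    (hA : A.Nonempty) (h : Real.log #A = Real.log M + (potential M B - potential M A)) :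
    #A * weight M #A.toRight = M * weight M #B.toRight := by
  have hpos : 0 < #A * weight M #A.toRight := Nat.mul_pos hA.card_pos (weight_pos hM _)
  have hpos' : 0 < M * weight M #B.toRight := Nat.mul_pos hM (weight_pos hM _)
  have hlog : Real.log #A + potential M A = Real.log M + potential M B := by linarith
  rw [log_card_add_potential hM hA, log_add_potential hM] at hlog
  exact_mod_cast Real.log_injOn_pos (Set.mem_Ioi.2 (by exact_mod_cast hpos))
    (Set.mem_Ioi.2 (by exact_mod_cast hpos')) hlog

theorem sum_range_log_card_le (hM : 3 ≤ M) (B : ℕ → Finset (DyckAlph M)) (n : ℕ)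
    (hne : ∀ i < n, (B i).Nonempty) (hadj : ∀ i < n, BracketCompatible (B i) (B (i + 1))) :
    ∑ i ∈ range n, Real.log #(B i) ≤ n * Real.log M + Real.log 2 :=
  calc ∑ i ∈ range n, Real.log #(B i)
      ≤ ∑ i ∈ range n, (Real.log M + (potential M (B (i + 1)) - potential M (B i))) :=
        sum_le_sum fun i hi => log_card_le hM (hne i (mem_range.1 hi)) (hadj i (mem_range.1 hi))
    _ = n * Real.log M + (potential M (B n) - potential M (B 0)) := by
        rw [sum_add_distrib, sum_range_sub (fun i => potential M (B i))]
        simp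
    _ ≤ n * Real.log M + Real.log 2 := by
        gcongr
        exact potential_sub_potential_le (by omega) _ _

theorem sum_log_card_le_of_dyckIndepLegal (hM : 3 ≤ M) {n : ℕ}
    {A : Fin n → Finset (DyckAlph M)} (hA : dyckIndepLegal M A) :
    ∑ i, Real.log #(A i) ≤ n * Real.log M + Real.log 2 := by
  set B : ℕ → Finset (DyckAlph M) := fun i => if h : i < n then A ⟨i, h⟩ else ∅ with hB
  have hBA : ∀ i (hi : i < n), B i = A ⟨i, hi⟩ := fun i hi => dif_pos hi
  have hsum : ∑ i, Real.log #(A i) = ∑ i ∈ range n, Real.log #(B i) := by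
    rw [← Fin.sum_univ_eq_sum_range (fun i => Real.log #(B i))]
    exact sum_congr rfl fun i _ => by rw [hBA]
  rw [hsum]
  refine sum_range_log_card_le hM B n (fun i hi => hBA i hi ▸ hA.1 _) fun i hi => ?_
  by_cases hi' : i + 1 < n
  · rw [hBA i hi, hBA (i + 1) hi']
    exact bracketCompatible_of_dyckIndepLegal hA hi'
  · intro a _ b hb
    simp [hB, hi'] at hb

theorem dyckIndepLegal_dyckOpen (hM : 0 < M) (n : ℕ) :
    dyckIndepLegal M fun _ : Fin n => dyckOpen M := by
  refine ⟨fun _ => ⟨.inl ⟨0, hM⟩, by simp [dyckOpen]⟩, fun w hw => ?_⟩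
  refine ⟨fun k => if h : k.toNat < n then w ⟨k.toNat, h⟩ else .inl ⟨0, hM⟩,
    mem_dyck_of_forall_isLeft fun k => ?_, 0, fun i => by simp⟩
  split_ifs
  · obtain ⟨a, -, ha⟩ := mem_image.1 (hw _)
    rw [← ha]; rfl
  · rfl

theorem dyckMaxScore_mem_Icc (hM : 3 ≤ M) (n : ℕ) :
    dyckMaxScore M n ∈ Set.Icc (n * Real.log M) (n * Real.log M + Real.log 2) := by
  have hopen : (n : ℝ) * Real.log M ∈ {r : ℝ | ∃ A : Fin n → Finset (DyckAlph M),
      dyckIndepLegal M A ∧ r = ∑ i, Real.log #(A i)} :=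
    ⟨_, dyckIndepLegal_dyckOpen (by omega) n, by
      simp [dyckOpen, card_image_of_injective _ Sum.inl_injective]⟩
  have hbdd : ∀ r ∈ {r : ℝ | ∃ A : Fin n → Finset (DyckAlph M),
      dyckIndepLegal M A ∧ r = ∑ i, Real.log #(A i)}, r ≤ n * Real.log M + Real.log 2 := by
    rintro r ⟨A, hA, rfl⟩
    exact sum_log_card_le_of_dyckIndepLegal hM hA
  exact ⟨le_csSup ⟨_, hbdd⟩ hopen, csSup_le ⟨_, hopen⟩ hbdd⟩

theorem tendsto_dyckMaxScore_div (hM : 3 ≤ M) :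
    Tendsto (fun n : ℕ => dyckMaxScore M n / n) atTop (nhds (Real.log M)) := by
  have hup : Tendsto (fun n : ℕ => Real.log M + Real.log 2 / n) atTop (nhds (Real.log M)) := by
    simpa using (tendsto_const_div_atTop_nhds_zero_nat (Real.log 2)).const_add (Real.log M)
  refine tendsto_of_tendsto_of_tendsto_of_le_of_le' tendsto_const_nhds hup ?_ ?_ <;>
    filter_upwards [eventually_gt_atTop 0] with n hn <;>
    have hn' : (0 : ℝ) < n := by exact_mod_cast hn
  · rw [le_div_iff₀ hn', mul_comm]
    exact (dyckMaxScore_mem_Icc hM n).1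
  · rw [div_le_iff₀ hn', add_mul, div_mul_cancel₀ _ hn'.ne', mul_comm]
    exact (dyckMaxScore_mem_Icc hM n).2

theorem card_mul_weight_eq_of_sum_log_card_eq (hM : 3 ≤ M) {B : ℕ → Finset (DyckAlph M)}
    {m : ℕ} (hne : ∀ i, (B i).Nonempty) (hadj : ∀ i, BracketCompatible (B i) (B (i + 1)))
    (hBm : B m = B 0) (hsum : ∑ i ∈ range m, Real.log #(B i) = m * Real.log M) :
    ∀ i < m, #(B i) * weight M #(B i).toRight = M * weight M #(B (i + 1)).toRight := by
  have hle : ∀ i ∈ range m,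
      Real.log #(B i) ≤ Real.log M + (potential M (B (i + 1)) - potential M (B i)) :=
    fun i _ => log_card_le hM (hne i) (hadj i)
  have htel : ∑ i ∈ range m, (Real.log M + (potential M (B (i + 1)) - potential M (B i))) =
      m * Real.log M := by
    rw [sum_add_distrib, sum_range_sub (fun i => potential M (B i)), hBm]
    simp
  intro i hi
  exact card_mul_weight_eq_of_log_card_eq (by omega) (hne i)
    ((sum_eq_sum_iff_of_le hle).1 (hsum.trans htel.symm) i (mem_range.2 hi))

/-- On a cycle of equality cases, the number of closers is `0` or `M` throughout, and a set
without closers is followed by another one, so the cycle cannot leave either regime. -/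
theorem forall_open_or_forall_close {o c : ℕ → ℕ} {m : ℕ} (hM : 2 ≤ M) (hm : 0 < m)
    (hcm : c m = c 0)
    (h : ∀ i < m, (o i = M ∧ c (i + 1) = 0 ∧ (c i = 0 ∨ c i = M)) ∨
      (o i = 1 ∧ c i = M ∧ c (i + 1) = 1) ∨ (o i = 0 ∧ c i = M ∧ 2 ≤ c (i + 1))) :
    (∀ i < m, o i = M ∧ c i = 0) ∨ (∀ i < m, o i = 0 ∧ c i = M) := by
  have hc : ∀ i ≤ m, c i = 0 ∨ c i = M := by
    intro i hi
    obtain hi | rfl := hi.lt_or_eq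
    · rcases h i hi with h | h | h <;> omega
    · rw [hcm]; rcases h 0 hm with h | h | h <;> omega
  have h' : ∀ i < m,
      (o i = M ∧ c (i + 1) = 0) ∨ (o i = 0 ∧ c i = M ∧ c (i + 1) ≠ 0) := by
    intro i hi
    have := hc (i + 1) hi
    rcases h i hi with h | h | h <;> omega
  have hzero : ∀ i j, i ≤ j → j ≤ m → c i = 0 → c j = 0 := by
    intro i j hij
    induction j, hij using Nat.le_induction with
    | base => exact fun _ h => h
    | succ j _ ih => intro hj hi; have := ih (by omega) hi; rcases h' j hj with h | h <;> omega
  by_cases h0 : c 0 = 0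
  · left
    intro i hi
    have := hzero 0 i (by omega) hi.le h0
    have := hzero 0 (i + 1) (by omega) hi h0
    rcases h' i hi with h | h <;> omega
  · right
    intro i hi
    have : c (i + 1) ≠ 0 := fun hci => h0 (hcm ▸ hzero (i + 1) m hi le_rfl hci)
    rcases h' i hi with h | h <;> omega

theorem eq_one_and_dyckOpen_or_dyckClose_of_maximizing_cycle (hM : 3 ≤ M) {m : ℕ} (hm : 0 < m)
    {wh : ℤ → Finset (DyckAlph M)} (hper : ∀ i : ℤ, wh (i + m) = wh i)
    (hne : ∀ i : ℤ, (wh i).Nonempty)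
    (hsel : ∀ y : ℤ → DyckAlph M, (∀ i, y i ∈ wh i) → y ∈ Dyck M)
    (hsum : (∑ i ∈ range m, Real.log #(wh i)) / m = Real.log M)
    (hdist : ∀ i j : ℕ, i < m → j < m → wh i = wh j → i = j) :
    m = 1 ∧ (wh 0 = dyckOpen M ∨ wh 0 = dyckClose M) := by
  set B : ℕ → Finset (DyckAlph M) := fun i => wh i
  have hadj : ∀ i, BracketCompatible (B i) (B (i + 1)) := fun i => by
    simpa [B] using bracketCompatible_of_forall_mem_dyck hne hsel i
  have hBm : B m = B 0 := by simpa [B] using hper 0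
  have hsum' : ∑ i ∈ range m, Real.log #(B i) = m * Real.log M := by
    rw [div_eq_iff (by positivity)] at hsum
    linarith
  have hstep := card_mul_weight_eq_of_sum_log_card_eq hM (fun i => hne i) hadj hBm hsum'
  obtain ⟨C, hC, hBC⟩ : ∃ C, (C = dyckOpen M ∨ C = dyckClose M) ∧ ∀ i < m, B i = C := by
    rcases forall_open_or_forall_close (o := fun i => #(B i).toLeft)
      (c := fun i => #(B i).toRight) (by omega : 2 ≤ M) hm (by simp only [hBm]) fun i hi => by
        refine eq_cases_of_add_mul_weight_eq hM (card_toLeft_le _) (card_toRight_le _)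
          (hadj i).card_eq_one ?_
        rw [card_toLeft_add_card_toRight]
        exact hstep i hi with h | h
    · exact ⟨_, .inl rfl, fun i hi => eq_dyckOpen_iff.2 (h i hi)⟩
    · exact ⟨_, .inr rfl, fun i hi => eq_dyckClose_iff.2 (h i hi)⟩
  have hm1 : m = 1 := by
    by_contra hm1
    exact one_ne_zero (hdist 0 1 hm (by omega) ((hBC 0 hm).trans (hBC 1 (by omega)).symm)).symm
  have h0 : wh 0 = C := by simpa [B] using hBC 0 hm
  exact ⟨hm1, h0 ▸ hC⟩

end DyckShift

/-- For the Dyck shift with `M > 2` bracket types: the independence entropy equals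
`log M`, and the only (up to shift) simple maximizing cycles in the multi-choice shift
are the constant sequences on `{α_1,…,α_M}` and on `{β_1,…,β_M}`. -/
theorem stmt15 (M : ℕ) (hM : 2 < M) :
    (Tendsto (fun n : ℕ => dyckMaxScore M n / n) atTop (nhds (Real.log M))) ∧
    (∀ m : ℕ, 0 < m → ∀ wh : ℤ → Finset (DyckAlph M),
      (∀ i : ℤ, wh (i + m) = wh i) →
      (∀ i : ℤ, (wh i).Nonempty) →
      (∀ y : ℤ → DyckAlph M, (∀ i, y i ∈ wh i) → y ∈ Dyck M) →
      ((∑ i ∈ Finset.range m, Real.log ((wh (i : ℤ)).card)) / m = Real.log M) →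
      (∀ i j : ℕ, i < m → j < m → wh (i : ℤ) = wh (j : ℤ) → i = j) →
      m = 1 ∧ (wh 0 = dyckOpen M ∨ wh 0 = dyckClose M)) :=
  ⟨DyckShift.tendsto_dyckMaxScore_div hM, fun _ hm _ hper hne hsel hsum hdist =>
    DyckShift.eq_one_and_dyckOpen_or_dyckClose_of_maximizing_cycle hM hm hper hne hsel hsum
      hdist⟩
end
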